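/- arXiv:2406.18217 — 9 statements merged into one kernel-verified Lean document; each statement's English description precedes it below -/
import Mathlib

section
/- Let γ > 0, let W, V : ℝ → ℂ be continuous and γ-periodic, and let λ ∈ ℝ. If ψ : ℝ → ℂ is twice continuously differentiable and satisfies −ψ''(x) + W(x)ψ'(x) + V(x)ψ(x) = λψ(x) for all x ∈ ℝ, then ψ has at least one of the following three forms: (i) there exist k₀ ∈ ℂ and a twice continuously differentiable γ-periodic p : ℝ → ℂ with ψ(x) = e^{i k₀ x} p(x) for all x; (ii) there exist k₀ ∈ ℂ and twice continuously differentiable γ-periodic p₁, p₂ : ℝ → ℂ with p₂ not identically zero and ψ(x) = e^{i k₀ x}(p₁(x) + x·p₂(x)) for all x; (iii) there exist k₁, k₂ ∈ ℂ with (k₁ − k₂)·γ/(2π) ∉ ℤ and twice continuously differentiable γ-periodic p₁, p₂ : ℝ → ℂ with ψ(x) = e^{i k₁ x} p₁(x) + e^{i k₂ x} p₂(x) for all x. -/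
open Complex

namespace SL0

open Set

/-- The solution predicate for the second-order ODE. -/
def IsSol (W V : ℝ → ℂ) (lam : ℝ) (f : ℝ → ℂ) : Prop :=
  ContDiff ℝ 2 f ∧ ∀ x, deriv (deriv f) x = W x * deriv f x + (V x - lam) * f x

lemma diff2 {f : ℝ → ℂ} (h : ContDiff ℝ 2 f) :
    Differentiable ℝ f ∧ Differentiable ℝ (deriv f) := by
  have h2 : ContDiff ℝ ((1:ℕ) + 1) f := by norm_num; exact h
  rw [contDiff_succ_iff_deriv] at h2
  exact ⟨h2.1, h2.2.2.differentiable (by simp)⟩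

lemma periodic_bound {γ : ℝ} (hγ : 0 < γ) {f : ℝ → ℂ} (hf : Continuous f)
    (hper : ∀ x, f (x + γ) = f x) : ∃ C : ℝ, 0 ≤ C ∧ ∀ x, ‖f x‖ ≤ C := by
  obtain ⟨C, hC⟩ := (isCompact_Icc (a := (0:ℝ)) (b := γ)).exists_bound_of_continuousOn
    hf.continuousOn
  refine ⟨max C 0, le_max_right _ _, fun x => ?_⟩
  obtain ⟨y, hy, hxy⟩ := Function.Periodic.exists_mem_Ico₀ (f := f) (c := γ) hper hγ x
  rw [hxy]
  exact le_trans (hC y (Ico_subset_Icc_self hy)) (le_max_left _ _)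

lemma deriv_combo {f g : ℝ → ℂ} (A B : ℂ) (hf : Differentiable ℝ f)
    (hg : Differentiable ℝ g) (t : ℝ) :
    deriv (fun x => A * f x + B * g x) t = A * deriv f t + B * deriv g t := by
  rw [deriv_fun_add ((hf t).const_mul A) ((hg t).const_mul B),
    deriv_const_mul A (hf t), deriv_const_mul B (hg t)]

/-- combinations of solutions are solutions -/
lemma IsSol.combo {W V : ℝ → ℂ} {lam : ℝ} {f g : ℝ → ℂ} (A B : ℂ)
    (hf : IsSol W V lam f) (hg : IsSol W V lam g) :
    IsSol W V lam (fun x => A * f x + B * g x) := by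
  obtain ⟨hf2, hfe⟩ := hf
  obtain ⟨hg2, hge⟩ := hg
  obtain ⟨hfd, hfd'⟩ := diff2 hf2
  obtain ⟨hgd, hgd'⟩ := diff2 hg2
  have hD : deriv (fun x => A * f x + B * g x) = fun x => A * deriv f x + B * deriv g x :=
    funext fun x => deriv_combo A B hfd hgd x
  constructor
  · exact (hf2.const_smul A).add (hg2.const_smul B)
  · intro x
    rw [hD, deriv_combo A B hfd' hgd' x, hfe, hge]
    ring

lemma IsSol.translate {γ : ℝ} {W V : ℝ → ℂ} {lam : ℝ} {f : ℝ → ℂ}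
    (hWper : ∀ x, W (x + γ) = W x) (hVper : ∀ x, V (x + γ) = V x)
    (hf : IsSol W V lam f) : IsSol W V lam (fun x => f (x + γ)) := by
  obtain ⟨hf2, hfe⟩ := hf
  have hD : deriv (fun x => f (x + γ)) = fun x => deriv f (x + γ) := by
    funext x; exact deriv_comp_add_const f γ x
  constructor
  · exact hf2.comp (contDiff_id.add contDiff_const)
  · intro x
    rw [hD, deriv_comp_add_const (deriv f) γ x, hfe, hWper, hVper]

/-- uniqueness for the 2nd order linear ODE with bounded coefficients -/
lemma sol_unique {W V : ℝ → ℂ} {lam : ℝ} {C : ℝ} (hC : 0 ≤ C)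
    (hWb : ∀ x, ‖W x‖ ≤ C) (hVb : ∀ x, ‖V x - lam‖ ≤ C)
    {f g : ℝ → ℂ} (hf : IsSol W V lam f) (hg : IsSol W V lam g)
    (h0 : f 0 = g 0) (h0' : deriv f 0 = deriv g 0) : ∀ x, f x = g x := by
  set v : ℝ → ℂ × ℂ → ℂ × ℂ := fun t p => (p.2, W t * p.2 + (V t - lam) * p.1) with hv
  have hK : (0:ℝ) ≤ 2 * C + 1 := by linarith
  have hlip : ∀ t, LipschitzOnWith (Real.toNNReal (2 * C + 1)) (v t) univ := by
    intro t
    apply LipschitzWith.lipschitzOnWith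
    apply LipschitzWith.of_dist_le_mul
    intro p q
    rw [Real.coe_toNNReal _ hK, Prod.dist_eq]
    have h1 : dist p.1 q.1 ≤ dist p q := by rw [Prod.dist_eq]; exact le_max_left _ _
    have h2 : dist p.2 q.2 ≤ dist p q := by rw [Prod.dist_eq]; exact le_max_right _ _
    have hd : (0:ℝ) ≤ dist p q := dist_nonneg
    apply max_le
    · nlinarith
    · simp only [hv, dist_eq_norm] at h1 h2 ⊢
      rw [← dist_eq_norm p q] at h1 h2 ⊢
      have : W t * p.2 + (V t - lam) * p.1 - (W t * q.2 + (V t - lam) * q.1)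
          = W t * (p.2 - q.2) + (V t - lam) * (p.1 - q.1) := by ring
      rw [this]
      calc ‖W t * (p.2 - q.2) + (V t - lam) * (p.1 - q.1)‖
          ≤ ‖W t * (p.2 - q.2)‖ + ‖(V t - lam) * (p.1 - q.1)‖ := norm_add_le _ _
        _ = ‖W t‖ * ‖p.2 - q.2‖ + ‖V t - lam‖ * ‖p.1 - q.1‖ := by rw [norm_mul, norm_mul]
        _ ≤ C * dist p q + C * dist p q := by
            gcongr <;> first | exact hWb t | exact hVb t | exact h1 | exact h2
        _ ≤ (2 * C + 1) * dist p q := by nlinarith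
  have key : ∀ (h : ℝ → ℂ), IsSol W V lam h → ∀ t,
      HasDerivAt (fun s => (h s, deriv h s)) (v t ((h t, deriv h t))) t := by
    intro h hh t
    obtain ⟨hd, hd'⟩ := diff2 hh.1
    have H1 : HasDerivAt h (deriv h t) t := (hd t).hasDerivAt
    have H2 : HasDerivAt (deriv h) (deriv (deriv h) t) t := (hd' t).hasDerivAt
    have := H1.prodMk H2
    rw [hh.2 t] at this
    exact this
  intro x
  obtain ⟨R, hR0, hRx⟩ : ∃ R : ℝ, 0 < R ∧ |x| < R := ⟨|x| + 1, by positivity, by linarith⟩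
  have := ODE_solution_unique_of_mem_Ioo (v := v) (s := fun _ => univ)
    (K := Real.toNNReal (2 * C + 1)) (fun t _ => hlip t)
    (t₀ := 0) (a := -R) (b := R) (f := fun s => (f s, deriv f s))
    (g := fun s => (g s, deriv g s))
    (by constructor <;> simp [hR0])
    (fun t _ => ⟨key f hf t, trivial⟩)
    (fun t _ => ⟨key g hg t, trivial⟩)
    (by show (f 0, deriv f 0) = (g 0, deriv g 0); rw [h0, h0'])
  have hx : x ∈ Ioo (-R) R := by constructor <;> [linarith [neg_abs_le x]; linarith [le_abs_self x]]
  exact congrArg Prod.fst (this hx)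

lemma exp_k {μ : ℂ} (hμ : μ ≠ 0) {γ : ℝ} (hγ : γ ≠ 0) :
    ∃ k : ℂ, Complex.exp (I * k * γ) = μ := by
  refine ⟨(-I) * Complex.log μ / γ, ?_⟩
  have hγ' : (γ : ℂ) ≠ 0 := Complex.ofReal_ne_zero.mpr hγ
  have : I * ((-I) * Complex.log μ / γ) * γ = Complex.log μ := by
    rw [show I * ((-I) * Complex.log μ / γ) * γ
      = -(I * I) * Complex.log μ * ((γ:ℂ) / γ) by ring, Complex.I_mul_I, div_self hγ']
    ring
  rw [this, Complex.exp_log hμ]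

lemma exp_split (k : ℂ) (x γ : ℝ) :
    Complex.exp (I * k * ((x + γ : ℝ) : ℂ))
      = Complex.exp (I * k * x) * Complex.exp (I * k * γ) := by
  rw [← Complex.exp_add]; push_cast; ring_nf

lemma exp_neg_k (k : ℂ) (t : ℂ) :
    Complex.exp (I * (-k) * t) = (Complex.exp (I * k * t))⁻¹ := by
  rw [← Complex.exp_neg]; congr 1; ring

lemma contDiff_exp_mul (k : ℂ) : ContDiff ℝ 2 (fun x : ℝ => Complex.exp (I * k * x)) := by
  apply (Complex.contDiff_exp (𝕜 := ℝ)).comp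
  exact contDiff_const.mul Complex.ofRealCLM.contDiff

end SL0

/-- classification of classical solutions of the 1-D Sturm–Liouville
problem with `γ`-periodic continuous complex coefficients. -/
theorem sturm_liouville_solution_classification
    (γ : ℝ) (hγ : 0 < γ) (W V : ℝ → ℂ)
    (hWcont : Continuous W) (hVcont : Continuous V)
    (hWper : ∀ x : ℝ, W (x + γ) = W x) (hVper : ∀ x : ℝ, V (x + γ) = V x)
    (lam : ℝ) (ψ : ℝ → ℂ) (hψ : ContDiff ℝ 2 ψ)
    (heq : ∀ x : ℝ, -(deriv (deriv ψ) x) + W x * deriv ψ x + V x * ψ x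
      = (lam : ℂ) * ψ x) :
    (∃ (k₀ : ℂ) (p : ℝ → ℂ), ContDiff ℝ 2 p ∧ (∀ x : ℝ, p (x + γ) = p x) ∧
      ∀ x : ℝ, ψ x = Complex.exp (Complex.I * k₀ * x) * p x) ∨
    (∃ (k₀ : ℂ) (p₁ p₂ : ℝ → ℂ), ContDiff ℝ 2 p₁ ∧ ContDiff ℝ 2 p₂ ∧
      (∀ x : ℝ, p₁ (x + γ) = p₁ x) ∧ (∀ x : ℝ, p₂ (x + γ) = p₂ x) ∧
      (∃ x : ℝ, p₂ x ≠ 0) ∧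
      ∀ x : ℝ, ψ x = Complex.exp (Complex.I * k₀ * x) * (p₁ x + x * p₂ x)) ∨
    (∃ (k₁ k₂ : ℂ) (p₁ p₂ : ℝ → ℂ),
      (¬ ∃ m : ℤ, (k₁ - k₂) * (γ : ℂ) / (2 * (Real.pi : ℂ)) = (m : ℂ)) ∧
      ContDiff ℝ 2 p₁ ∧ ContDiff ℝ 2 p₂ ∧
      (∀ x : ℝ, p₁ (x + γ) = p₁ x) ∧ (∀ x : ℝ, p₂ (x + γ) = p₂ x) ∧
      ∀ x : ℝ, ψ x = Complex.exp (Complex.I * k₁ * x) * p₁ x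
        + Complex.exp (Complex.I * k₂ * x) * p₂ x) := by
  classical
  -- basic setup
  have hγ0 : γ ≠ 0 := ne_of_gt hγ
  have hγ' : (γ : ℂ) ≠ 0 := Complex.ofReal_ne_zero.mpr hγ0
  obtain ⟨C₁, hC₁0, hC₁⟩ := SL0.periodic_bound hγ hWcont hWper
  obtain ⟨C₂, hC₂0, hC₂⟩ := SL0.periodic_bound hγ (hVcont.sub continuous_const)
    (fun x => by simp [hVper x])
  set C := max C₁ C₂ with hCdef
  have hC0 : 0 ≤ C := le_trans hC₁0 (le_max_left _ _)
  have hWb : ∀ x, ‖W x‖ ≤ C := fun x => le_trans (hC₁ x) (le_max_left _ _)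
  have hVb : ∀ x, ‖V x - lam‖ ≤ C := fun x => le_trans (hC₂ x) (le_max_right _ _)
  have uniq : ∀ f g : ℝ → ℂ, SL0.IsSol W V lam f → SL0.IsSol W V lam g →
      f 0 = g 0 → deriv f 0 = deriv g 0 → ∀ x, f x = g x :=
    fun f g hf hg h0 h0' => SL0.sol_unique hC0 hWb hVb hf hg h0 h0'
  have hψsol : SL0.IsSol W V lam ψ := by
    refine ⟨hψ, fun x => ?_⟩
    linear_combination - heq x
  have hψd : Differentiable ℝ ψ := (SL0.diff2 hψ).1
  set φ : ℝ → ℂ := fun x => ψ (x + γ) with hφdef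
  have hφsol : SL0.IsSol W V lam φ := SL0.IsSol.translate hWper hVper hψsol
  have hφ2 : ContDiff ℝ 2 φ := hφsol.1
  have hφd : Differentiable ℝ φ := (SL0.diff2 hφ2).1
  -- Case 1: trivial solution
  by_cases h0 : ψ 0 = 0 ∧ deriv ψ 0 = 0
  · left
    have hzero : SL0.IsSol W V lam (fun x => (0:ℂ) * ψ x + 0 * ψ x) :=
      SL0.IsSol.combo 0 0 hψsol hψsol
    have := uniq ψ (fun x => (0:ℂ) * ψ x + 0 * ψ x) hψsol hzero
      (by simp [h0.1]) (by rw [SL0.deriv_combo 0 0 hψd hψd]; simp [h0.2])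
    refine ⟨0, fun _ => 0, contDiff_const, fun _ => rfl, fun x => ?_⟩
    rw [this x]; ring
  -- dependence dichotomy for (ψ, φ)
  by_cases hdep : ∃ μ : ℂ, φ 0 = μ * ψ 0 ∧ deriv φ 0 = μ * deriv ψ 0
  · -- Bloch case (i)
    left
    obtain ⟨μ, hμ1, hμ2⟩ := hdep
    have hφψ : ∀ x, φ x = μ * ψ x := by
      have := uniq φ (fun x => μ * ψ x + 0 * ψ x) hφsol
        (SL0.IsSol.combo μ 0 hψsol hψsol)
        (by rw [hμ1]; ring)
        (by rw [SL0.deriv_combo μ 0 hψd hψd, hμ2]; ring)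
      intro x; rw [this x]; ring
    have hμ0 : μ ≠ 0 := by
      intro h
      have hψ0 : ∀ x, ψ x = 0 := by
        intro x
        have := hφψ (x - γ)
        rw [h, zero_mul] at this
        simpa [hφdef] using this
      apply h0
      have : ψ = fun _ => (0:ℂ) := funext hψ0
      constructor
      · exact hψ0 0
      · rw [this]; simp
    obtain ⟨k, hk⟩ := SL0.exp_k hμ0 hγ0
    refine ⟨k, fun x => Complex.exp (I * (-k) * x) * ψ x, ?_, ?_, ?_⟩
    · exact (SL0.contDiff_exp_mul (-k)).mul hψ
    · intro x
      show Complex.exp (I * (-k) * ((x + γ : ℝ) : ℂ)) * ψ (x + γ)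
        = Complex.exp (I * (-k) * (x:ℂ)) * ψ x
      rw [SL0.exp_split (-k) x γ, SL0.exp_neg_k k (γ:ℂ), hk]
      have : ψ (x + γ) = φ x := rfl
      rw [this, hφψ x]
      field_simp
    · intro x
      show ψ x = Complex.exp (I * k * x) * (Complex.exp (I * (-k) * (x:ℂ)) * ψ x)
      rw [SL0.exp_neg_k k (x:ℂ), ← mul_assoc]
      rw [mul_inv_cancel₀ (Complex.exp_ne_zero _), one_mul]
  · -- independent case: get the recurrence
    push_neg at h0
    push_neg at hdep
    set χ : ℝ → ℂ := fun x => φ (x + γ) with hχdef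
    have hχsol : SL0.IsSol W V lam χ := SL0.IsSol.translate hWper hVper hφsol
    have hΔ : φ 0 * deriv ψ 0 - deriv φ 0 * ψ 0 ≠ 0 := by
      intro hD
      by_cases h : ψ 0 = 0
      · have h2 : deriv ψ 0 ≠ 0 := h0 h
        have hφ00 : φ 0 = 0 := by
          rw [h, mul_zero, sub_zero] at hD
          exact (mul_eq_zero.mp hD).resolve_right h2
        refine hdep (deriv φ 0 / deriv ψ 0) ?_ (by field_simp)
        rw [h, mul_zero, hφ00]
      · refine hdep (φ 0 / ψ 0) (by field_simp) ?_
        rw [div_mul_eq_mul_div, eq_div_iff h]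
        linear_combination -hD
    obtain ⟨a, b, hcr1, hcr2⟩ : ∃ a b : ℂ, a * φ 0 + b * ψ 0 = χ 0
        ∧ a * deriv φ 0 + b * deriv ψ 0 = deriv χ 0 := by
      refine ⟨(χ 0 * deriv ψ 0 - deriv χ 0 * ψ 0) / (φ 0 * deriv ψ 0 - deriv φ 0 * ψ 0),
        (φ 0 * deriv χ 0 - deriv φ 0 * χ 0) / (φ 0 * deriv ψ 0 - deriv φ 0 * ψ 0), ?_, ?_⟩ <;>
      · rw [div_mul_eq_mul_div, div_mul_eq_mul_div, ← add_div, div_eq_iff hΔ]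
        ring
    have hrec : ∀ x, φ (x + γ) = a * φ x + b * ψ x := by
      have := uniq χ (fun x => a * φ x + b * ψ x) hχsol
        (SL0.IsSol.combo a b hφsol hψsol) hcr1.symm
        (by rw [SL0.deriv_combo a b hφd hψd, hcr2])
      exact this
    have hψγ : ∀ x : ℝ, ψ (x + γ) = φ x := fun x => rfl
    have hb : b ≠ 0 := by
      intro hb0
      have hφa : ∀ y, φ y = a * ψ y := by
        intro y
        have h3 := hrec (y - γ)
        rw [hb0, zero_mul, add_zero, sub_add_cancel] at h3
        have h4 : φ (y - γ) = ψ y := by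
          show ψ (y - γ + γ) = ψ y
          rw [sub_add_cancel]
        rw [h4] at h3
        exact h3
      refine hdep a (hφa 0) ?_
      have h5 : φ = fun y => a * ψ y := funext hφa
      rw [h5, deriv_const_mul a (hψd 0)]
    obtain ⟨d, hd⟩ : ∃ d : ℂ, d ^ 2 = a ^ 2 + 4 * b :=
      ⟨(a ^ 2 + 4 * b) ^ ((2:ℕ):ℂ)⁻¹, Complex.cpow_nat_inv_pow (a ^ 2 + 4 * b) two_ne_zero⟩
    by_cases hd0 : d = 0
    · -- case (ii) : double root
      right; left
      have hdd : a ^ 2 + 4 * b = 0 := by rw [← hd, hd0]; ring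
      obtain ⟨μ, hμ0, ha, hbμ⟩ : ∃ μ : ℂ, μ ≠ 0 ∧ a = 2 * μ ∧ b = -(μ * μ) := by
        refine ⟨a / 2, ?_, by ring, by linear_combination ((1:ℂ)/4) * hdd⟩
        intro h
        have ha0 : a = 0 := by
          field_simp at h
          simpa using h
        apply hb
        rw [ha0] at hdd
        linear_combination ((1:ℂ)/4) * hdd
      set χ₀ : ℝ → ℂ := fun x => φ x - μ * ψ x with hχ₀def
      have hχ₀cd : ContDiff ℝ 2 χ₀ := hφ2.sub (contDiff_const.mul hψ)
      have hTχ₀ : ∀ x, χ₀ (x + γ) = μ * χ₀ x := by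
        intro x
        show φ (x + γ) - μ * ψ (x + γ) = μ * (φ x - μ * ψ x)
        rw [hrec x, hψγ x]
        linear_combination (φ x) * ha + (ψ x) * hbμ
      have hχne : ∃ x₀, χ₀ x₀ ≠ 0 := by
        by_contra h
        push_neg at h
        have hφμ : ∀ x, φ x = μ * ψ x := by
          intro x
          have := h x
          rw [hχ₀def] at this
          simp only [sub_eq_zero] at this
          exact this
        refine hdep μ (hφμ 0) ?_
        have h5 : φ = fun y => μ * ψ y := funext hφμ
        rw [h5, deriv_const_mul μ (hψd 0)]
      obtain ⟨k, hk⟩ := SL0.exp_k hμ0 hγ0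
      set p₂ : ℝ → ℂ := fun x => Complex.exp (I * (-k) * x) * χ₀ x / (μ * γ) with hp₂def
      set p₁ : ℝ → ℂ := fun x => Complex.exp (I * (-k) * x) * ψ x - x * p₂ x with hp₁def
      have hp₂cd : ContDiff ℝ 2 p₂ :=
        (((SL0.contDiff_exp_mul (-k)).mul hχ₀cd).div_const (μ * γ))
      have hp₂per : ∀ x, p₂ (x + γ) = p₂ x := by
        intro x
        show Complex.exp (I * (-k) * ((x + γ : ℝ) : ℂ)) * χ₀ (x + γ) / (μ * γ)
          = Complex.exp (I * (-k) * x) * χ₀ x / (μ * γ)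
        rw [SL0.exp_split (-k) x γ, SL0.exp_neg_k k (γ:ℂ), hk, hTχ₀ x]
        field_simp
      refine ⟨k, p₁, p₂, ?_, hp₂cd, ?_, hp₂per, ?_, ?_⟩
      · exact ((SL0.contDiff_exp_mul (-k)).mul hψ).sub
          (Complex.ofRealCLM.contDiff.mul hp₂cd)
      · intro x
        show Complex.exp (I * (-k) * ((x + γ : ℝ) : ℂ)) * ψ (x + γ)
            - ((x + γ : ℝ) : ℂ) * p₂ (x + γ)
          = Complex.exp (I * (-k) * x) * ψ x - x * p₂ x
        rw [hp₂per x, SL0.exp_split (-k) x γ, SL0.exp_neg_k k (γ:ℂ), hk, hψγ x]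
        have hφx : φ x = μ * ψ x + χ₀ x := by rw [hχ₀def]; ring
        rw [hφx, hp₂def]
        push_cast
        field_simp
        ring
      · obtain ⟨x₀, hx₀⟩ := hχne
        refine ⟨x₀, ?_⟩
        show Complex.exp (I * (-k) * x₀) * χ₀ x₀ / (μ * γ) ≠ 0
        exact div_ne_zero (mul_ne_zero (Complex.exp_ne_zero _) hx₀) (mul_ne_zero hμ0 hγ')
      · intro x
        show ψ x = Complex.exp (I * k * x)
          * ((Complex.exp (I * (-k) * x) * ψ x - x * p₂ x) + x * p₂ x)
        rw [SL0.exp_neg_k k (x:ℂ)]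
        field_simp
        ring
    · -- case (iii) : distinct roots
      right; right
      obtain ⟨μ₁, μ₂, hsum, hprod, hdiff⟩ : ∃ μ₁ μ₂ : ℂ, μ₁ + μ₂ = a ∧ μ₁ * μ₂ = -b
          ∧ μ₁ - μ₂ = d :=
        ⟨(a + d) / 2, (a - d) / 2, by ring, by linear_combination (-(1:ℂ)/4) * hd, by ring⟩
      have hne : μ₁ ≠ μ₂ := by
        intro h
        apply hd0
        rw [← hdiff, h, sub_self]
      have hμ₁0 : μ₁ ≠ 0 := by
        intro h
        apply hb
        rw [h, zero_mul] at hprod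
        linear_combination hprod
      have hμ₂0 : μ₂ ≠ 0 := by
        intro h
        apply hb
        rw [h, mul_zero] at hprod
        linear_combination hprod
      set ψ₁ : ℝ → ℂ := fun x => (φ x - μ₂ * ψ x) / d with hψ₁def
      set ψ₂ : ℝ → ℂ := fun x => (μ₁ * ψ x - φ x) / d with hψ₂def
      have hψ₁cd : ContDiff ℝ 2 ψ₁ := (hφ2.sub (contDiff_const.mul hψ)).div_const d
      have hψ₂cd : ContDiff ℝ 2 ψ₂ := ((contDiff_const.mul hψ).sub hφ2).div_const d
      have heig₁ : ∀ x, ψ₁ (x + γ) = μ₁ * ψ₁ x := by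
        intro x
        show (φ (x + γ) - μ₂ * ψ (x + γ)) / d = μ₁ * ((φ x - μ₂ * ψ x) / d)
        rw [hrec x, hψγ x, mul_div_assoc']
        congr 1
        linear_combination (-(φ x)) * hsum + (ψ x) * hprod
      have heig₂ : ∀ x, ψ₂ (x + γ) = μ₂ * ψ₂ x := by
        intro x
        show (μ₁ * ψ (x + γ) - φ (x + γ)) / d = μ₂ * ((μ₁ * ψ x - φ x) / d)
        rw [hrec x, hψγ x, mul_div_assoc']
        congr 1
        linear_combination (φ x) * hsum + (-(ψ x)) * hprod
      obtain ⟨k₁, hk₁⟩ := SL0.exp_k hμ₁0 hγ0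
      obtain ⟨k₂, hk₂⟩ := SL0.exp_k hμ₂0 hγ0
      refine ⟨k₁, k₂, fun x => Complex.exp (I * (-k₁) * x) * ψ₁ x,
        fun x => Complex.exp (I * (-k₂) * x) * ψ₂ x, ?_, ?_, ?_, ?_, ?_, ?_⟩
      · rintro ⟨m, hm⟩
        apply hne
        have hπ : ((Real.pi : ℝ) : ℂ) ≠ 0 := Complex.ofReal_ne_zero.mpr Real.pi_ne_zero
        have hm2 : (k₁ - k₂) * (γ : ℂ) = m * (2 * (Real.pi : ℂ)) := by
          field_simp at hm
          linear_combination hm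
        have harg : I * k₁ * (γ:ℂ) = I * k₂ * (γ:ℂ) + m * (2 * (Real.pi:ℂ) * I) := by
          linear_combination I * hm2
        rw [← hk₁, ← hk₂, harg, Complex.exp_add, Complex.exp_int_mul_two_pi_mul_I, mul_one]
      · exact (SL0.contDiff_exp_mul (-k₁)).mul hψ₁cd
      · exact (SL0.contDiff_exp_mul (-k₂)).mul hψ₂cd
      · intro x
        show Complex.exp (I * (-k₁) * ((x + γ : ℝ) : ℂ)) * ψ₁ (x + γ)
          = Complex.exp (I * (-k₁) * x) * ψ₁ x
        rw [SL0.exp_split (-k₁) x γ, SL0.exp_neg_k k₁ (γ:ℂ), hk₁, heig₁ x]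
        field_simp
      · intro x
        show Complex.exp (I * (-k₂) * ((x + γ : ℝ) : ℂ)) * ψ₂ (x + γ)
          = Complex.exp (I * (-k₂) * x) * ψ₂ x
        rw [SL0.exp_split (-k₂) x γ, SL0.exp_neg_k k₂ (γ:ℂ), hk₂, heig₂ x]
        field_simp
      · intro x
        show ψ x = Complex.exp (I * k₁ * x) * (Complex.exp (I * (-k₁) * x) * ψ₁ x)
          + Complex.exp (I * k₂ * x) * (Complex.exp (I * (-k₂) * x) * ψ₂ x)
        rw [SL0.exp_neg_k k₁ (x:ℂ), SL0.exp_neg_k k₂ (x:ℂ),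
          ← mul_assoc, ← mul_assoc,
          mul_inv_cancel₀ (Complex.exp_ne_zero _),
          mul_inv_cancel₀ (Complex.exp_ne_zero _), one_mul, one_mul]
        show ψ x = (φ x - μ₂ * ψ x) / d + (μ₁ * ψ x - φ x) / d
        rw [← add_div, eq_div_iff hd0]
        linear_combination (-(ψ x)) * hdiff
end

section
/- Let γ > 0, let W, V : ℝ → ℂ be continuous and γ-periodic, and let λ ∈ ℝ. Suppose that for j = 1, 2, 3 there are k_j ∈ ℂ and twice continuously differentiable γ-periodic functions p_j : ℝ → ℂ, each not identically zero, such that ψ_j(x) = e^{i k_j x} p_j(x) satisfies −ψ_j''(x) + W(x)ψ_j'(x) + V(x)ψ_j(x) = λψ_j(x) for all x ∈ ℝ. Then there exist indices i ≠ j with (k_i − k_j)·γ/(2π) ∈ ℤ. (Equivalently, the quasimomenta of Bloch solutions corresponding to a fixed λ occupy at most two congruence classes modulo 2π/γ.) -/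
open Complex

lemma ode_zero_forward (W U : ℝ → ℂ) (hW : Continuous W) (hU : Continuous U)
    (φ : ℝ → ℂ) (hφ1 : Differentiable ℝ φ) (hφ2 : Differentiable ℝ (deriv φ))
    (hode : ∀ x, deriv (deriv φ) x = W x * deriv φ x + U x * φ x)
    (x₀ : ℝ) (h0 : φ x₀ = 0) (h0' : deriv φ x₀ = 0) :
    ∀ x, x₀ ≤ x → φ x = 0 := by
  intro b hb
  set f : ℝ → ℂ × ℂ := fun x => (φ x, deriv φ x) with hfdef
  set f' : ℝ → ℂ × ℂ := fun x => (deriv φ x, W x * deriv φ x + U x * φ x) with hf'def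
  have hf : ∀ x, HasDerivAt f (f' x) x := by
    intro x
    have h1 := (hφ1 x).hasDerivAt
    have h2 := (hφ2 x).hasDerivAt
    rw [hode x] at h2
    exact h1.prodMk h2
  -- bound
  obtain ⟨C, hC⟩ := (IsCompact.exists_bound_of_continuousOn (isCompact_Icc (a := x₀) (b := b))
    ((continuous_norm.comp hW).add ((continuous_norm.comp hU))).continuousOn)
  set K : ℝ := C + 1 with hK
  have hbound : ∀ x ∈ Set.Ico x₀ b, ‖f' x‖ ≤ K * ‖f x‖ + 0 := by
    intro x hx
    have hxI : x ∈ Set.Icc x₀ b := ⟨hx.1, hx.2.le⟩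
    have hWU := hC x hxI
    have hWU' : ‖W x‖ + ‖U x‖ ≤ C := (le_abs_self _).trans (by simpa using hWU)
    have h1 : ‖φ x‖ ≤ ‖f x‖ := le_max_left _ _
    have h2 : ‖deriv φ x‖ ≤ ‖f x‖ := le_max_right _ _
    have hfnn : (0:ℝ) ≤ ‖f x‖ := norm_nonneg _
    have : ‖f' x‖ = max ‖deriv φ x‖ ‖W x * deriv φ x + U x * φ x‖ := rfl
    rw [this]
    rw [add_zero]
    apply max_le
    · nlinarith [norm_nonneg (W x), norm_nonneg (U x)]
    · calc ‖W x * deriv φ x + U x * φ x‖ ≤ ‖W x‖ * ‖deriv φ x‖ + ‖U x‖ * ‖φ x‖ := by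
            refine (norm_add_le _ _).trans ?_
            simp [norm_mul]
      _ ≤ K * ‖f x‖ := by nlinarith [norm_nonneg (W x), norm_nonneg (U x)]
  have hcont : ContinuousOn f (Set.Icc x₀ b) :=
    ((hφ1.continuous.prodMk hφ2.continuous)).continuousOn
  have ha : ‖f x₀‖ ≤ 0 := by
    simp [hfdef, h0, h0', Prod.norm_def]
  have := norm_le_gronwallBound_of_norm_deriv_right_le hcont
    (fun x _ => (hf x).hasDerivWithinAt) ha hbound b ⟨hb, le_rfl⟩
  rw [gronwallBound_ε0_δ0] at this
  have hfb : f b = 0 := by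
    have := le_antisymm this (norm_nonneg _)
    exact norm_eq_zero.mp this
  have : φ b = (f b).1 := rfl
  rw [this, hfb]; rfl

lemma ode_zero (W U : ℝ → ℂ) (hW : Continuous W) (hU : Continuous U)
    (φ : ℝ → ℂ) (hφ1 : Differentiable ℝ φ) (hφ2 : Differentiable ℝ (deriv φ))
    (hode : ∀ x, deriv (deriv φ) x = W x * deriv φ x + U x * φ x)
    (x₀ : ℝ) (h0 : φ x₀ = 0) (h0' : deriv φ x₀ = 0) :
    ∀ x, φ x = 0 := by
  intro x
  rcases le_total x₀ x with h | h
  · exact ode_zero_forward W U hW hU φ hφ1 hφ2 hode x₀ h0 h0' x h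
  · set g : ℝ → ℂ := fun y => φ (-y) with hgdef
    have hg1 : Differentiable ℝ g := hφ1.comp differentiable_neg
    have hgd : deriv g = fun y => -deriv φ (-y) := by
      funext y; exact deriv_comp_neg φ y
    have hg2 : Differentiable ℝ (deriv g) := by
      rw [hgd]; exact (hφ2.comp differentiable_neg).neg
    have hgdd : ∀ y, deriv (deriv g) y = deriv (deriv φ) (-y) := by
      intro y
      rw [hgd]
      have : deriv (fun y => -deriv φ (-y)) y = -deriv (fun y => deriv φ (-y)) y := by
        simp [deriv.neg]
      rw [this, deriv_comp_neg (deriv φ) y, neg_neg]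
    have hgode : ∀ y, deriv (deriv g) y
        = (fun y => -W (-y)) y * deriv g y + (fun y => U (-y)) y * g y := by
      intro y
      rw [hgdd y, hode (-y), hgd]
      ring_nf
      rfl
    have := ode_zero_forward (fun y => -W (-y)) (fun y => U (-y))
      (hW.comp continuous_neg).neg (hU.comp continuous_neg) g hg1 hg2 hgode (-x₀)
      (by simp [hgdef, h0]) (by rw [hgd]; simp [h0']) (-x) (neg_le_neg h)
    simpa [hgdef] using this

lemma wronskian_eq (W U : ℝ → ℂ) (hW : Continuous W)
    (ψ φ : ℝ → ℂ)
    (hψ1 : Differentiable ℝ ψ) (hψ2 : Differentiable ℝ (deriv ψ))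
    (hφ1 : Differentiable ℝ φ) (hφ2 : Differentiable ℝ (deriv φ))
    (hψode : ∀ x, deriv (deriv ψ) x = W x * deriv ψ x + U x * ψ x)
    (hφode : ∀ x, deriv (deriv φ) x = W x * deriv φ x + U x * φ x) :
    ∀ x, ψ x * deriv φ x - deriv ψ x * φ x
      = (ψ 0 * deriv φ 0 - deriv ψ 0 * φ 0) * Complex.exp (∫ t in (0:ℝ)..x, W t) := by
  set A : ℝ → ℂ := fun x => ∫ t in (0:ℝ)..x, W t with hAdef
  have hA : ∀ x, HasDerivAt A (W x) x := fun x =>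
    (hW.integral_hasStrictDerivAt 0 x).hasDerivAt
  set Wr : ℝ → ℂ := fun x => ψ x * deriv φ x - deriv ψ x * φ x with hWrdef
  set g : ℝ → ℂ := fun x => Wr x * Complex.exp (-A x) with hgdef
  have hg : ∀ x, HasDerivAt g 0 x := by
    intro x
    have hWr : HasDerivAt Wr (W x * Wr x) x := by
      have d : HasDerivAt Wr
          ((deriv ψ x * deriv φ x + ψ x * deriv (deriv φ) x)
            - (deriv (deriv ψ) x * φ x + deriv ψ x * deriv φ x)) x :=
        (((hψ1 x).hasDerivAt.mul (hφ2 x).hasDerivAt)).sub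
          (((hψ2 x).hasDerivAt.mul (hφ1 x).hasDerivAt))
      convert d using 1
      rw [hψode x, hφode x]; ring
    have hexp : HasDerivAt (fun x => Complex.exp (-A x))
        (Complex.exp (-A x) * (-W x)) x := ((hA x).neg).cexp
    have := hWr.mul hexp
    convert this using 1
    · rfl
    · rfl
    ring
  have hconst : ∀ x, g x = g 0 :=
    fun x => is_const_of_deriv_eq_zero
      (fun y => (hg y).differentiableAt) (fun y => (hg y).deriv) x 0
  intro x
  have h0 : A 0 = 0 := by simp [hAdef]
  have hx := hconst x
  have : Wr x * Complex.exp (-A x) * Complex.exp (A x) = Wr 0 * Complex.exp (A x) := by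
    rw [hgdef] at hx
    simp only at hx
    rw [hx, h0]
    simp
  rwa [mul_assoc, ← Complex.exp_add, neg_add_cancel, Complex.exp_zero, mul_one] at this

lemma bloch_pack (γ : ℝ) (W V : ℝ → ℂ) (lam : ℝ) (k : ℂ) (p : ℝ → ℂ)
    (hp : ContDiff ℝ 2 p) (hpper : ∀ x : ℝ, p (x + γ) = p x)
    (heq : ∀ x : ℝ,
      -(deriv (deriv (fun y : ℝ => Complex.exp (Complex.I * k * y) * p y)) x)
      + W x * deriv (fun y : ℝ => Complex.exp (Complex.I * k * y) * p y) x
      + V x * (Complex.exp (Complex.I * k * x) * p x)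
      = (lam : ℂ) * (Complex.exp (Complex.I * k * x) * p x)) :
    Differentiable ℝ (fun y : ℝ => Complex.exp (Complex.I * k * y) * p y) ∧
    Differentiable ℝ (deriv (fun y : ℝ => Complex.exp (Complex.I * k * y) * p y)) ∧
    (∀ x, deriv (deriv (fun y : ℝ => Complex.exp (Complex.I * k * y) * p y)) x
      = W x * deriv (fun y : ℝ => Complex.exp (Complex.I * k * y) * p y) x
        + (V x - (lam : ℂ)) * (Complex.exp (Complex.I * k * x) * p x)) ∧
    (∀ x : ℝ, Complex.exp (Complex.I * k * (x + γ : ℝ)) * p (x + γ)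
      = Complex.exp (Complex.I * k * γ) * (Complex.exp (Complex.I * k * x) * p x)) ∧
    (∀ x : ℝ, deriv (fun y : ℝ => Complex.exp (Complex.I * k * y) * p y) (x + γ)
      = Complex.exp (Complex.I * k * γ)
        * deriv (fun y : ℝ => Complex.exp (Complex.I * k * y) * p y) x) := by
  set ψ : ℝ → ℂ := fun y : ℝ => Complex.exp (Complex.I * k * y) * p y with hψdef
  have hψ : ContDiff ℝ 2 ψ := by
    apply ContDiff.mul _ hp
    exact Complex.contDiff_exp.comp (contDiff_const.mul Complex.ofRealCLM.contDiff)
  have h1 : Differentiable ℝ ψ := hψ.differentiable two_ne_zero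
  have h2 : Differentiable ℝ (deriv ψ) := by
    have h' : ContDiff ℝ (1 + 1 : WithTop ℕ∞) ψ := by exact_mod_cast hψ
    exact (contDiff_succ_iff_deriv.mp h').2.2.differentiable one_ne_zero
  have hshift : ∀ x : ℝ, Complex.exp (Complex.I * k * (x + γ : ℝ)) * p (x + γ)
      = Complex.exp (Complex.I * k * γ) * (Complex.exp (Complex.I * k * x) * p x) := by
    intro x
    rw [hpper]
    push_cast
    rw [mul_add, Complex.exp_add]
    ring
  refine ⟨h1, h2, ?_, hshift, ?_⟩
  · intro x
    have h := heq x
    linear_combination -h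
  · intro x
    have hfun : (fun x : ℝ => ψ (x + γ))
        = fun x : ℝ => Complex.exp (Complex.I * k * γ) * ψ x := funext fun x => hshift x
    have := deriv_comp_add_const ψ γ x
    rw [← this, hfun, deriv_const_mul _ (h1 x)]

lemma exp_congr (γ : ℝ) (hγ : 0 < γ) (a b : ℂ)
    (h : Complex.exp (Complex.I * a * γ) = Complex.exp (Complex.I * b * γ)) :
    ∃ m : ℤ, (a - b) * (γ : ℂ) / (2 * (Real.pi : ℂ)) = (m : ℂ) := by
  have h1 : Complex.exp (Complex.I * a * γ - Complex.I * b * γ) = 1 := by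
    rw [Complex.exp_sub, h, div_self (Complex.exp_ne_zero _)]
  obtain ⟨n, hn⟩ := Complex.exp_eq_one_iff.mp h1
  refine ⟨n, ?_⟩
  have hπ : (Real.pi : ℂ) ≠ 0 := Complex.ofReal_ne_zero.mpr Real.pi_ne_zero
  have h2π : (2 : ℂ) * (Real.pi : ℂ) ≠ 0 := mul_ne_zero two_ne_zero hπ
  rw [div_eq_iff h2π]
  have key : Complex.I * ((a - b) * (γ : ℂ)) = Complex.I * ((n : ℂ) * (2 * (Real.pi : ℂ))) := by
    linear_combination hn
  have := mul_left_cancel₀ Complex.I_ne_zero key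
  exact this

/-- quasimomenta of Bloch solutions for a fixed `λ` occupy at most two
congruence classes modulo `2π/γ`: among any three Bloch solutions, two of the
quasimomenta are congruent. -/
theorem bloch_quasimomenta_at_most_two_classes
    (γ : ℝ) (hγ : 0 < γ) (W V : ℝ → ℂ)
    (hWcont : Continuous W) (hVcont : Continuous V)
    (hWper : ∀ x : ℝ, W (x + γ) = W x) (hVper : ∀ x : ℝ, V (x + γ) = V x)
    (lam : ℝ) (k₁ k₂ k₃ : ℂ) (p₁ p₂ p₃ : ℝ → ℂ)
    (hp₁ : ContDiff ℝ 2 p₁) (hp₂ : ContDiff ℝ 2 p₂) (hp₃ : ContDiff ℝ 2 p₃)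
    (hp₁per : ∀ x : ℝ, p₁ (x + γ) = p₁ x) (hp₂per : ∀ x : ℝ, p₂ (x + γ) = p₂ x)
    (hp₃per : ∀ x : ℝ, p₃ (x + γ) = p₃ x)
    (hp₁ne : ∃ x : ℝ, p₁ x ≠ 0) (hp₂ne : ∃ x : ℝ, p₂ x ≠ 0)
    (hp₃ne : ∃ x : ℝ, p₃ x ≠ 0)
    (heq₁ : ∀ x : ℝ,
      -(deriv (deriv (fun y : ℝ => Complex.exp (Complex.I * k₁ * y) * p₁ y)) x)
      + W x * deriv (fun y : ℝ => Complex.exp (Complex.I * k₁ * y) * p₁ y) x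
      + V x * (Complex.exp (Complex.I * k₁ * x) * p₁ x)
      = (lam : ℂ) * (Complex.exp (Complex.I * k₁ * x) * p₁ x))
    (heq₂ : ∀ x : ℝ,
      -(deriv (deriv (fun y : ℝ => Complex.exp (Complex.I * k₂ * y) * p₂ y)) x)
      + W x * deriv (fun y : ℝ => Complex.exp (Complex.I * k₂ * y) * p₂ y) x
      + V x * (Complex.exp (Complex.I * k₂ * x) * p₂ x)
      = (lam : ℂ) * (Complex.exp (Complex.I * k₂ * x) * p₂ x))
    (heq₃ : ∀ x : ℝ,
      -(deriv (deriv (fun y : ℝ => Complex.exp (Complex.I * k₃ * y) * p₃ y)) x)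
      + W x * deriv (fun y : ℝ => Complex.exp (Complex.I * k₃ * y) * p₃ y) x
      + V x * (Complex.exp (Complex.I * k₃ * x) * p₃ x)
      = (lam : ℂ) * (Complex.exp (Complex.I * k₃ * x) * p₃ x)) :
    (∃ m : ℤ, (k₁ - k₂) * (γ : ℂ) / (2 * (Real.pi : ℂ)) = (m : ℂ)) ∨
    (∃ m : ℤ, (k₁ - k₃) * (γ : ℂ) / (2 * (Real.pi : ℂ)) = (m : ℂ)) ∨
    (∃ m : ℤ, (k₂ - k₃) * (γ : ℂ) / (2 * (Real.pi : ℂ)) = (m : ℂ)) := by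
  obtain ⟨d₁, d₁', ode₁, sh₁, sh₁'⟩ := bloch_pack γ W V lam k₁ p₁ hp₁ hp₁per heq₁
  obtain ⟨d₂, d₂', ode₂, sh₂, sh₂'⟩ := bloch_pack γ W V lam k₂ p₂ hp₂ hp₂per heq₂
  obtain ⟨d₃, d₃', ode₃, sh₃, sh₃'⟩ := bloch_pack γ W V lam k₃ p₃ hp₃ hp₃per heq₃
  set ψ₁ : ℝ → ℂ := fun y : ℝ => Complex.exp (Complex.I * k₁ * y) * p₁ y with hψ₁def
  set ψ₂ : ℝ → ℂ := fun y : ℝ => Complex.exp (Complex.I * k₂ * y) * p₂ y with hψ₂def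
  set ψ₃ : ℝ → ℂ := fun y : ℝ => Complex.exp (Complex.I * k₃ * y) * p₃ y with hψ₃def
  set E₁ : ℂ := Complex.exp (Complex.I * k₁ * γ) with hE₁def
  set E₂ : ℂ := Complex.exp (Complex.I * k₂ * γ) with hE₂def
  set E₃ : ℂ := Complex.exp (Complex.I * k₃ * γ) with hE₃def
  set A : ℝ → ℂ := fun x => ∫ t in (0:ℝ)..x, W t with hAdef
  -- restated shift facts
  have hsψ₁ : ∀ x : ℝ, ψ₁ (x + γ) = E₁ * ψ₁ x := sh₁
  have hsψ₂ : ∀ x : ℝ, ψ₂ (x + γ) = E₂ * ψ₂ x := sh₂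
  have hsψ₃ : ∀ x : ℝ, ψ₃ (x + γ) = E₃ * ψ₃ x := sh₃
  have hU : Continuous (fun x : ℝ => V x - (lam : ℂ)) := hVcont.sub continuous_const
  have ode₁' : ∀ x, deriv (deriv ψ₁) x = W x * deriv ψ₁ x + (V x - (lam : ℂ)) * ψ₁ x := ode₁
  have ode₂' : ∀ x, deriv (deriv ψ₂) x = W x * deriv ψ₂ x + (V x - (lam : ℂ)) * ψ₂ x := ode₂
  have ode₃' : ∀ x, deriv (deriv ψ₃) x = W x * deriv ψ₃ x + (V x - (lam : ℂ)) * ψ₃ x := ode₃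
  -- Wronskians
  set Wr₁₂ : ℝ → ℂ := fun x => ψ₁ x * deriv ψ₂ x - deriv ψ₁ x * ψ₂ x with hWr₁₂def
  set Wr₁₃ : ℝ → ℂ := fun x => ψ₁ x * deriv ψ₃ x - deriv ψ₁ x * ψ₃ x with hWr₁₃def
  set Wr₂₃ : ℝ → ℂ := fun x => ψ₂ x * deriv ψ₃ x - deriv ψ₂ x * ψ₃ x with hWr₂₃def
  have hw₁₂ : ∀ x, Wr₁₂ x = Wr₁₂ 0 * Complex.exp (A x) :=
    wronskian_eq W (fun x => V x - (lam : ℂ)) hWcont ψ₁ ψ₂ d₁ d₁' d₂ d₂' ode₁' ode₂'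
  have hw₁₃ : ∀ x, Wr₁₃ x = Wr₁₃ 0 * Complex.exp (A x) :=
    wronskian_eq W (fun x => V x - (lam : ℂ)) hWcont ψ₁ ψ₃ d₁ d₁' d₃ d₃' ode₁' ode₃'
  have hw₂₃ : ∀ x, Wr₂₃ x = Wr₂₃ 0 * Complex.exp (A x) :=
    wronskian_eq W (fun x => V x - (lam : ℂ)) hWcont ψ₂ ψ₃ d₂ d₂' d₃ d₃' ode₂' ode₃'
  -- multipliers for Wronskians
  have hm₁₂ : Wr₁₂ γ = E₁ * E₂ * Wr₁₂ 0 := by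
    have h := hsψ₁ 0; have h' := sh₁' 0; have g := hsψ₂ 0; have g' := sh₂' 0
    simp only [zero_add] at h h' g g'
    show ψ₁ γ * deriv ψ₂ γ - deriv ψ₁ γ * ψ₂ γ = _
    rw [h, h', g, g']; show _ = E₁ * E₂ * (ψ₁ 0 * deriv ψ₂ 0 - deriv ψ₁ 0 * ψ₂ 0); ring
  have hm₁₃ : Wr₁₃ γ = E₁ * E₃ * Wr₁₃ 0 := by
    have h := hsψ₁ 0; have h' := sh₁' 0; have g := hsψ₃ 0; have g' := sh₃' 0
    simp only [zero_add] at h h' g g'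
    show ψ₁ γ * deriv ψ₃ γ - deriv ψ₁ γ * ψ₃ γ = _
    rw [h, h', g, g']; show _ = E₁ * E₃ * (ψ₁ 0 * deriv ψ₃ 0 - deriv ψ₁ 0 * ψ₃ 0); ring
  have hm₂₃ : Wr₂₃ γ = E₂ * E₃ * Wr₂₃ 0 := by
    have h := hsψ₂ 0; have h' := sh₂' 0; have g := hsψ₃ 0; have g' := sh₃' 0
    simp only [zero_add] at h h' g g'
    show ψ₂ γ * deriv ψ₃ γ - deriv ψ₂ γ * ψ₃ γ = _
    rw [h, h', g, g']; show _ = E₂ * E₃ * (ψ₂ 0 * deriv ψ₃ 0 - deriv ψ₂ 0 * ψ₃ 0); ring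
  have hE₁0 : E₁ ≠ 0 := Complex.exp_ne_zero _
  have hE₂0 : E₂ ≠ 0 := Complex.exp_ne_zero _
  have hE₃0 : E₃ ≠ 0 := Complex.exp_ne_zero _
  -- if c ≠ 0 then the product of multipliers is exp (A γ)
  have key₁₂ : Wr₁₂ 0 ≠ 0 → E₁ * E₂ = Complex.exp (A γ) := by
    intro hc
    have h := hw₁₂ γ
    rw [hm₁₂] at h
    apply mul_left_cancel₀ hc
    linear_combination h
  have key₁₃ : Wr₁₃ 0 ≠ 0 → E₁ * E₃ = Complex.exp (A γ) := by
    intro hc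
    have h := hw₁₃ γ
    rw [hm₁₃] at h
    apply mul_left_cancel₀ hc
    linear_combination h
  have key₂₃ : Wr₂₃ 0 ≠ 0 → E₂ * E₃ = Complex.exp (A γ) := by
    intro hc
    have h := hw₂₃ γ
    rw [hm₂₃] at h
    apply mul_left_cancel₀ hc
    linear_combination h
  -- the three-solution identity
  have hiden : ∀ x, Wr₂₃ 0 * ψ₁ x - Wr₁₃ 0 * ψ₂ x + Wr₁₂ 0 * ψ₃ x = 0 := by
    intro x
    have h0 : ψ₁ x * Wr₂₃ x - ψ₂ x * Wr₁₃ x + ψ₃ x * Wr₁₂ x = 0 := by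
      show ψ₁ x * (ψ₂ x * deriv ψ₃ x - deriv ψ₂ x * ψ₃ x)
        - ψ₂ x * (ψ₁ x * deriv ψ₃ x - deriv ψ₁ x * ψ₃ x)
        + ψ₃ x * (ψ₁ x * deriv ψ₂ x - deriv ψ₁ x * ψ₂ x) = 0
      ring
    rw [hw₂₃ x, hw₁₃ x, hw₁₂ x] at h0
    apply mul_left_cancel₀ (Complex.exp_ne_zero (A x))
    rw [mul_zero]
    linear_combination h0
  -- nonvanishing transfers
  have hψne : ∀ (k : ℂ) (p : ℝ → ℂ) (x : ℝ), p x ≠ 0 →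
      Complex.exp (Complex.I * k * x) * p x ≠ 0 :=
    fun k p x h => mul_ne_zero (Complex.exp_ne_zero _) h
  by_cases h12 : Wr₁₂ 0 = 0 <;> by_cases h13 : Wr₁₃ 0 = 0 <;> by_cases h23 : Wr₂₃ 0 = 0
  · -- all Wronskians vanish: ψ₂ is proportional to ψ₁
    obtain ⟨x₀, hx₀⟩ := hp₁ne
    have hψ₁x₀ : ψ₁ x₀ ≠ 0 := hψne k₁ p₁ x₀ hx₀
    set C : ℂ := ψ₂ x₀ / ψ₁ x₀ with hCdef
    set φ : ℝ → ℂ := fun x => ψ₂ x - C * ψ₁ x with hφdef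
    have hφ1 : Differentiable ℝ φ := d₂.sub (d₁.const_mul C)
    have hφd : deriv φ = fun x => deriv ψ₂ x - C * deriv ψ₁ x := by
      funext x
      rw [hφdef]
      rw [deriv_fun_sub (d₂ x) ((d₁ x).const_mul C), deriv_const_mul _ (d₁ x)]
    have hφ2 : Differentiable ℝ (deriv φ) := by
      rw [hφd]; exact d₂'.sub (d₁'.const_mul C)
    have hφode : ∀ x, deriv (deriv φ) x = W x * deriv φ x + (V x - (lam : ℂ)) * φ x := by
      intro x
      rw [hφd]
      rw [deriv_fun_sub (d₂' x) ((d₁' x).const_mul C), deriv_const_mul _ (d₁' x)]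
      rw [ode₁' x, ode₂' x]
      show _ = W x * (deriv ψ₂ x - C * deriv ψ₁ x) + (V x - (lam:ℂ)) * (ψ₂ x - C * ψ₁ x)
      ring
    have hφx₀ : φ x₀ = 0 := by
      show ψ₂ x₀ - C * ψ₁ x₀ = 0
      rw [hCdef]; field_simp; ring
    have hWR : ψ₁ x₀ * deriv ψ₂ x₀ - deriv ψ₁ x₀ * ψ₂ x₀ = 0 := by
      have h := hw₁₂ x₀; rw [h12, zero_mul] at h; exact h
    have hφ'x₀ : deriv φ x₀ = 0 := by
      rw [hφd]
      show deriv ψ₂ x₀ - C * deriv ψ₁ x₀ = 0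
      rw [hCdef]
      field_simp
      linear_combination hWR
    have hzero := ode_zero W (fun x => V x - (lam : ℂ)) hWcont hU φ hφ1 hφ2 hφode x₀ hφx₀ hφ'x₀
    have hC : ∀ x, ψ₂ x = C * ψ₁ x := by
      intro x
      have := hzero x
      rw [hφdef] at this
      linear_combination this
    obtain ⟨x₁, hx₁⟩ := hp₂ne
    have hψ₂x₁ : ψ₂ x₁ ≠ 0 := hψne k₂ p₂ x₁ hx₁
    have hE : E₁ = E₂ := by
      have h1 := hsψ₂ x₁
      rw [hC (x₁ + γ), hsψ₁ x₁, hC x₁] at h1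
      have hψ₁x₁ : ψ₁ x₁ ≠ 0 := by
        intro h; apply hψ₂x₁; rw [hC x₁, h, mul_zero]
      have hCne : C ≠ 0 := by
        intro h; apply hψ₂x₁; rw [hC x₁, h, zero_mul]
      have h2 : (C * ψ₁ x₁) * E₁ = (C * ψ₁ x₁) * E₂ := by linear_combination h1
      exact mul_left_cancel₀ (mul_ne_zero hCne hψ₁x₁) h2
    exact Or.inl (exp_congr γ hγ k₁ k₂ (by rw [← hE₁def, ← hE₂def, hE]))
  · -- only Wr₂₃ ≠ 0 : ψ₁ ≡ 0, contradiction
    exfalso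
    obtain ⟨x, hx⟩ := hp₁ne
    have := hiden x
    rw [h12, h13] at this
    simp only [zero_mul, sub_zero, add_zero] at this
    exact (mul_ne_zero h23 (hψne k₁ p₁ x hx)) this
  · -- only Wr₁₃ ≠ 0 : ψ₂ ≡ 0, contradiction
    exfalso
    obtain ⟨x, hx⟩ := hp₂ne
    have := hiden x
    rw [h12, h23] at this
    simp only [zero_mul, zero_sub, add_zero, neg_eq_zero] at this
    exact (mul_ne_zero h13 (hψne k₂ p₂ x hx)) this
  · -- Wr₁₃ ≠ 0, Wr₂₃ ≠ 0 : E₁ = E₂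
    have hE : E₁ = E₂ := by
      have h1 := key₁₃ h13
      have h2 := key₂₃ h23
      have : E₁ * E₃ = E₂ * E₃ := by rw [h1, h2]
      exact mul_right_cancel₀ hE₃0 this
    exact Or.inl (exp_congr γ hγ k₁ k₂ (by rw [← hE₁def, ← hE₂def, hE]))
  · -- only Wr₁₂ ≠ 0 : ψ₃ ≡ 0, contradiction
    exfalso
    obtain ⟨x, hx⟩ := hp₃ne
    have := hiden x
    rw [h13, h23] at this
    simp only [zero_mul, zero_sub, neg_add_eq_zero, sub_zero, zero_add] at this
    exact (mul_ne_zero h12 (hψne k₃ p₃ x hx)) (by linear_combination this)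
  · -- Wr₁₂ ≠ 0, Wr₂₃ ≠ 0 : E₁ = E₃
    have hE : E₁ = E₃ := by
      have h1 := key₁₂ h12
      have h2 := key₂₃ h23
      have : E₁ * E₂ = E₃ * E₂ := by rw [h1, mul_comm E₃ E₂, h2]
      exact mul_right_cancel₀ hE₂0 this
    exact Or.inr (Or.inl (exp_congr γ hγ k₁ k₃ (by rw [← hE₁def, ← hE₃def, hE])))
  · -- Wr₁₂ ≠ 0, Wr₁₃ ≠ 0 : E₂ = E₃
    have hE : E₂ = E₃ := by
      have h1 := key₁₂ h12
      have h2 := key₁₃ h13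
      have : E₁ * E₂ = E₁ * E₃ := by rw [h1, h2]
      exact mul_left_cancel₀ hE₁0 this
    exact Or.inr (Or.inr (exp_congr γ hγ k₂ k₃ (by rw [← hE₂def, ← hE₃def, hE])))
  · -- all nonzero : use 13 and 23
    have hE : E₁ = E₂ := by
      have h1 := key₁₃ h13
      have h2 := key₂₃ h23
      have : E₁ * E₃ = E₂ * E₃ := by rw [h1, h2]
      exact mul_right_cancel₀ hE₃0 this
    exact Or.inl (exp_congr γ hγ k₁ k₂ (by rw [← hE₁def, ← hE₂def, hE]))
end

section
/- Let γ > 0, let W, V : ℝ → ℂ be continuous and γ-periodic, let λ ∈ ℝ, let k₀ ∈ ℂ, and let p₁, p₂ : ℝ → ℂ be twice continuously differentiable and γ-periodic. If ψ(x) := e^{i k₀ x}(p₁(x) + x·p₂(x)) satisfies −ψ''(x) + W(x)ψ'(x) + V(x)ψ(x) = λψ(x) for all x ∈ ℝ, then: (a) −p₂''(x) + (W(x) − 2i k₀)p₂'(x) + (i k₀ W(x) + V(x) + k₀²)p₂(x) = λ p₂(x) for all x ∈ ℝ, and (b) −p₁''(x) + (W(x) − 2i k₀)p₁'(x) + (i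 k₀ W(x) + V(x) + k₀²)p₁(x) = λ p₁(x) + (2i k₀ − W(x))p₂(x) + 2p₂'(x) for all x ∈ ℝ. In particular, e^{i k₀ x}p₂(x) is itself a solution of the Sturm–Liouville equation for the same λ. -/
open Complex


lemma hE' (k₀ : ℂ) (x : ℝ) :
    HasDerivAt (fun y : ℝ => Complex.exp (Complex.I * k₀ * y))
      (Complex.I * k₀ * Complex.exp (Complex.I * k₀ * x)) x := by
  have h1 : HasDerivAt (fun y : ℝ => Complex.I * k₀ * (y : ℂ)) (Complex.I * k₀) x := by
    simpa using ((hasDerivAt_id x).ofReal_comp.const_mul (Complex.I * k₀))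
  simpa [mul_comm] using h1.cexp

lemma deriv_per {p : ℝ → ℂ} {γ : ℝ} (hp : Differentiable ℝ p)
    (hper : ∀ x, p (x + γ) = p x) (x : ℝ) : deriv p (x + γ) = deriv p x := by
  have h : HasDerivAt (fun y : ℝ => p (y + γ)) (deriv p (x + γ)) x :=
    (hp (x + γ)).hasDerivAt.comp_add_const x γ
  have h' : HasDerivAt p (deriv p (x + γ)) x := by
    have heq : (fun y : ℝ => p (y + γ)) = p := funext hper
    rwa [heq] at h
  exact (h'.deriv).symm

lemma deriv_diff {p : ℝ → ℂ} (hp : ContDiff ℝ 2 p) : Differentiable ℝ (deriv p) := by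
  have h2 : ContDiff ℝ ((1:ℕ∞)+1) p := by convert hp using 2; norm_num
  exact (contDiff_succ_iff_deriv.mp h2).2.2.differentiable (by norm_num)

lemma exp_mul_deriv2 (k₀ : ℂ) {f : ℝ → ℂ} (hf : ContDiff ℝ 2 f) (x : ℝ) :
    deriv (fun y : ℝ => Complex.exp (Complex.I * k₀ * y) * f y) x
      = Complex.exp (Complex.I * k₀ * x) * (Complex.I * k₀ * f x + deriv f x) ∧
    deriv (deriv (fun y : ℝ => Complex.exp (Complex.I * k₀ * y) * f y)) x
      = Complex.exp (Complex.I * k₀ * x) *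
        ((Complex.I * k₀)^2 * f x + 2 * (Complex.I * k₀) * deriv f x
          + deriv (deriv f) x) := by
  have hf1 : Differentiable ℝ f := hf.differentiable (by norm_num)
  have hf2 : Differentiable ℝ (deriv f) := deriv_diff hf
  have h1 : ∀ y : ℝ, HasDerivAt (fun y : ℝ => Complex.exp (Complex.I * k₀ * y) * f y)
      (Complex.I * k₀ * Complex.exp (Complex.I * k₀ * y) * f y
        + Complex.exp (Complex.I * k₀ * y) * deriv f y) y :=
    fun y => (hE' k₀ y).mul (hf1 y).hasDerivAt
  constructor
  · rw [(h1 x).deriv]; ring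
  · have hD : deriv (fun y : ℝ => Complex.exp (Complex.I * k₀ * y) * f y)
        = fun y : ℝ => Complex.I * k₀ * Complex.exp (Complex.I * k₀ * y) * f y
          + Complex.exp (Complex.I * k₀ * y) * deriv f y :=
      funext fun y => (h1 y).deriv
    rw [hD]
    have h2 : HasDerivAt (fun y : ℝ => Complex.I * k₀ * Complex.exp (Complex.I * k₀ * y) * f y
          + Complex.exp (Complex.I * k₀ * y) * deriv f y)
        (Complex.I * k₀ * (Complex.I * k₀ * Complex.exp (Complex.I * k₀ * x) * f x
          + Complex.exp (Complex.I * k₀ * x) * deriv f x)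
         + (Complex.I * k₀ * Complex.exp (Complex.I * k₀ * x) * deriv f x
          + Complex.exp (Complex.I * k₀ * x) * deriv (deriv f) x)) x := by
      have ha : HasDerivAt (fun y : ℝ => Complex.I * k₀ * Complex.exp (Complex.I * k₀ * y) * f y)
          (Complex.I * k₀ * (Complex.I * k₀ * Complex.exp (Complex.I * k₀ * x) * f x
            + Complex.exp (Complex.I * k₀ * x) * deriv f x)) x := by
        have := (h1 x).const_mul (Complex.I * k₀)
        simpa [mul_assoc] using this
      exact ha.add ((hE' k₀ x).mul (hf2 x).hasDerivAt)
    rw [h2.deriv]; ring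

/-- if `ψ(x) = e^{ik₀x}(p₁(x) + x p₂(x))` solves the Sturm–Liouville
equation, then `D^{k₀}p₂ = λ p₂` and `D^{k₀}p₁ = λ p₁ + (2ik₀ - W)p₂ + 2p₂'`; in
particular `e^{ik₀x} p₂(x)` is itself a solution for the same `λ`. -/
theorem growth_form_periodic_parts
    (γ : ℝ) (hγ : 0 < γ) (W V : ℝ → ℂ)
    (hWcont : Continuous W) (hVcont : Continuous V)
    (hWper : ∀ x : ℝ, W (x + γ) = W x) (hVper : ∀ x : ℝ, V (x + γ) = V x)
    (lam : ℝ) (k₀ : ℂ) (p₁ p₂ : ℝ → ℂ)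
    (hp₁ : ContDiff ℝ 2 p₁) (hp₂ : ContDiff ℝ 2 p₂)
    (hp₁per : ∀ x : ℝ, p₁ (x + γ) = p₁ x) (hp₂per : ∀ x : ℝ, p₂ (x + γ) = p₂ x)
    (heq : ∀ x : ℝ,
      -(deriv (deriv (fun y : ℝ =>
          Complex.exp (Complex.I * k₀ * y) * (p₁ y + y * p₂ y))) x)
      + W x * deriv (fun y : ℝ =>
          Complex.exp (Complex.I * k₀ * y) * (p₁ y + y * p₂ y)) x
      + V x * (Complex.exp (Complex.I * k₀ * x) * (p₁ x + x * p₂ x))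
      = (lam : ℂ) * (Complex.exp (Complex.I * k₀ * x) * (p₁ x + x * p₂ x))) :
    (∀ x : ℝ,
      -(deriv (deriv p₂) x) + (W x - 2 * Complex.I * k₀) * deriv p₂ x
      + (Complex.I * k₀ * W x + V x + k₀ ^ 2) * p₂ x = (lam : ℂ) * p₂ x) ∧
    (∀ x : ℝ,
      -(deriv (deriv p₁) x) + (W x - 2 * Complex.I * k₀) * deriv p₁ x
      + (Complex.I * k₀ * W x + V x + k₀ ^ 2) * p₁ x
      = (lam : ℂ) * p₁ x + (2 * Complex.I * k₀ - W x) * p₂ x + 2 * deriv p₂ x) ∧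
    (∀ x : ℝ,
      -(deriv (deriv (fun y : ℝ => Complex.exp (Complex.I * k₀ * y) * p₂ y)) x)
      + W x * deriv (fun y : ℝ => Complex.exp (Complex.I * k₀ * y) * p₂ y) x
      + V x * (Complex.exp (Complex.I * k₀ * x) * p₂ x)
      = (lam : ℂ) * (Complex.exp (Complex.I * k₀ * x) * p₂ x)) := by
  have hp₁d : Differentiable ℝ p₁ := hp₁.differentiable (by norm_num)
  have hp₂d : Differentiable ℝ p₂ := hp₂.differentiable (by norm_num)
  have hdp₁d : Differentiable ℝ (deriv p₁) := deriv_diff hp₁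
  have hdp₂d : Differentiable ℝ (deriv p₂) := deriv_diff hp₂
  -- periodicity of derivatives
  have hdp₁per : ∀ x : ℝ, deriv p₁ (x + γ) = deriv p₁ x := deriv_per hp₁d hp₁per
  have hdp₂per : ∀ x : ℝ, deriv p₂ (x + γ) = deriv p₂ x := deriv_per hp₂d hp₂per
  have hddp₁per : ∀ x : ℝ, deriv (deriv p₁) (x + γ) = deriv (deriv p₁) x :=
    deriv_per hdp₁d hdp₁per
  have hddp₂per : ∀ x : ℝ, deriv (deriv p₂) (x + γ) = deriv (deriv p₂) x :=
    deriv_per hdp₂d hdp₂per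
  -- smoothness of f := p₁ + x p₂
  have hid : ContDiff ℝ 2 (fun y : ℝ => (y : ℂ)) := Complex.ofRealCLM.contDiff
  have hf : ContDiff ℝ 2 (fun y : ℝ => p₁ y + (y : ℂ) * p₂ y) := hp₁.add (hid.mul hp₂)
  -- first derivative of f
  have hfd : ∀ y : ℝ, HasDerivAt (fun y : ℝ => p₁ y + (y : ℂ) * p₂ y)
      (deriv p₁ y + (1 * p₂ y + (y : ℂ) * deriv p₂ y)) y := fun y =>
    (hp₁d y).hasDerivAt.add (((hasDerivAt_id y).ofReal_comp).mul (hp₂d y).hasDerivAt)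
  have hdf : ∀ y : ℝ, deriv (fun y : ℝ => p₁ y + (y : ℂ) * p₂ y) y
      = deriv p₁ y + p₂ y + (y : ℂ) * deriv p₂ y := by
    intro y; rw [(hfd y).deriv]; ring
  -- second derivative of f
  have hddf : ∀ x : ℝ, deriv (deriv (fun y : ℝ => p₁ y + (y : ℂ) * p₂ y)) x
      = deriv (deriv p₁) x + 2 * deriv p₂ x + (x : ℂ) * deriv (deriv p₂) x := by
    intro x
    have hDf : deriv (fun y : ℝ => p₁ y + (y : ℂ) * p₂ y)
        = fun y : ℝ => deriv p₁ y + p₂ y + (y : ℂ) * deriv p₂ y := funext hdf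
    rw [hDf]
    have h2 : HasDerivAt (fun y : ℝ => deriv p₁ y + p₂ y + (y : ℂ) * deriv p₂ y)
        (deriv (deriv p₁) x + deriv p₂ x + (1 * deriv p₂ x + (x : ℂ) * deriv (deriv p₂) x)) x :=
      (((hdp₁d x).hasDerivAt.add (hp₂d x).hasDerivAt)).add
        (((hasDerivAt_id x).ofReal_comp).mul (hdp₂d x).hasDerivAt)
    rw [h2.deriv]; ring
  -- combined polynomial identity: A x + x * B x = 0
  have key : ∀ x : ℝ,
      (-(deriv (deriv p₁) x) + (W x - 2 * Complex.I * k₀) * deriv p₁ x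
        + (Complex.I * k₀ * W x + V x + k₀ ^ 2) * p₁ x - (lam : ℂ) * p₁ x
        - (2 * Complex.I * k₀ - W x) * p₂ x - 2 * deriv p₂ x)
      + (x : ℂ) * (-(deriv (deriv p₂) x) + (W x - 2 * Complex.I * k₀) * deriv p₂ x
        + (Complex.I * k₀ * W x + V x + k₀ ^ 2) * p₂ x - (lam : ℂ) * p₂ x) = 0 := by
    intro x
    have hder := exp_mul_deriv2 k₀ hf x
    beta_reduce at hder
    have h := heq x
    rw [hder.1, hder.2, hdf x, hddf x] at h
    have hne : Complex.exp (Complex.I * k₀ * x) ≠ 0 := Complex.exp_ne_zero _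
    apply mul_left_cancel₀ hne
    rw [mul_zero]
    linear_combination h + Complex.exp (Complex.I * k₀ * (x:ℝ)) * (p₁ x + (x:ℂ) * p₂ x)
      * k₀ ^ 2 * Complex.I_sq
  -- B = 0
  have hB : ∀ x : ℝ,
      -(deriv (deriv p₂) x) + (W x - 2 * Complex.I * k₀) * deriv p₂ x
        + (Complex.I * k₀ * W x + V x + k₀ ^ 2) * p₂ x - (lam : ℂ) * p₂ x = 0 := by
    intro x
    have h1 := key x
    have h2 := key (x + γ)
    rw [hWper, hVper, hp₁per, hp₂per, hdp₁per, hdp₂per, hddp₁per, hddp₂per] at h2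
    push_cast at h2
    have hγne : (γ : ℂ) ≠ 0 := by
      exact_mod_cast Complex.ofReal_ne_zero.mpr hγ.ne'
    have h3 : (γ : ℂ) * (-(deriv (deriv p₂) x) + (W x - 2 * Complex.I * k₀) * deriv p₂ x
        + (Complex.I * k₀ * W x + V x + k₀ ^ 2) * p₂ x - (lam : ℂ) * p₂ x) = 0 := by
      linear_combination h2 - h1
    exact (mul_eq_zero.mp h3).resolve_left hγne
  have hA : ∀ x : ℝ,
      -(deriv (deriv p₁) x) + (W x - 2 * Complex.I * k₀) * deriv p₁ x
        + (Complex.I * k₀ * W x + V x + k₀ ^ 2) * p₁ x - (lam : ℂ) * p₁ x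
        - (2 * Complex.I * k₀ - W x) * p₂ x - 2 * deriv p₂ x = 0 := by
    intro x
    linear_combination key x - (x : ℂ) * hB x
  refine ⟨fun x => by linear_combination hB x, fun x => by linear_combination hA x, fun x => ?_⟩
  have hder := exp_mul_deriv2 k₀ hp₂ x
  rw [hder.1, hder.2]
  linear_combination Complex.exp (Complex.I * k₀ * (x:ℝ)) * hB x
    - Complex.exp (Complex.I * k₀ * (x:ℝ)) * p₂ x * k₀ ^ 2 * Complex.I_sq
end

section
/- Let γ > 0, let W, V : ℝ → ℂ be continuous and γ-periodic, and let λ ∈ ℝ. Suppose k₁, k₂ ∈ ℂ satisfy (k₁ − k₂)·γ/(2π) ∉ ℤ, and p₁, p₂ : ℝ → ℂ are twice continuously differentiable, γ-periodic, and not identically zero, such that ψ_j(x) := e^{i k_j x} p_j(x) satisfies −ψ_j''(x) + W(x)ψ_j'(x) + V(x)ψ_j(x) = λψ_j(x) for all x ∈ ℝ and j = 1, 2. Then exp(i(k₁ + k₂)γ) = exp(∫₀^γ W(s) ds); equivalently, k₁ + k₂ ≡ (1/i)·W̄ modulo (2π/γ)ℤ, where W̄ := (1/γ)∫₀^γ W(s)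 ds. -/
open Complex

lemma psi_contDiff (k : ℂ) {p : ℝ → ℂ} (hp : ContDiff ℝ 2 p) :
    ContDiff ℝ 2 (fun y : ℝ => Complex.exp (Complex.I * k * y) * p y) := by
  refine ContDiff.mul ?_ hp
  exact (contDiff_const.mul (Complex.ofRealCLM.contDiff)).cexp

lemma psi_bloch (γ : ℝ) (k : ℂ) {p : ℝ → ℂ} (hper : ∀ x, p (x + γ) = p x) (x : ℝ) :
    Complex.exp (Complex.I * k * ((x + γ : ℝ) : ℂ)) * p (x + γ)
      = Complex.exp (Complex.I * k * γ) * (Complex.exp (Complex.I * k * x) * p x) := by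
  rw [hper]
  push_cast
  rw [mul_add, Complex.exp_add]
  ring

lemma two_smooth_facts {f : ℝ → ℂ} (hf : ContDiff ℝ 2 f) :
    Differentiable ℝ f ∧ Differentiable ℝ (deriv f) := by
  have h : ContDiff ℝ ((1 : ℕ) + 1) f := by exact_mod_cast hf
  rw [contDiff_succ_iff_deriv] at h
  exact ⟨h.1, h.2.2.differentiable (by simp)⟩

lemma psi_bloch_deriv (γ : ℝ) (k : ℂ) {f : ℝ → ℂ} (hf : Differentiable ℝ f)
    (hB : ∀ x, f (x + γ) = Complex.exp (Complex.I * k * γ) * f x) (x : ℝ) :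
    deriv f (x + γ) = Complex.exp (Complex.I * k * γ) * deriv f x := by
  rw [← deriv_comp_add_const]
  have : (fun y => f (y + γ)) = fun y => Complex.exp (Complex.I * k * γ) * f y :=
    funext fun y => hB y
  rw [this, deriv_const_mul _ (hf x)]

lemma lip_aux {Wt U : ℂ} {C : ℝ} (hC : ‖Wt‖ + ‖U‖ ≤ C) (y z : ℂ × ℂ) :
    dist ((y.2, Wt * y.2 + U * y.1) : ℂ × ℂ) ((z.2, Wt * z.2 + U * z.1) : ℂ × ℂ)
      ≤ (1 + C) * dist y z := by
  have h1 : dist y.1 z.1 ≤ dist y z := by rw [Prod.dist_eq]; exact le_max_left _ _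
  have h2 : dist y.2 z.2 ≤ dist y z := by rw [Prod.dist_eq]; exact le_max_right _ _
  have hW : (0:ℝ) ≤ ‖Wt‖ := norm_nonneg _
  have hU : (0:ℝ) ≤ ‖U‖ := norm_nonneg _
  have hd : (0:ℝ) ≤ dist y z := dist_nonneg
  rw [Prod.dist_eq]
  apply max_le
  · simp only
    nlinarith
  · simp only
    rw [dist_eq_norm]
    have e : Wt * y.2 + U * y.1 - (Wt * z.2 + U * z.1)
        = Wt * (y.2 - z.2) + U * (y.1 - z.1) := by ring
    rw [e]
    calc ‖Wt * (y.2 - z.2) + U * (y.1 - z.1)‖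
        ≤ ‖Wt‖ * ‖y.2 - z.2‖ + ‖U‖ * ‖y.1 - z.1‖ := by
          refine (norm_add_le _ _).trans ?_
          rw [norm_mul, norm_mul]
      _ ≤ (1 + C) * dist y z := by
          rw [← dist_eq_norm, ← dist_eq_norm]
          nlinarith [dist_nonneg (x := y.1) (y := z.1), dist_nonneg (x := y.2) (y := z.2)]

lemma periodic_bound {F : ℝ → ℝ} (γ : ℝ) (hγ : 0 < γ) (hF : Continuous F)
    (hper : ∀ x, F (x + γ) = F x) : ∃ C : ℝ, ∀ x, F x ≤ C := by
  obtain ⟨z, hz, hzmax⟩ := (isCompact_Icc (a := (0:ℝ)) (b := γ)).exists_isMaxOn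
    (Set.nonempty_Icc.2 hγ.le) hF.continuousOn
  refine ⟨F z, fun x => ?_⟩
  obtain ⟨y, hy, hxy⟩ := (Function.Periodic.exists_mem_Ico₀ (f := F) hper hγ x)
  rw [hxy]
  exact hzmax ⟨hy.1, hy.2.le⟩

lemma solution_pack (γ : ℝ) (W V : ℝ → ℂ) (lam : ℝ) (k : ℂ) (p : ℝ → ℂ)
    (hp : ContDiff ℝ 2 p) (hper : ∀ x, p (x + γ) = p x)
    (heq : ∀ x : ℝ, -(deriv (deriv (fun y : ℝ => Complex.exp (Complex.I * k * y) * p y)) x)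
      + W x * deriv (fun y : ℝ => Complex.exp (Complex.I * k * y) * p y) x
      + V x * (Complex.exp (Complex.I * k * x) * p x)
      = (lam : ℂ) * (Complex.exp (Complex.I * k * x) * p x)) :
    ∃ ψ : ℝ → ℂ, (∀ x, ψ x = Complex.exp (Complex.I * k * x) * p x) ∧
      Differentiable ℝ ψ ∧ Differentiable ℝ (deriv ψ) ∧
      (∀ x, ψ (x + γ) = Complex.exp (Complex.I * k * γ) * ψ x) ∧
      (∀ x, deriv ψ (x + γ) = Complex.exp (Complex.I * k * γ) * deriv ψ x) ∧
      (∀ x, deriv (deriv ψ) x = W x * deriv ψ x + (V x - (lam : ℂ)) * ψ x) := by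
  refine ⟨fun y : ℝ => Complex.exp (Complex.I * k * y) * p y, fun x => rfl, ?_, ?_, ?_, ?_, ?_⟩
  · exact (two_smooth_facts (psi_contDiff k hp)).1
  · exact (two_smooth_facts (psi_contDiff k hp)).2
  · exact fun x => psi_bloch γ k hper x
  · exact psi_bloch_deriv γ k (two_smooth_facts (psi_contDiff k hp)).1
      (fun x => psi_bloch γ k hper x)
  · intro x
    linear_combination -(heq x)

/-- for two Bloch solutions with incongruent quasimomenta corresponding
to the same `λ`, one has `exp(i(k₁+k₂)γ) = exp(∫₀^γ W)`. -/
theorem quasimomenta_sum_eq_mean_W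
    (γ : ℝ) (hγ : 0 < γ) (W V : ℝ → ℂ)
    (hWcont : Continuous W) (hVcont : Continuous V)
    (hWper : ∀ x : ℝ, W (x + γ) = W x) (hVper : ∀ x : ℝ, V (x + γ) = V x)
    (lam : ℝ) (k₁ k₂ : ℂ)
    (hk : ¬ ∃ m : ℤ, (k₁ - k₂) * (γ : ℂ) / (2 * (Real.pi : ℂ)) = (m : ℂ))
    (p₁ p₂ : ℝ → ℂ) (hp₁ : ContDiff ℝ 2 p₁) (hp₂ : ContDiff ℝ 2 p₂)
    (hp₁per : ∀ x : ℝ, p₁ (x + γ) = p₁ x) (hp₂per : ∀ x : ℝ, p₂ (x + γ) = p₂ x)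
    (hp₁ne : ∃ x : ℝ, p₁ x ≠ 0) (hp₂ne : ∃ x : ℝ, p₂ x ≠ 0)
    (heq₁ : ∀ x : ℝ,
      -(deriv (deriv (fun y : ℝ => Complex.exp (Complex.I * k₁ * y) * p₁ y)) x)
      + W x * deriv (fun y : ℝ => Complex.exp (Complex.I * k₁ * y) * p₁ y) x
      + V x * (Complex.exp (Complex.I * k₁ * x) * p₁ x)
      = (lam : ℂ) * (Complex.exp (Complex.I * k₁ * x) * p₁ x))
    (heq₂ : ∀ x : ℝ,
      -(deriv (deriv (fun y : ℝ => Complex.exp (Complex.I * k₂ * y) * p₂ y)) x)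
      + W x * deriv (fun y : ℝ => Complex.exp (Complex.I * k₂ * y) * p₂ y) x
      + V x * (Complex.exp (Complex.I * k₂ * x) * p₂ x)
      = (lam : ℂ) * (Complex.exp (Complex.I * k₂ * x) * p₂ x)) :
    Complex.exp (Complex.I * (k₁ + k₂) * (γ : ℂ))
      = Complex.exp (∫ s in (0:ℝ)..γ, W s) := by
  obtain ⟨ψ₁, hv₁, hψ₁d, hdψ₁d, hB₁, hB₁', hsec₁⟩ :=
    solution_pack γ W V lam k₁ p₁ hp₁ hp₁per heq₁
  obtain ⟨ψ₂, hv₂, hψ₂d, hdψ₂d, hB₂, hB₂', hsec₂⟩ :=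
    solution_pack γ W V lam k₂ p₂ hp₂ hp₂per heq₂
  set w : ℝ → ℂ := fun x => ψ₁ x * deriv ψ₂ x - deriv ψ₁ x * ψ₂ x with hwdef
  have hw : ∀ x, HasDerivAt w (W x * w x) x := by
    intro x
    have h := ((hψ₁d x).hasDerivAt.mul (hdψ₂d x).hasDerivAt).sub
      ((hdψ₁d x).hasDerivAt.mul (hψ₂d x).hasDerivAt)
    refine h.congr_deriv ?_
    simp only [hwdef]
    rw [hsec₁ x, hsec₂ x]
    ring
  have hInt : ∀ x : ℝ, HasDerivAt (fun t => ∫ s in (0:ℝ)..t, W s) (W x) x := by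
    intro x
    exact intervalIntegral.integral_hasDerivAt_right (hWcont.intervalIntegrable _ _)
      (hWcont.stronglyMeasurableAtFilter _ _) hWcont.continuousAt
  have hg : ∀ x, HasDerivAt (fun t => w t * Complex.exp (-∫ s in (0:ℝ)..t, W s)) 0 x := by
    intro x
    have hE : HasDerivAt (fun t => Complex.exp (-∫ s in (0:ℝ)..t, W s))
        (Complex.exp (-∫ s in (0:ℝ)..x, W s) * -W x) x := ((hInt x).neg).cexp
    have h := (hw x).mul hE
    refine h.congr_deriv ?_
    ring
  have hconst : ∀ x : ℝ, w x * Complex.exp (-∫ s in (0:ℝ)..x, W s) = w 0 := by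
    intro x
    have h := is_const_of_deriv_eq_zero
      (f := fun t => w t * Complex.exp (-∫ s in (0:ℝ)..t, W s))
      (fun y => (hg y).differentiableAt) (fun y => (hg y).deriv) x 0
    simpa using h
  have hwx : ∀ x, w x = w 0 * Complex.exp (∫ s in (0:ℝ)..x, W s) := by
    intro x
    have h := hconst x
    rw [Complex.exp_neg] at h
    rw [← h, mul_assoc, inv_mul_cancel₀ (Complex.exp_ne_zero _), mul_one]
  have he : Complex.exp (Complex.I * k₁ * γ) * Complex.exp (Complex.I * k₂ * γ)
      = Complex.exp (Complex.I * (k₁ + k₂) * γ) := by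
    rw [← Complex.exp_add]; ring_nf
  have hwB : ∀ x, w (x + γ) = Complex.exp (Complex.I * (k₁ + k₂) * γ) * w x := by
    intro x
    simp only [hwdef]
    rw [hB₁ x, hB₂ x, hB₁' x, hB₂' x, ← he]
    ring
  by_cases h0 : w 0 = 0
  · -- Wronskian vanishes: derive a contradiction with `hk`.
    exfalso
    have hw0 : ∀ x, w x = 0 := fun x => by rw [hwx x, h0, zero_mul]
    obtain ⟨x₀, hx₀⟩ := hp₁ne
    have hψ₁x₀ : ψ₁ x₀ ≠ 0 := by
      rw [hv₁ x₀]; exact mul_ne_zero (Complex.exp_ne_zero _) hx₀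
    set c : ℂ := ψ₂ x₀ / ψ₁ x₀ with hcdef
    have hc : c * ψ₁ x₀ = ψ₂ x₀ := div_mul_cancel₀ _ hψ₁x₀
    obtain ⟨C, hC⟩ := periodic_bound γ hγ (F := fun x => ‖W x‖ + ‖V x - (lam:ℂ)‖)
      (hWcont.norm.add ((hVcont.sub continuous_const).norm))
      (fun x => by simp only [hWper, hVper])
    have hC0 : (0:ℝ) ≤ C := le_trans (by positivity) (hC 0)
    set K : NNReal := ⟨1 + C, by linarith⟩ with hKdef
    set v : ℝ → ℂ × ℂ → ℂ × ℂ :=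
      fun t y => (y.2, W t * y.2 + (V t - (lam:ℂ)) * y.1) with hvdef
    have hlip : ∀ t, LipschitzWith K (v t) := by
      intro t
      apply LipschitzWith.of_dist_le_mul
      intro y z
      have hco : (K : ℝ) = 1 + C := rfl
      rw [hco]
      exact lip_aux (hC t) y z
    set φ : ℝ → ℂ := fun x => ψ₂ x - c * ψ₁ x with hφdef
    set dφ : ℝ → ℂ := fun x => deriv ψ₂ x - c * deriv ψ₁ x with hdφdef
    have hφ' : ∀ x, HasDerivAt φ (dφ x) x := fun x =>
      (hψ₂d x).hasDerivAt.sub ((hψ₁d x).hasDerivAt.const_mul c)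
    have hdφ' : ∀ x, HasDerivAt dφ (W x * dφ x + (V x - (lam:ℂ)) * φ x) x := by
      intro x
      have h := (hdψ₂d x).hasDerivAt.sub ((hdψ₁d x).hasDerivAt.const_mul c)
      refine h.congr_deriv ?_
      simp only [hφdef, hdφdef]
      rw [hsec₁ x, hsec₂ x]
      ring
    set u : ℝ → ℂ × ℂ := fun x => (φ x, dφ x) with hudef
    have hu : ∀ t, HasDerivAt u (v t (u t)) t := fun t => (hφ' t).prodMk (hdφ' t)
    have hux₀ : u x₀ = ((0:ℂ), (0:ℂ)) := by
      have hφ0 : φ x₀ = 0 := by simp only [hφdef]; rw [hc]; ring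
      have hdφ0 : dφ x₀ = 0 := by
        have h := hw0 x₀
        simp only [hwdef] at h
        simp only [hdφdef, hcdef]
        field_simp
        linear_combination h
      simp [hudef, hφ0, hdφ0]
    have hzero : ∀ t, x₀ ≤ t → φ t = 0 := by
      intro t ht
      have heqOn := ODE_solution_unique (v := v) (K := K) hlip
        (f := u) (g := fun _ => ((0:ℂ), (0:ℂ))) (a := x₀) (b := t)
        (fun s _ => (hu s).continuousAt.continuousWithinAt)
        (fun s _ => (hu s).hasDerivWithinAt)
        continuousOn_const
        (fun s _ => by
          have hz : HasDerivWithinAt (fun _ : ℝ => ((0:ℂ), (0:ℂ))) 0 (Set.Ici s) s :=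
            hasDerivWithinAt_const _ _ _
          refine hz.congr_deriv ?_
          simp [hvdef, Prod.ext_iff])
        hux₀
      have h := heqOn ⟨ht, le_refl t⟩
      have := congrArg Prod.fst h
      simpa [hudef] using this
    obtain ⟨x₁, hx₁⟩ := hp₂ne
    have hshift : ∀ n : ℕ, p₂ (x₁ + n * γ) = p₂ x₁ := by
      intro n
      induction n with
      | zero => simp
      | succ m ih =>
        have e : x₁ + ((m:ℝ) + 1) * γ = (x₁ + m * γ) + γ := by ring
        push_cast
        rw [e, hp₂per]
        exact ih
    obtain ⟨n, hn⟩ := exists_nat_ge ((x₀ - x₁) / γ)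
    have hx₀le : x₀ ≤ x₁ + n * γ := by
      rw [div_le_iff₀ hγ] at hn
      linarith
    have hψ₂pt : ψ₂ (x₁ + n * γ) ≠ 0 := by
      rw [hv₂]
      exact mul_ne_zero (Complex.exp_ne_zero _) (by rw [hshift n]; exact hx₁)
    have hcne : c ≠ 0 := by
      intro hc0
      have h := hzero _ hx₀le
      simp only [hφdef, hc0, zero_mul, sub_zero] at h
      exact hψ₂pt h
    have hφγ : φ (x₀ + γ) = 0 := hzero _ (by linarith)
    have hkey : Complex.exp (Complex.I * k₂ * γ) = Complex.exp (Complex.I * k₁ * γ) := by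
      have h := hφγ
      simp only [hφdef] at h
      rw [hB₁ x₀, hB₂ x₀, ← hc] at h
      have h2 : (Complex.exp (Complex.I * k₂ * γ) - Complex.exp (Complex.I * k₁ * γ))
          * (c * ψ₁ x₀) = 0 := by linear_combination h
      rcases mul_eq_zero.mp h2 with h3 | h3
      · exact sub_eq_zero.mp h3
      · exact absurd h3 (mul_ne_zero hcne hψ₁x₀)
    rw [Complex.exp_eq_exp_iff_exists_int] at hkey
    obtain ⟨n', hn'⟩ := hkey
    have h3 : (k₁ - k₂) * (γ:ℂ) = ((-n' : ℤ) : ℂ) * (2 * (Real.pi:ℂ)) := by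
      apply mul_left_cancel₀ Complex.I_ne_zero
      push_cast
      linear_combination -hn'
    have h2pi : (2 * (Real.pi:ℂ)) ≠ 0 :=
      mul_ne_zero two_ne_zero (Complex.ofReal_ne_zero.mpr Real.pi_ne_zero)
    exact hk ⟨-n', by rw [div_eq_iff h2pi]; exact h3⟩
  · have h1 : Complex.exp (Complex.I * (k₁ + k₂) * γ) * w 0
        = w 0 * Complex.exp (∫ s in (0:ℝ)..γ, W s) := by
      have ha := hwB 0
      rw [zero_add] at ha
      rw [← ha, hwx γ]
    have h2 := h1.trans (mul_comm _ _)
    exact mul_right_cancel₀ h0 h2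
end

section
/- Let γ > 0, let W, V : ℝ → ℂ be continuous and γ-periodic, and let λ ∈ ℝ. Suppose k₀ ∈ ℂ and p₁, p₂ : ℝ → ℂ are twice continuously differentiable and γ-periodic with p₂ not identically zero, such that ψ(x) := e^{i k₀ x}(p₁(x) + x·p₂(x)) satisfies −ψ''(x) + W(x)ψ'(x) + V(x)ψ(x) = λψ(x) for all x ∈ ℝ. Then exp(2i k₀ γ) = exp(∫₀^γ W(s) ds); equivalently, k₀ ≡ (1/(2i))·W̄ modulo (π/γ)ℤ, where W̄ := (1/γ)∫₀^γ W(s) ds. -/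
open Complex

/-- A continuous periodic function is bounded. -/
lemma periodic_norm_bound {f : ℝ → ℂ} {γ : ℝ} (hγ : 0 < γ) (hf : Continuous f)
    (hper : ∀ x, f (x + γ) = f x) : ∃ M : ℝ, ∀ x, ‖f x‖ ≤ M := by
  have hper' : Function.Periodic f γ := hper
  obtain ⟨M, hM⟩ := (isCompact_Icc (a := (0:ℝ)) (b := γ)).exists_bound_of_continuousOn
    hf.continuousOn
  refine ⟨M, fun x => ?_⟩
  obtain ⟨y, hy, hxy⟩ := hper'.exists_mem_Ico₀ hγ x
  rw [hxy]
  exact hM y (Set.Ico_subset_Icc_self hy)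

/-- Uniqueness (vanishing) for a second-order linear ODE written as a system. -/
lemma linode_zero (a b : ℝ → ℂ) (Ma Mb : ℝ) (ha : ∀ t, ‖a t‖ ≤ Ma) (hb : ∀ t, ‖b t‖ ≤ Mb)
    (h d : ℝ → ℂ) (hhd : ∀ t, HasDerivAt h (d t) t)
    (hdd : ∀ t, HasDerivAt d (a t * d t + b t * h t) t)
    (t₀ t₁ : ℝ) (ht : t₀ ≤ t₁) (h0 : h t₀ = 0) (d0 : d t₀ = 0) :
    h t₁ = 0 := by
  have hMa : 0 ≤ Ma := le_trans (norm_nonneg _) (ha t₀)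
  have hMb : 0 ≤ Mb := le_trans (norm_nonneg _) (hb t₀)
  set v : ℝ → ℂ × ℂ → ℂ × ℂ := fun t y => (y.2, a t * y.2 + b t * y.1) with hv
  set K : NNReal := Real.toNNReal (1 + Ma + Mb) with hKdef
  have hKcoe : (K : ℝ) = 1 + Ma + Mb := Real.coe_toNNReal _ (by linarith)
  have hlip : ∀ t, LipschitzOnWith K (v t) Set.univ := by
    intro t
    rw [lipschitzOnWith_univ]
    apply LipschitzWith.of_dist_le_mul
    intro y z
    have hd1 : dist y.1 z.1 ≤ dist y z := by rw [Prod.dist_eq]; exact le_max_left _ _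
    have hd2 : dist y.2 z.2 ≤ dist y z := by rw [Prod.dist_eq]; exact le_max_right _ _
    have hdn : (0:ℝ) ≤ dist y z := dist_nonneg
    rw [Prod.dist_eq]
    apply max_le
    · simp only [hv]
      calc dist y.2 z.2 ≤ dist y z := hd2
        _ ≤ (K:ℝ) * dist y z := by nlinarith [hKcoe]
    · simp only [hv]
      rw [dist_eq_norm]
      have hrw : (a t * y.2 + b t * y.1) - (a t * z.2 + b t * z.1)
          = a t * (y.2 - z.2) + b t * (y.1 - z.1) := by ring
      rw [hrw]
      have h1 : ‖a t * (y.2 - z.2) + b t * (y.1 - z.1)‖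
          ≤ ‖a t‖ * ‖y.2 - z.2‖ + ‖b t‖ * ‖y.1 - z.1‖ := by
        calc ‖a t * (y.2 - z.2) + b t * (y.1 - z.1)‖
            ≤ ‖a t * (y.2 - z.2)‖ + ‖b t * (y.1 - z.1)‖ := norm_add_le _ _
          _ = ‖a t‖ * ‖y.2 - z.2‖ + ‖b t‖ * ‖y.1 - z.1‖ := by rw [norm_mul, norm_mul]
      have h2 : ‖y.2 - z.2‖ ≤ dist y z := by rw [← dist_eq_norm]; exact hd2
      have h3 : ‖y.1 - z.1‖ ≤ dist y z := by rw [← dist_eq_norm]; exact hd1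
      have h4 : ‖a t‖ * ‖y.2 - z.2‖ ≤ Ma * dist y z :=
        mul_le_mul (ha t) h2 (norm_nonneg _) hMa
      have h5 : ‖b t‖ * ‖y.1 - z.1‖ ≤ Mb * dist y z :=
        mul_le_mul (hb t) h3 (norm_nonneg _) hMb
      calc ‖a t * (y.2 - z.2) + b t * (y.1 - z.1)‖
          ≤ Ma * dist y z + Mb * dist y z := by linarith
        _ ≤ (K:ℝ) * dist y z := by nlinarith [hKcoe]
  have hcf : Continuous fun t => (h t, d t) := by
    apply Continuous.prodMk
    · exact continuous_iff_continuousAt.mpr fun t => (hhd t).continuousAt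
    · exact continuous_iff_continuousAt.mpr fun t => (hdd t).continuousAt
  have key := ODE_solution_unique_of_mem_Icc_right (v := v) (s := fun _ => Set.univ) (a := t₀) (b := t₁) (f := fun t => (h t, d t)) (g := fun _ => ((0:ℂ),(0:ℂ)))
    (fun t _ => hlip t) hcf.continuousOn
    (fun t _ => by
      have := (hhd t).prodMk (hdd t)
      exact this.hasDerivWithinAt)
    (fun t _ => Set.mem_univ _)
    (continuousOn_const (c := ((0:ℂ), (0:ℂ))))
    (fun t _ => by
      have : v t ((0:ℂ), (0:ℂ)) = (0, 0) := by simp [hv]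
      rw [this]
      exact (hasDerivWithinAt_const _ _ _).congr_deriv (by rfl)
      )
    (fun t _ => Set.mem_univ _)
    (by simp [h0, d0])
  have := key ⟨ht, le_refl t₁⟩
  simpa using congrArg Prod.fst this

/-- for a solution of the form `e^{ik₀x}(p₁(x) + x p₂(x))` with
`p₂ ≢ 0`, one has `exp(2ik₀γ) = exp(∫₀^γ W)`. -/
theorem growth_form_quasimomentum_eq
    (γ : ℝ) (hγ : 0 < γ) (W V : ℝ → ℂ)
    (hWcont : Continuous W) (hVcont : Continuous V)
    (hWper : ∀ x : ℝ, W (x + γ) = W x) (hVper : ∀ x : ℝ, V (x + γ) = V x)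
    (lam : ℝ) (k₀ : ℂ) (p₁ p₂ : ℝ → ℂ)
    (hp₁ : ContDiff ℝ 2 p₁) (hp₂ : ContDiff ℝ 2 p₂)
    (hp₁per : ∀ x : ℝ, p₁ (x + γ) = p₁ x) (hp₂per : ∀ x : ℝ, p₂ (x + γ) = p₂ x)
    (hp₂ne : ∃ x : ℝ, p₂ x ≠ 0)
    (heq : ∀ x : ℝ,
      -(deriv (deriv (fun y : ℝ =>
          Complex.exp (Complex.I * k₀ * y) * (p₁ y + y * p₂ y))) x)
      + W x * deriv (fun y : ℝ =>
          Complex.exp (Complex.I * k₀ * y) * (p₁ y + y * p₂ y)) x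
      + V x * (Complex.exp (Complex.I * k₀ * x) * (p₁ x + x * p₂ x))
      = (lam : ℂ) * (Complex.exp (Complex.I * k₀ * x) * (p₁ x + x * p₂ x))) :
    Complex.exp (2 * Complex.I * k₀ * (γ : ℂ))
      = Complex.exp (∫ s in (0:ℝ)..γ, W s) := by
  -- basic differentiability facts
  have h2eq : (2 : WithTop ℕ∞) = 1 + 1 := by norm_num
  obtain ⟨hp₁d, -, hp₁c1⟩ := contDiff_succ_iff_deriv.mp (h2eq ▸ hp₁)
  obtain ⟨hp₂d, -, hp₂c1⟩ := contDiff_succ_iff_deriv.mp (h2eq ▸ hp₂)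
  have hq₁d : Differentiable ℝ (deriv p₁) := hp₁c1.differentiable one_ne_zero
  have hq₂d : Differentiable ℝ (deriv p₂) := hp₂c1.differentiable one_ne_zero
  -- the coercion ℝ → ℂ has derivative 1
  have hre : ∀ x : ℝ, HasDerivAt (fun y : ℝ => (y : ℂ)) 1 x := fun x => by
    simpa using (hasDerivAt_id x).ofReal_comp
  -- derivative of the exponential factor
  have hE : ∀ x : ℝ, HasDerivAt (fun y : ℝ => Complex.exp (Complex.I * k₀ * y))
      (Complex.exp (Complex.I * k₀ * x) * (Complex.I * k₀)) x := fun x => by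
    have h1 : HasDerivAt (fun y : ℝ => Complex.I * k₀ * (y : ℂ)) (Complex.I * k₀) x := by
      simpa using (hre x).const_mul (Complex.I * k₀)
    exact h1.cexp
  -- derivative of the polynomial-periodic factor
  have hP : ∀ x : ℝ, HasDerivAt (fun y : ℝ => p₁ y + (y : ℂ) * p₂ y)
      (deriv p₁ x + (1 * p₂ x + (x : ℂ) * deriv p₂ x)) x := fun x =>
    ((hp₁d x).hasDerivAt).add ((hre x).mul (hp₂d x).hasDerivAt)
  -- first derivative of ψ
  have hψ : ∀ x : ℝ, HasDerivAt (fun y : ℝ =>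
      Complex.exp (Complex.I * k₀ * y) * (p₁ y + y * p₂ y))
      (Complex.exp (Complex.I * k₀ * x) *
        (Complex.I * k₀ * (p₁ x + x * p₂ x)
          + (deriv p₁ x + p₂ x + x * deriv p₂ x))) x := fun x => by
    have := (hE x).fun_mul (hP x)
    exact this.congr_deriv (by ring)
  have hd1 : deriv (fun y : ℝ =>
      Complex.exp (Complex.I * k₀ * y) * (p₁ y + y * p₂ y))
      = fun x : ℝ => Complex.exp (Complex.I * k₀ * x) *
        (Complex.I * k₀ * (p₁ x + x * p₂ x)
          + (deriv p₁ x + p₂ x + x * deriv p₂ x)) :=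
    funext fun x => (hψ x).deriv
  -- second derivative of ψ
  have hinner : ∀ x : ℝ, HasDerivAt (fun y : ℝ =>
      Complex.I * k₀ * (p₁ y + y * p₂ y) + (deriv p₁ y + p₂ y + y * deriv p₂ y))
      (Complex.I * k₀ * (deriv p₁ x + (1 * p₂ x + (x:ℂ) * deriv p₂ x))
        + (deriv (deriv p₁) x + deriv p₂ x + (1 * deriv p₂ x + (x:ℂ) * deriv (deriv p₂) x))) x :=
    fun x =>
    ((hP x).const_mul (Complex.I * k₀)).add
      ((((hq₁d x).hasDerivAt).add ((hp₂d x).hasDerivAt)).add ((hre x).mul (hq₂d x).hasDerivAt))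
  have hd2 : ∀ x : ℝ, deriv (fun x : ℝ => Complex.exp (Complex.I * k₀ * x) *
        (Complex.I * k₀ * (p₁ x + x * p₂ x)
          + (deriv p₁ x + p₂ x + x * deriv p₂ x))) x
      = Complex.exp (Complex.I * k₀ * x) * (Complex.I * k₀) *
          (Complex.I * k₀ * (p₁ x + x * p₂ x) + (deriv p₁ x + p₂ x + x * deriv p₂ x))
        + Complex.exp (Complex.I * k₀ * x) *
          (Complex.I * k₀ * (deriv p₁ x + (1 * p₂ x + (x:ℂ) * deriv p₂ x))
            + (deriv (deriv p₁) x + deriv p₂ x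
              + (1 * deriv p₂ x + (x:ℂ) * deriv (deriv p₂) x))) := fun x =>
    ((hE x).mul (hinner x)).deriv
  -- the key pointwise identity A(x) + x·B(x) = 0
  have hAB : ∀ x : ℝ,
      (k₀^2 * p₁ x - 2*Complex.I*k₀*(deriv p₁ x + p₂ x)
        - (deriv (deriv p₁) x + 2 * deriv p₂ x)
        + W x * (Complex.I*k₀*p₁ x + deriv p₁ x + p₂ x) + (V x - lam) * p₁ x)
      + (x:ℂ) * (k₀^2 * p₂ x - 2*Complex.I*k₀*deriv p₂ x - deriv (deriv p₂) x
        + W x * (Complex.I*k₀*p₂ x + deriv p₂ x) + (V x - lam) * p₂ x) = 0 := by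
    intro x
    have h := heq x
    rw [hd1] at h
    rw [hd2 x] at h
    have hEne : Complex.exp (Complex.I * k₀ * x) ≠ 0 := Complex.exp_ne_zero _
    apply mul_left_cancel₀ hEne
    rw [mul_zero]
    have hI : Complex.I * Complex.I = -1 := Complex.I_mul_I
    linear_combination h + (p₁ x + (x:ℂ) * p₂ x) * Complex.exp (Complex.I * k₀ * x) * k₀^2 * hI
  -- periodicity of derivatives
  have hperdiff : ∀ (f : ℝ → ℂ), (∀ x, f (x + γ) = f x) →
      ∀ x, deriv f (x + γ) = deriv f x := by
    intro f hf x
    have hfun : (fun y => f (y + γ)) = f := funext hf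
    calc deriv f (x + γ) = deriv (fun y => f (y + γ)) x := (deriv_comp_add_const f γ x).symm
      _ = deriv f x := by rw [hfun]
  have hq₁per := hperdiff p₁ hp₁per
  have hq₂per := hperdiff p₂ hp₂per
  have hr₁per := hperdiff (deriv p₁) hq₁per
  have hr₂per := hperdiff (deriv p₂) hq₂per
  -- split into the two periodic coefficients
  have hB : ∀ x : ℝ,
      k₀^2 * p₂ x - 2*Complex.I*k₀*deriv p₂ x - deriv (deriv p₂) x
        + W x * (Complex.I*k₀*p₂ x + deriv p₂ x) + (V x - lam) * p₂ x = 0 := by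
    intro x
    have h1 := hAB x
    have h2 := hAB (x + γ)
    simp only [hWper, hVper, hp₁per, hp₂per, hq₁per, hq₂per, hr₁per, hr₂per] at h2
    push_cast at h2
    have hγne : (γ : ℂ) ≠ 0 := Complex.ofReal_ne_zero.mpr hγ.ne'
    have h3 : (γ:ℂ) * (k₀^2 * p₂ x - 2*Complex.I*k₀*deriv p₂ x - deriv (deriv p₂) x
        + W x * (Complex.I*k₀*p₂ x + deriv p₂ x) + (V x - lam) * p₂ x) = 0 := by
      linear_combination h2 - h1
    exact (mul_eq_zero.mp h3).resolve_left hγne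
  have hA : ∀ x : ℝ,
      k₀^2 * p₁ x - 2*Complex.I*k₀*(deriv p₁ x + p₂ x)
        - (deriv (deriv p₁) x + 2 * deriv p₂ x)
        + W x * (Complex.I*k₀*p₁ x + deriv p₁ x + p₂ x) + (V x - lam) * p₁ x = 0 := by
    intro x
    linear_combination hAB x - (x:ℂ) * hB x
  -- the modified Wronskian z
  set z : ℝ → ℂ := fun x => p₂ x * deriv p₁ x - p₁ x * deriv p₂ x + p₂ x * p₂ x with hzdef
  have hzd : ∀ x : ℝ, HasDerivAt z ((W x - 2*Complex.I*k₀) * z x) x := by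
    intro x
    have h := (((hp₂d x).hasDerivAt.fun_mul (hq₁d x).hasDerivAt).fun_sub
      ((hp₁d x).hasDerivAt.fun_mul (hq₂d x).hasDerivAt)).fun_add
      ((hp₂d x).hasDerivAt.fun_mul (hp₂d x).hasDerivAt)
    refine h.congr_deriv ?_
    symm
    simp only [hzdef]
    linear_combination p₂ x * hA x - p₁ x * hB x
  -- integrating factor
  set G : ℝ → ℂ := fun u => ∫ s in (0:ℝ)..u, (W s - 2*Complex.I*k₀) with hGdef
  have hGd : ∀ x : ℝ, HasDerivAt G (W x - 2*Complex.I*k₀) x := fun x =>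
    ((hWcont.sub continuous_const).integral_hasStrictDerivAt 0 x).hasDerivAt
  set F : ℝ → ℂ := fun x => z x * Complex.exp (-G x) with hFdef
  have hFd : ∀ x : ℝ, HasDerivAt F 0 x := by
    intro x
    have h := (hzd x).fun_mul ((hGd x).neg.cexp)
    exact h.congr_deriv (by ring)
  have hFc : ∀ x y : ℝ, F x = F y :=
    is_const_of_deriv_eq_zero (fun x => (hFd x).differentiableAt) (fun x => (hFd x).deriv)
  have hG0 : G 0 = 0 := intervalIntegral.integral_same
  have hkey : ∀ x : ℝ, z x * Complex.exp (-G x) = z 0 := by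
    intro x
    have h := hFc x 0
    simp only [hFdef] at h
    rw [hG0] at h
    simpa using h
  have hzper : z γ = z 0 := by
    have : z (0 + γ) = z 0 := by
      simp only [hzdef, hp₁per, hp₂per, hq₁per, hq₂per]
    simpa using this
  by_cases hz0 : z 0 = 0
  · -- degenerate case: z ≡ 0, leads to a contradiction with p₂ ≢ 0
    exfalso
    have hzzero : ∀ x : ℝ, z x = 0 := by
      intro x
      have h := hkey x
      rw [hz0] at h
      exact (mul_eq_zero.mp h).resolve_right (Complex.exp_ne_zero _)
    obtain ⟨x₀, hx₀⟩ := hp₂ne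
    -- bounds on the coefficients
    obtain ⟨MW, hMW⟩ := periodic_norm_bound hγ hWcont hWper
    obtain ⟨MV, hMV⟩ := periodic_norm_bound hγ hVcont hVper
    set a : ℝ → ℂ := fun t => W t - 2*Complex.I*k₀ with hadef
    set b : ℝ → ℂ := fun t => k₀^2 + Complex.I*k₀*W t + ((V t : ℂ) - (lam:ℂ)) with hbdef
    have hMa : ∀ t, ‖a t‖ ≤ MW + ‖2*Complex.I*k₀‖ := by
      intro t
      calc ‖W t - 2*Complex.I*k₀‖ ≤ ‖W t‖ + ‖2*Complex.I*k₀‖ := norm_sub_le _ _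
        _ ≤ MW + ‖2*Complex.I*k₀‖ := by have := hMW t; linarith
    have hMb : ∀ t, ‖b t‖ ≤ ‖k₀^2‖ + ‖Complex.I*k₀‖ * MW + (MV + ‖(lam:ℂ)‖) := by
      intro t
      have h1 : ‖b t‖ ≤ ‖k₀^2 + Complex.I*k₀*W t‖ + ‖(V t : ℂ) - (lam:ℂ)‖ := norm_add_le _ _
      have h2 : ‖k₀^2 + Complex.I*k₀*W t‖ ≤ ‖k₀^2‖ + ‖Complex.I*k₀‖ * ‖W t‖ := by
        calc ‖k₀^2 + Complex.I*k₀*W t‖ ≤ ‖k₀^2‖ + ‖Complex.I*k₀*W t‖ := norm_add_le _ _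
          _ = ‖k₀^2‖ + ‖Complex.I*k₀‖ * ‖W t‖ := by rw [norm_mul]
      have h3 : ‖Complex.I*k₀‖ * ‖W t‖ ≤ ‖Complex.I*k₀‖ * MW :=
        mul_le_mul_of_nonneg_left (hMW t) (norm_nonneg _)
      have h4 : ‖(V t : ℂ) - (lam:ℂ)‖ ≤ ‖V t‖ + ‖(lam:ℂ)‖ := norm_sub_le _ _
      have h5 := hMV t
      linarith
    -- the auxiliary solution h₀ and its derivative d₀
    have hβ : ∀ t : ℝ, HasDerivAt (fun x : ℝ => p₁ x₀ + ((x₀:ℂ) - (x:ℂ)) * p₂ x₀)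
        (-p₂ x₀) t := by
      intro t
      have h1 : HasDerivAt (fun x : ℝ => ((x₀:ℂ) - (x:ℂ))) (-1) t := by
        simpa using (hasDerivAt_const t (x₀:ℂ)).fun_sub (hre t)
      simpa using (h1.mul_const (p₂ x₀)).const_add (p₁ x₀)
    have hhd : ∀ t : ℝ, HasDerivAt
        (fun x : ℝ => p₂ x₀ * p₁ x - (p₁ x₀ + ((x₀:ℂ) - x) * p₂ x₀) * p₂ x)
        (p₂ x₀ * deriv p₁ t + p₂ x₀ * p₂ t
          - (p₁ x₀ + ((x₀:ℂ) - t) * p₂ x₀) * deriv p₂ t) t := by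
      intro t
      have h := (((hp₁d t).hasDerivAt).const_mul (p₂ x₀)).fun_sub
        ((hβ t).fun_mul (hp₂d t).hasDerivAt)
      exact h.congr_deriv (by ring)
    have hdd : ∀ t : ℝ, HasDerivAt
        (fun x : ℝ => p₂ x₀ * deriv p₁ x + p₂ x₀ * p₂ x
          - (p₁ x₀ + ((x₀:ℂ) - x) * p₂ x₀) * deriv p₂ x)
        (a t * (p₂ x₀ * deriv p₁ t + p₂ x₀ * p₂ t
            - (p₁ x₀ + ((x₀:ℂ) - t) * p₂ x₀) * deriv p₂ t)
          + b t * (p₂ x₀ * p₁ t - (p₁ x₀ + ((x₀:ℂ) - t) * p₂ x₀) * p₂ t)) t := by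
      intro t
      have h := ((((hq₁d t).hasDerivAt).const_mul (p₂ x₀)).fun_add
        (((hp₂d t).hasDerivAt).const_mul (p₂ x₀))).fun_sub
        ((hβ t).fun_mul (hq₂d t).hasDerivAt)
      refine h.congr_deriv ?_
      symm
      simp only [hadef, hbdef]
      linear_combination (p₂ x₀) * hA t - (p₁ x₀ + ((x₀:ℂ) - t) * p₂ x₀) * hB t
    have h00 : p₂ x₀ * p₁ x₀ - (p₁ x₀ + ((x₀:ℂ) - x₀) * p₂ x₀) * p₂ x₀ = 0 := by ring
    have d00 : p₂ x₀ * deriv p₁ x₀ + p₂ x₀ * p₂ x₀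
        - (p₁ x₀ + ((x₀:ℂ) - x₀) * p₂ x₀) * deriv p₂ x₀ = 0 := by
      have hzx := hzzero x₀
      simp only [hzdef] at hzx
      linear_combination hzx
    have hz1 := linode_zero a b (MW + ‖2*Complex.I*k₀‖)
      (‖k₀^2‖ + ‖Complex.I*k₀‖ * MW + (MV + ‖(lam:ℂ)‖)) hMa hMb
      (fun x : ℝ => p₂ x₀ * p₁ x - (p₁ x₀ + ((x₀:ℂ) - x) * p₂ x₀) * p₂ x)
      (fun x : ℝ => p₂ x₀ * deriv p₁ x + p₂ x₀ * p₂ x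
        - (p₁ x₀ + ((x₀:ℂ) - x) * p₂ x₀) * deriv p₂ x)
      hhd hdd x₀ (x₀ + γ) (by linarith) h00 d00
    rw [hp₁per, hp₂per] at hz1
    push_cast at hz1
    have hcontra : (γ:ℂ) * (p₂ x₀ * p₂ x₀) = 0 := by linear_combination hz1
    have hγne : (γ : ℂ) ≠ 0 := Complex.ofReal_ne_zero.mpr hγ.ne'
    have := (mul_eq_zero.mp hcontra).resolve_left hγne
    exact hx₀ (mul_self_eq_zero.mp this)
  · -- nondegenerate case
    have h := hkey γ
    rw [hzper] at h
    have hexp1 : Complex.exp (-G γ) = 1 := by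
      have := mul_left_cancel₀ hz0 (h.trans (mul_one (z 0)).symm)
      exact this
    have hexp2 : Complex.exp (G γ) = 1 := by
      rw [Complex.exp_neg] at hexp1
      exact inv_eq_one.mp hexp1
    have hGγ : G γ = (∫ s in (0:ℝ)..γ, W s) - (γ:ℂ) * (2*Complex.I*k₀) := by
      simp only [hGdef]
      rw [intervalIntegral.integral_sub (hWcont.intervalIntegrable _ _)
        (intervalIntegrable_const)]
      rw [intervalIntegral.integral_const]
      simp [Complex.real_smul]
    calc Complex.exp (2 * Complex.I * k₀ * (γ:ℂ))
        = Complex.exp (2 * Complex.I * k₀ * (γ:ℂ)) * Complex.exp (G γ) := by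
          rw [hexp2, mul_one]
      _ = Complex.exp (2 * Complex.I * k₀ * (γ:ℂ) + G γ) := (Complex.exp_add _ _).symm
      _ = Complex.exp (∫ s in (0:ℝ)..γ, W s) := by rw [hGγ]; congr 1; ring
end

section
/- Let γ > 0, let V : ℝ → ℝ be continuous and γ-periodic, and let λ ∈ ℝ. If ψ : ℝ → ℂ is twice continuously differentiable, bounded on ℝ, and satisfies −ψ''(x) + V(x)ψ(x) = λψ(x) for all x ∈ ℝ, then there exist real numbers k₁, k₂ ∈ ℝ and twice continuously differentiable γ-periodic functions p₁, p₂ : ℝ → ℂ such that ψ(x) = e^{i k₁ x} p₁(x) + e^{i k₂ x} p₂(x) for all x ∈ ℝ. That is, every bounded classical solution is a Bloch solution or a linear combination of two Bloch solutions with real quasimomenta. -/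
open Complex

/-- Solution predicate for `ψ'' = (V - lam) ψ`. -/
def BlochAux.Sol (V : ℝ → ℝ) (lam : ℝ) (f : ℝ → ℂ) : Prop :=
  ContDiff ℝ 2 f ∧ ∀ x, deriv (deriv f) x = ((V x : ℂ) - lam) * f x

namespace BlochAux

variable {V : ℝ → ℝ} {lam : ℝ} {γ : ℝ}

lemma Sol.diff {f : ℝ → ℂ} (h : Sol V lam f) : Differentiable ℝ f :=
  h.1.differentiable (by norm_num)

lemma Sol.diff_deriv {f : ℝ → ℂ} (h : Sol V lam f) : Differentiable ℝ (deriv f) := by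
  have h2 : ContDiff ℝ ((1 : ℕ∞) + 1) f := by
    have := h.1; norm_num at this ⊢; exact_mod_cast this
  have := (contDiff_succ_iff_deriv.mp h2).2.2
  exact this.differentiable (by norm_num)

lemma Sol.shift (hVper : ∀ x : ℝ, V (x + γ) = V x) {f : ℝ → ℂ} (h : Sol V lam f) :
    Sol V lam (fun x => f (x + γ)) := by
  refine ⟨h.1.comp (contDiff_id.add contDiff_const), fun x => ?_⟩
  have h1 : deriv (fun x => f (x + γ)) = fun x => deriv f (x + γ) := by
    funext y; exact deriv_comp_add_const f γ y
  rw [h1]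
  rw [deriv_comp_add_const (deriv f) γ x, h.2 (x + γ), hVper x]

lemma Sol.smul (t : ℂ) {f : ℝ → ℂ} (h : Sol V lam f) : Sol V lam (fun x => t * f x) := by
  refine ⟨h.1.const_smul t, fun x => ?_⟩
  have h1 : deriv (fun x => t * f x) = fun x => t * deriv f x := by
    funext y; exact deriv_const_mul t (h.diff y)
  rw [h1, deriv_const_mul t (h.diff_deriv x), h.2 x]; ring

lemma Sol.sub {f g : ℝ → ℂ} (hf : Sol V lam f) (hg : Sol V lam g) :
    Sol V lam (fun x => f x - g x) := by
  refine ⟨hf.1.sub hg.1, fun x => ?_⟩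
  have h1 : deriv (fun x => f x - g x) = fun x => deriv f x - deriv g x := by
    funext y; exact deriv_sub (hf.diff y) (hg.diff y)
  rw [h1, deriv_fun_sub (hf.diff_deriv x) (hg.diff_deriv x), hf.2 x, hg.2 x]; ring

lemma Sol.zero : Sol V lam (fun _ => (0 : ℂ)) := by
  refine ⟨contDiff_const, fun x => ?_⟩
  simp [deriv_const']

/-- Uniqueness of solutions with given initial data at `0`, assuming the potential is
globally bounded. -/
lemma Sol.unique {C : ℝ} (hC : ∀ x : ℝ, ‖((V x : ℂ) - lam)‖ ≤ C)
    {f g : ℝ → ℂ} (hf : Sol V lam f) (hg : Sol V lam g)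
    (h0 : f 0 = g 0) (h0' : deriv f 0 = deriv g 0) : ∀ x, f x = g x := by
  set v : ℝ → ℂ × ℂ → ℂ × ℂ := fun t p => (p.2, ((V t : ℂ) - lam) * p.1) with hv
  have hC0 : 0 ≤ C := le_trans (norm_nonneg _) (hC 0)
  set K : NNReal := ⟨max 1 C, le_trans zero_le_one (le_max_left _ _)⟩ with hK
  have hlip : ∀ t, LipschitzWith K (v t) := by
    intro t
    rw [lipschitzWith_iff_dist_le_mul]
    intro p q
    simp only [hv, dist_eq_norm, Prod.norm_def, Prod.fst_sub, Prod.snd_sub]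
    rw [max_le_iff]
    constructor
    · calc ‖p.2 - q.2‖ ≤ 1 * max ‖p.1 - q.1‖ ‖p.2 - q.2‖ := by
            rw [one_mul]; exact le_max_right _ _
        _ ≤ K * max ‖p.1 - q.1‖ ‖p.2 - q.2‖ := by
            apply mul_le_mul_of_nonneg_right (le_max_left _ _)
            exact le_trans (norm_nonneg _) (le_max_left _ _)
    · calc ‖((V t : ℂ) - lam) * p.1 - ((V t : ℂ) - lam) * q.1‖
          = ‖((V t : ℂ) - lam)‖ * ‖p.1 - q.1‖ := by rw [← norm_mul]; ring_nf
        _ ≤ C * max ‖p.1 - q.1‖ ‖p.2 - q.2‖ := by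
            apply mul_le_mul (hC t) (le_max_left _ _) (norm_nonneg _) hC0
        _ ≤ K * max ‖p.1 - q.1‖ ‖p.2 - q.2‖ := by
            apply mul_le_mul_of_nonneg_right (le_max_right _ _)
            exact le_trans (norm_nonneg _) (le_max_left _ _)
  intro x
  set u : ℝ → ℂ × ℂ := fun y => (f y, deriv f y) with hu
  set w : ℝ → ℂ × ℂ := fun y => (g y, deriv g y) with hw
  have hud : ∀ t : ℝ, HasDerivAt u (v t (u t)) t := by
    intro t
    exact HasDerivAt.prodMk ((hf.diff t).hasDerivAt) (by rw [← hf.2 t]; exact (hf.diff_deriv t).hasDerivAt)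
  have hwd : ∀ t : ℝ, HasDerivAt w (v t (w t)) t := by
    intro t
    exact HasDerivAt.prodMk ((hg.diff t).hasDerivAt) (by rw [← hg.2 t]; exact (hg.diff_deriv t).hasDerivAt)
  have key : u x = w x := by
    have hmem : (0 : ℝ) ∈ Set.Ioo (-(|x| + 1)) (|x| + 1) := by
      constructor <;> [nlinarith [abs_nonneg x]; nlinarith [abs_nonneg x]]
    have := ODE_solution_unique_of_mem_Ioo (v := v) (s := fun _ => Set.univ)
      (K := K) (fun t _ => (hlip t).lipschitzOnWith) hmem
      (fun t _ => ⟨hud t, Set.mem_univ _⟩) (fun t _ => ⟨hwd t, Set.mem_univ _⟩)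
      (by simp [hu, hw, h0, h0'])
    exact this ⟨by nlinarith [abs_nonneg x, neg_abs_le x], by nlinarith [le_abs_self x]⟩
  exact congrArg Prod.fst key

/-- The Wronskian of two solutions is constant. -/
lemma Sol.wronskian {f g : ℝ → ℂ} (hf : Sol V lam f) (hg : Sol V lam g) (x y : ℝ) :
    f x * deriv g x - deriv f x * g x = f y * deriv g y - deriv f y * g y := by
  set W : ℝ → ℂ := fun z => f z * deriv g z - deriv f z * g z with hW
  have hdiff : Differentiable ℝ W :=
    ((hf.diff).mul (hg.diff_deriv)).sub ((hf.diff_deriv).mul (hg.diff))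
  have hder : ∀ z, deriv W z = 0 := by
    intro z
    have h1 : HasDerivAt W (deriv f z * deriv g z + f z * deriv (deriv g) z
        - (deriv (deriv f) z * g z + deriv f z * deriv g z)) z :=
      (((hf.diff z).hasDerivAt.mul (hg.diff_deriv z).hasDerivAt)).sub
        (((hf.diff_deriv z).hasDerivAt.mul (hg.diff z).hasDerivAt))
    rw [h1.deriv, hf.2 z, hg.2 z]; ring
  exact is_const_of_deriv_eq_zero hdiff hder x y

/-- If `F` is bounded and satisfies `F (x + γ) = μ • F x` with `‖μ‖ > 1`, then `F = 0`. -/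
lemma kill {F : ℝ → ℂ} {M : ℝ} (hM : ∀ x, ‖F x‖ ≤ M) {μ : ℂ} (hμ : 1 < ‖μ‖)
    {γ : ℝ} (hrec : ∀ x, F (x + γ) = μ * F x) : ∀ x, F x = 0 := by
  intro x
  have hn : ∀ n : ℕ, F (x + n * γ) = μ ^ n * F x := by
    intro n
    induction n with
    | zero => simp
    | succ n ih =>
      have : x + (n + 1 : ℕ) * γ = (x + n * γ) + γ := by push_cast; ring
      rw [this, hrec, ih]; ring
  by_contra hx
  have hxpos : 0 < ‖F x‖ := norm_pos_iff.mpr hx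
  obtain ⟨n, hnn⟩ := pow_unbounded_of_one_lt (M / ‖F x‖) hμ
  have : ‖μ‖ ^ n * ‖F x‖ ≤ M := by
    have := hM (x + n * γ); rw [hn n] at this
    simpa [norm_mul, norm_pow] using this
  rw [div_lt_iff₀ hxpos] at hnn
  linarith

/-- Reflected version: from `F (x + γ) = μ * F x` with `0 < ‖μ‖ < 1`, deduce `F = 0`. -/
lemma kill' {F : ℝ → ℂ} {M : ℝ} (hM : ∀ x, ‖F x‖ ≤ M) {μ : ℂ} (hμ0 : μ ≠ 0)
    (hμ : ‖μ‖ < 1) {γ : ℝ} (hrec : ∀ x, F (x + γ) = μ * F x) : ∀ x, F x = 0 := by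
  have h1 : 1 < ‖μ⁻¹‖ := by
    rw [norm_inv]
    rw [one_lt_inv_iff₀]
    exact ⟨norm_pos_iff.mpr hμ0, hμ⟩
  have hrec' : ∀ x : ℝ, (fun y => F (-y)) (x + γ) = μ⁻¹ * (fun y => F (-y)) x := by
    intro x
    have := hrec (-x - γ)
    simp only []
    have h2 : -x - γ + γ = -x := by ring
    rw [h2] at this
    have h3 : -(x + γ) = -x - γ := by ring
    rw [h3, this]
    field_simp
  have := kill (F := fun y => F (-y)) (fun y => hM (-y)) h1 hrec'
  intro x
  have := this (-x)
  simpa using this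

/-- A `C²` function with unimodular Floquet multiplier is a Bloch function. -/
lemma bloch_part {F : ℝ → ℂ} (hF : ContDiff ℝ 2 F) {μ : ℂ} (habs : ‖μ‖ = 1)
    {γ : ℝ} (hγ : 0 < γ) (hrec : ∀ x, F (x + γ) = μ * F x) :
    ∃ (k : ℝ) (p : ℝ → ℂ), ContDiff ℝ 2 p ∧ (∀ x, p (x + γ) = p x) ∧
      ∀ x, F x = Complex.exp (Complex.I * (k : ℂ) * x) * p x := by
  set k : ℝ := μ.arg / γ with hk
  have hexpγ : Complex.exp (Complex.I * (k : ℂ) * γ) = μ := by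
    have h1 : Complex.I * (k : ℂ) * γ = (μ.arg : ℂ) * Complex.I := by
      rw [hk]; push_cast
      have hγ0 : (γ : ℂ) ≠ 0 := by exact_mod_cast ne_of_gt hγ
      field_simp
    rw [h1]
    have := Complex.norm_mul_exp_arg_mul_I μ
    rw [habs, Complex.ofReal_one, one_mul] at this
    exact this
  refine ⟨k, fun x => Complex.exp (-(Complex.I * (k : ℂ) * x)) * F x, ?_, ?_, ?_⟩
  · apply ContDiff.mul ?_ hF
    have h1 : ContDiff ℝ 2 (fun x : ℝ => -(Complex.I * (k : ℂ) * x)) := by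
      apply ContDiff.neg
      exact (contDiff_const.mul Complex.ofRealCLM.contDiff).of_le le_top
    exact (Complex.contDiff_exp (𝕜 := ℝ)).comp h1
  · intro x
    simp only []
    rw [hrec x]
    push_cast
    rw [show -(Complex.I * (k : ℂ) * ((x : ℂ) + (γ : ℂ)))
        = -(Complex.I * (k : ℂ) * x) + -(Complex.I * (k : ℂ) * γ) by ring,
      Complex.exp_add]
    rw [show Complex.exp (-(Complex.I * (k : ℂ) * γ)) = μ⁻¹ by
      rw [← hexpγ, ← Complex.exp_neg]]
    have hμ0 : μ ≠ 0 := by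
      intro h; rw [h] at habs; simp at habs
    field_simp
  · intro x
    rw [← mul_assoc, ← Complex.exp_add]
    ring_nf
    rw [Complex.exp_zero, one_mul]

lemma bound (hVcont : Continuous V) (hγ : 0 < γ) (hVper : ∀ x : ℝ, V (x + γ) = V x)
    (lam : ℝ) : ∃ C : ℝ, ∀ x : ℝ, ‖((V x : ℂ) - lam)‖ ≤ C := by
  have hper : Function.Periodic (fun x => ‖((V x : ℂ) - lam)‖) γ := fun x => by
    simp only [hVper]
  have hcont : Continuous (fun x => ‖((V x : ℂ) - lam)‖) :=
    ((Complex.continuous_ofReal.comp hVcont).sub continuous_const).norm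
  have hbd := hper.isBounded_of_continuous (ne_of_gt hγ) hcont
  obtain ⟨C, hC⟩ := isBounded_iff_forall_norm_le.mp hbd
  exact ⟨C, fun x => by
    have := hC _ (Set.mem_range_self x)
    rwa [Real.norm_eq_abs, _root_.abs_of_nonneg (norm_nonneg _)] at this⟩

end BlochAux

open BlochAux

/-- every bounded classical solution of the 1-D periodic Schrödinger
equation is a Bloch solution or a linear combination of two Bloch solutions with
real quasimomenta. -/
theorem bounded_solutions_are_bloch_combinations_1d
    (γ : ℝ) (hγ : 0 < γ) (V : ℝ → ℝ)
    (hVcont : Continuous V) (hVper : ∀ x : ℝ, V (x + γ) = V x)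
    (lam : ℝ) (ψ : ℝ → ℂ) (hψ : ContDiff ℝ 2 ψ)
    (hbdd : ∃ M : ℝ, ∀ x : ℝ, ‖ψ x‖ ≤ M)
    (heq : ∀ x : ℝ,
      -(deriv (deriv ψ) x) + (V x : ℂ) * ψ x = (lam : ℂ) * ψ x) :
    ∃ (k₁ k₂ : ℝ) (p₁ p₂ : ℝ → ℂ),
      ContDiff ℝ 2 p₁ ∧ ContDiff ℝ 2 p₂ ∧
      (∀ x : ℝ, p₁ (x + γ) = p₁ x) ∧ (∀ x : ℝ, p₂ (x + γ) = p₂ x) ∧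
      ∀ x : ℝ, ψ x = Complex.exp (Complex.I * (k₁ : ℂ) * x) * p₁ x
        + Complex.exp (Complex.I * (k₂ : ℂ) * x) * p₂ x := by
  obtain ⟨M, hM⟩ := hbdd
  obtain ⟨C, hC⟩ := bound hVcont hγ hVper lam
  have hSol : Sol V lam ψ := ⟨hψ, fun x => by linear_combination (-1 : ℂ) * heq x⟩
  -- helper conclusions
  have zeroConc : (∀ x, ψ x = 0) →
      ∃ (k₁ k₂ : ℝ) (p₁ p₂ : ℝ → ℂ),
      ContDiff ℝ 2 p₁ ∧ ContDiff ℝ 2 p₂ ∧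
      (∀ x : ℝ, p₁ (x + γ) = p₁ x) ∧ (∀ x : ℝ, p₂ (x + γ) = p₂ x) ∧
      ∀ x : ℝ, ψ x = Complex.exp (Complex.I * (k₁ : ℂ) * x) * p₁ x
        + Complex.exp (Complex.I * (k₂ : ℂ) * x) * p₂ x := by
    intro h0
    exact ⟨0, 0, (fun _ => 0), (fun _ => 0), contDiff_const, contDiff_const,
      fun _ => rfl, fun _ => rfl, fun x => by simp [h0 x]⟩
  have blochConc : ∀ μ : ℂ, ‖μ‖ = 1 → (∀ x, ψ (x + γ) = μ * ψ x) →
      ∃ (k₁ k₂ : ℝ) (p₁ p₂ : ℝ → ℂ),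
      ContDiff ℝ 2 p₁ ∧ ContDiff ℝ 2 p₂ ∧
      (∀ x : ℝ, p₁ (x + γ) = p₁ x) ∧ (∀ x : ℝ, p₂ (x + γ) = p₂ x) ∧
      ∀ x : ℝ, ψ x = Complex.exp (Complex.I * (k₁ : ℂ) * x) * p₁ x
        + Complex.exp (Complex.I * (k₂ : ℂ) * x) * p₂ x := by
    intro μ habs hrel
    obtain ⟨k, p, hp1, hp2, hp3⟩ := bloch_part hψ habs hγ hrel
    exact ⟨k, 0, p, (fun _ => 0), hp1, contDiff_const, hp2, fun _ => rfl,
      fun x => by simp [hp3 x]⟩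
  -- the shifted solutions
  set ψ₁ : ℝ → ℂ := fun x => ψ (x + γ) with hψ₁
  have hS1 : Sol V lam ψ₁ := hSol.shift hVper
  set ψ₂ : ℝ → ℂ := fun x => ψ₁ (x + γ) with hψ₂
  have hS2 : Sol V lam ψ₂ := hS1.shift hVper
  have hd1 : ∀ x, deriv ψ₁ x = deriv ψ (x + γ) := fun x => deriv_comp_add_const ψ γ x
  have hd2 : ∀ x, deriv ψ₂ x = deriv ψ (x + γ + γ) := fun x => by
    rw [show deriv ψ₂ x = deriv ψ₁ (x + γ) from deriv_comp_add_const ψ₁ γ x, hd1]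
  by_cases hc : ψ 0 * deriv ψ γ - deriv ψ 0 * ψ γ = 0
  · -- degenerate case: initial data of ψ and its shift are proportional
    by_cases h00 : ψ 0 = 0 ∧ deriv ψ 0 = 0
    · apply zeroConc
      apply Sol.unique hC hSol Sol.zero h00.1
      rw [h00.2]; simp
    · -- find the multiplier μ
      have hexμ : ∃ μ : ℂ, ψ γ = μ * ψ 0 ∧ deriv ψ γ = μ * deriv ψ 0 := by
        by_cases h0 : ψ 0 = 0
        · have hb : deriv ψ 0 ≠ 0 := by
            intro h; exact h00 ⟨h0, h⟩
          refine ⟨deriv ψ γ / deriv ψ 0, ?_, by field_simp⟩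
          rw [h0] at hc ⊢
          rw [mul_zero]
          have : deriv ψ 0 * ψ γ = 0 := by linear_combination -hc
          rcases mul_eq_zero.mp this with h | h
          · exact absurd h hb
          · exact h
        · refine ⟨ψ γ / ψ 0, by field_simp, ?_⟩
          field_simp
          linear_combination hc
      obtain ⟨μ, hμ1, hμ2⟩ := hexμ
      have hrel : ∀ x, ψ (x + γ) = μ * ψ x := by
        have := Sol.unique hC hS1 (hSol.smul μ) ?_ ?_
        · exact fun x => this x
        · show ψ₁ 0 = μ * ψ 0
          rw [hψ₁]; simpa using hμ1
        · rw [hd1 0, zero_add]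
          rw [show deriv (fun x => μ * ψ x) 0 = μ * deriv ψ 0 from
            deriv_const_mul μ (hSol.diff 0)]
          exact hμ2
      rcases lt_trichotomy ‖μ‖ 1 with h | h | h
      · by_cases hμ0 : μ = 0
        · apply zeroConc
          intro x
          have := hrel (x - γ)
          rw [sub_add_cancel] at this
          rw [this, hμ0, zero_mul]
        · exact zeroConc (kill' hM hμ0 h hrel)
      · exact blochConc μ h hrel
      · exact zeroConc (kill hM h hrel)
  · -- nondegenerate case: ψ (x+2γ) = t ψ(x+γ) - ψ x
    have hW : ψ 0 * deriv ψ γ - deriv ψ 0 * ψ γ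
        = ψ γ * deriv ψ (γ + γ) - deriv ψ γ * ψ (γ + γ) := by
      have h := hSol.wronskian hS1 0 γ
      rw [hd1 0, hd1 γ, zero_add] at h
      simpa [hψ₁] using h
    set t : ℂ := (ψ 0 * deriv ψ (γ + γ) - deriv ψ 0 * ψ (γ + γ))
      / (ψ 0 * deriv ψ γ - deriv ψ 0 * ψ γ) with ht
    have key1 : t * ψ γ - ψ 0 = ψ (γ + γ) := by
      rw [ht, div_mul_eq_mul_div, sub_eq_iff_eq_add, div_eq_iff hc]
      linear_combination (-(ψ 0)) * hW
    have key2 : t * deriv ψ γ - deriv ψ 0 = deriv ψ (γ + γ) := by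
      rw [ht, div_mul_eq_mul_div, sub_eq_iff_eq_add, div_eq_iff hc]
      linear_combination (-(deriv ψ 0)) * hW
    have hSg : Sol V lam (fun x => t * ψ₁ x - ψ x) := (hS1.smul t).sub hSol
    have hrec : ∀ x : ℝ, ψ (x + γ + γ) = t * ψ (x + γ) - ψ x := by
      have h := Sol.unique hC hS2 hSg ?_ ?_
      · exact fun x => h x
      · show ψ₂ 0 = t * ψ₁ 0 - ψ 0
        rw [hψ₂, hψ₁]
        simpa using key1.symm
      · rw [hd2 0, zero_add]
        have hder : deriv (fun x => t * ψ₁ x - ψ x) 0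
            = t * deriv ψ₁ 0 - deriv ψ 0 := by
          rw [deriv_fun_sub ((hS1.diff 0).const_mul t) (hSol.diff 0),
            deriv_const_mul t (hS1.diff 0)]
        rw [hder, hd1 0, zero_add]
        exact key2.symm
    -- square root of the discriminant
    obtain ⟨d, hd⟩ : ∃ d : ℂ, d ^ 2 = t ^ 2 - 4 :=
      IsAlgClosed.exists_pow_nat_eq (t ^ 2 - 4) zero_lt_two
    set μ₁ : ℂ := (t + d) / 2 with hμ₁
    set μ₂ : ℂ := (t - d) / 2 with hμ₂
    have hsum : μ₁ + μ₂ = t := by rw [hμ₁, hμ₂]; ring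
    have hprod : μ₁ * μ₂ = 1 := by
      rw [hμ₁, hμ₂]
      field_simp
      linear_combination -hd
    have hdiff : μ₁ - μ₂ = d := by rw [hμ₁, hμ₂]; ring
    by_cases hd0 : d = 0
    · -- double root: multiplier μ = t/2 with μ² = 1
      set μ : ℂ := t / 2 with hμ
      have ht4 : t ^ 2 = 4 := by
        rw [hd0] at hd; linear_combination -hd
      have hμ2 : μ * μ = 1 := by
        rw [hμ]; field_simp; linear_combination ht4
      have habs : ‖μ‖ = 1 := by
        have h1 : ‖μ‖ * ‖μ‖ = 1 := by rw [← norm_mul, hμ2, norm_one]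
        rcases mul_self_eq_one_iff.mp h1 with h | h
        · exact h
        · nlinarith [norm_nonneg μ]
      have ht2 : t = 2 * μ := by rw [hμ]; ring
      have key : ∀ n : ℕ,
          (∀ x : ℝ, ψ (x + (n : ℝ) * γ)
            = μ ^ n * (ψ x + (n : ℂ) * μ * (ψ (x + γ) - μ * ψ x)))
          ∧ (∀ x : ℝ, ψ (x + ((n : ℝ) + 1) * γ)
            = μ ^ (n + 1) * (ψ x + ((n : ℂ) + 1) * μ * (ψ (x + γ) - μ * ψ x))) := by
        intro n
        induction n with
        | zero =>
          constructor
          · intro x; simp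
          · intro x
            rw [show x + ((0 : ℕ) + 1 : ℝ) * γ = x + γ by push_cast; ring, pow_one]
            push_cast
            linear_combination (-(ψ (x + γ)) + μ * ψ x) * hμ2
        | succ n ih =>
          obtain ⟨Pn, Pn1⟩ := ih
          have step : ∀ x : ℝ, ψ (x + ((n : ℝ) + 1 + 1) * γ)
              = μ ^ (n + 1 + 1) * (ψ x + ((n : ℂ) + 1 + 1) * μ * (ψ (x + γ) - μ * ψ x)) := by
            intro x
            have e1 : ψ (x + ((n : ℝ) + 1 + 1) * γ)
                = t * ψ (x + ((n : ℝ) + 1) * γ) - ψ (x + (n : ℝ) * γ) := by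
              have := hrec (x + (n : ℝ) * γ)
              rw [show x + (n : ℝ) * γ + γ = x + ((n : ℝ) + 1) * γ by ring] at this
              rw [show x + ((n : ℝ) + 1) * γ + γ = x + ((n : ℝ) + 1 + 1) * γ by ring] at this
              exact this
            rw [e1, Pn1 x, Pn x, ht2, pow_succ, pow_succ]
            linear_combination (μ ^ n * (ψ x + (n : ℂ) * μ * (ψ (x + γ) - μ * ψ x))) * hμ2
          constructor
          · intro x
            have := Pn1 x
            rw [show ((n + 1 : ℕ) : ℝ) = (n : ℝ) + 1 by push_cast; ring]
            rw [this]; push_cast; ring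
          · intro x
            have := step x
            rw [show ((n + 1 : ℕ) : ℝ) + 1 = (n : ℝ) + 1 + 1 by push_cast; ring]
            rw [this]; push_cast; ring
      have hD : ∀ x : ℝ, ψ (x + γ) - μ * ψ x = 0 := by
        intro x
        by_contra hDx
        have hpos : 0 < ‖ψ (x + γ) - μ * ψ x‖ := norm_pos_iff.mpr hDx
        obtain ⟨n, hn⟩ := exists_nat_gt ((M + M) / ‖ψ (x + γ) - μ * ψ x‖)
        have hid := (key n).1 x
        have h1 : ‖ψ x + (n : ℂ) * μ * (ψ (x + γ) - μ * ψ x)‖ ≤ M := by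
          have h2 := hM (x + (n : ℝ) * γ)
          rw [hid, norm_mul, norm_pow, habs, one_pow, one_mul] at h2
          exact h2
        have h3 : (n : ℝ) * ‖ψ (x + γ) - μ * ψ x‖ ≤ M + M := by
          calc (n : ℝ) * ‖ψ (x + γ) - μ * ψ x‖
              = ‖(n : ℂ) * μ * (ψ (x + γ) - μ * ψ x)‖ := by
                rw [norm_mul, norm_mul, habs, mul_one]
                norm_num
            _ ≤ ‖ψ x + (n : ℂ) * μ * (ψ (x + γ) - μ * ψ x)‖ + ‖ψ x‖ := by
                have h7 := norm_sub_le (ψ x + (n : ℂ) * μ * (ψ (x + γ) - μ * ψ x)) (ψ x)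
                simpa using h7
            _ ≤ M + M := add_le_add h1 (hM x)
        rw [div_lt_iff₀ hpos] at hn
        linarith
      have hrelμ : ∀ x : ℝ, ψ (x + γ) = μ * ψ x := by
        intro x
        have := hD x
        linear_combination this
      exact blochConc μ habs hrelμ
    · -- distinct roots
      set A : ℝ → ℂ := fun x => ψ (x + γ) - μ₂ * ψ x with hA
      set B : ℝ → ℂ := fun x => ψ (x + γ) - μ₁ * ψ x with hB
      have hArec : ∀ x : ℝ, A (x + γ) = μ₁ * A x := by
        intro x
        show ψ (x + γ + γ) - μ₂ * ψ (x + γ) = μ₁ * (ψ (x + γ) - μ₂ * ψ x)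
        linear_combination hrec x - ψ (x + γ) * hsum + ψ x * hprod
      have hBrec : ∀ x : ℝ, B (x + γ) = μ₂ * B x := by
        intro x
        show ψ (x + γ + γ) - μ₁ * ψ (x + γ) = μ₂ * (ψ (x + γ) - μ₁ * ψ x)
        linear_combination hrec x - ψ (x + γ) * hsum + ψ x * hprod
      have hAbd : ∀ x : ℝ, ‖A x‖ ≤ M + ‖μ₂‖ * M := by
        intro x
        refine le_trans (norm_sub_le _ _) ?_
        rw [norm_mul]
        exact add_le_add (hM _) (mul_le_mul_of_nonneg_left (hM x) (norm_nonneg μ₂))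
      have hBbd : ∀ x : ℝ, ‖B x‖ ≤ M + ‖μ₁‖ * M := by
        intro x
        refine le_trans (norm_sub_le _ _) ?_
        rw [norm_mul]
        exact add_le_add (hM _) (mul_le_mul_of_nonneg_left (hM x) (norm_nonneg μ₁))
      have hμ₁0 : μ₁ ≠ 0 := left_ne_zero_of_mul_eq_one hprod
      have hμ₂0 : μ₂ ≠ 0 := right_ne_zero_of_mul_eq_one hprod
      have hnp : ‖μ₁‖ * ‖μ₂‖ = 1 := by rw [← norm_mul, hprod, norm_one]
      have hψd : ∀ x : ℝ, d * ψ x = A x - B x := by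
        intro x
        show d * ψ x = (ψ (x + γ) - μ₂ * ψ x) - (ψ (x + γ) - μ₁ * ψ x)
        linear_combination ψ x * hdiff.symm
      rcases lt_trichotomy ‖μ₁‖ 1 with h | h | h
      · have h2 : 1 < ‖μ₂‖ := by
          have := norm_pos_iff.mpr hμ₂0
          nlinarith
        have hA0 := kill' hAbd hμ₁0 h hArec
        have hB0 := kill hBbd h2 hBrec
        apply zeroConc
        intro x
        have h9 := hψd x
        rw [hA0 x, hB0 x, sub_zero] at h9
        exact (mul_eq_zero.mp h9).resolve_left hd0
      · have h2 : ‖μ₂‖ = 1 := by rw [h, one_mul] at hnp; exact hnp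
        have hAcd : ContDiff ℝ 2 A :=
          (hψ.comp (contDiff_id.add contDiff_const)).sub (contDiff_const.mul hψ)
        have hBcd : ContDiff ℝ 2 B :=
          (hψ.comp (contDiff_id.add contDiff_const)).sub (contDiff_const.mul hψ)
        obtain ⟨k₁, pA, hpA1, hpA2, hpA3⟩ := bloch_part hAcd h hγ hArec
        obtain ⟨k₂, pB, hpB1, hpB2, hpB3⟩ := bloch_part hBcd h2 hγ hBrec
        refine ⟨k₁, k₂, fun x => pA x / d, fun x => -(pB x) / d,
          hpA1.div_const d, hpB1.neg.div_const d,
          fun x => by simp only []; rw [hpA2 x],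
          fun x => by simp only []; rw [hpB2 x], ?_⟩
        intro x
        have h9 := hψd x
        rw [hpA3 x, hpB3 x] at h9
        rw [mul_div_assoc', mul_div_assoc', ← add_div, eq_div_iff hd0]
        linear_combination h9
      · have h2 : ‖μ₂‖ < 1 := by
          have := norm_pos_iff.mpr hμ₂0
          nlinarith
        have hA0 := kill hAbd h hArec
        have hB0 := kill' hBbd hμ₂0 h2 hBrec
        apply zeroConc
        intro x
        have h9 := hψd x
        rw [hA0 x, hB0 x, sub_zero] at h9
        exact (mul_eq_zero.mp h9).resolve_left hd0
end

section
/- Let γ > 0, let V : ℝ → ℂ be continuous and γ-periodic, and let λ ∈ ℝ. Suppose k ∈ ℂ satisfies exp(2ikγ) ≠ 1, and p : ℝ → ℂ is twice continuously differentiable, γ-periodic, and not identically zero, such that ψ(x) := e^{ikx}p(x) satisfies −ψ''(x) + V(x)ψ(x) = λψ(x) for all x ∈ ℝ. Then there exists a twice continuously differentiable γ-periodic function q : ℝ → ℂ, not identically zero, such that φ(x) := e^{−ikx}q(x) also satisfies −φ''(x) + V(x)φ(x) = λφ(x) for all x ∈ ℝ. (Quasimomenta of solutions corresponding to a fixed λ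 are symmetric with respect to the origin modulo 2π/γ.) -/
section ODEAux
open Set
open scoped NNReal

variable {E : Type*} [NormedAddCommGroup E] [NormedSpace ℝ E] [CompleteSpace E]

lemma ode_step (v : ℝ → E → E) (K : ℝ≥0)
    (hlip : ∀ t, LipschitzWith K (v t))
    (hnorm : ∀ t x, ‖v t x‖ ≤ (K:ℝ) * ‖x‖)
    (hcont : ∀ x, Continuous fun t => v t x)
    (t₀ : ℝ) (x₀ : E) :
    ∃ f : ℝ → E, f t₀ = x₀ ∧ ∀ t ∈ Icc (t₀ - 1/(2*(K:ℝ)+2)) (t₀ + 1/(2*(K:ℝ)+2)),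
      HasDerivWithinAt f (v t (f t)) (Icc (t₀ - 1/(2*(K:ℝ)+2)) (t₀ + 1/(2*(K:ℝ)+2))) t := by
  have hK : (0:ℝ) ≤ K := K.2
  have hh : (0:ℝ) < 1/(2*(K:ℝ)+2) := by positivity
  have hpl : IsPicardLindelof v (tmin := t₀ - 1/(2*(K:ℝ)+2)) (tmax := t₀ + 1/(2*(K:ℝ)+2))
      ⟨t₀, by constructor <;> linarith⟩ x₀ (‖x₀‖₊+1) 0 (K*(2*‖x₀‖₊+1)) K := by
    constructor
    · exact fun t _ => (hlip t).lipschitzOnWith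
    · exact fun x _ => (hcont x).continuousOn
    · intro t _ x hx
      have hx' : ‖x - x₀‖ ≤ ‖x₀‖ + 1 := by
        simpa [dist_eq_norm] using hx
      have h2 : ‖x‖ ≤ 2*‖x₀‖+1 := by
        have := norm_sub_norm_le x x₀
        linarith
      calc ‖v t x‖ ≤ (K:ℝ) * ‖x‖ := hnorm t x
        _ ≤ (K:ℝ) * (2*‖x₀‖+1) := by nlinarith
        _ = ((K*(2*‖x₀‖₊+1) : ℝ≥0) : ℝ) := by push_cast; rfl
    · have hmax : max (t₀ + 1/(2*(K:ℝ)+2) - t₀) (t₀ - (t₀ - 1/(2*(K:ℝ)+2))) = 1/(2*(K:ℝ)+2) := by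
        rw [show t₀ + 1/(2*(K:ℝ)+2) - t₀ = 1/(2*(K:ℝ)+2) by ring,
          show t₀ - (t₀ - 1/(2*(K:ℝ)+2)) = 1/(2*(K:ℝ)+2) by ring, max_self]
      simp only [NNReal.coe_mul, NNReal.coe_add, NNReal.coe_one, NNReal.coe_ofNat, coe_nnnorm,
        tsub_zero, NNReal.coe_zero, sub_zero]
      rw [hmax, mul_one_div, div_le_iff₀ (by positivity)]
      have h0 : (0:ℝ) ≤ ‖x₀‖ := norm_nonneg _
      nlinarith
  obtain ⟨f, hf0, hfd⟩ := hpl.exists_eq_forall_mem_Icc_hasDerivWithinAt₀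
  exact ⟨f, hf0, hfd⟩

lemma ode_global (v : ℝ → E → E) (K : ℝ≥0)
    (hlip : ∀ t, LipschitzWith K (v t))
    (hnorm : ∀ t x, ‖v t x‖ ≤ (K:ℝ) * ‖x‖)
    (hcont : ∀ x, Continuous fun t => v t x)
    (t₀ : ℝ) (x₀ : E) :
    ∃ f : ℝ → E, f t₀ = x₀ ∧ ∀ t, HasDerivAt f (v t (f t)) t := by
  set h : ℝ := 1/(2*(K:ℝ)+2) with hh_def
  have hK : (0:ℝ) ≤ K := K.2
  have hh : (0:ℝ) < h := by positivity
  -- solutions on [t₀ - n h, t₀ + n h]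
  have key : ∀ n : ℕ, ∃ f : ℝ → E, f t₀ = x₀ ∧ ∀ t ∈ Icc (t₀ - n*h) (t₀ + n*h),
      HasDerivWithinAt f (v t (f t)) (Icc (t₀ - n*h) (t₀ + n*h)) t := by
    intro n
    induction n with
    | zero =>
      obtain ⟨f, hf0, hfd⟩ := ode_step v K hlip hnorm hcont t₀ x₀
      refine ⟨f, hf0, ?_⟩
      intro t ht
      simp only [Nat.cast_zero, zero_mul, sub_zero, add_zero] at ht ⊢
      have hsub : Icc t₀ t₀ ⊆ Icc (t₀ - 1/(2*(K:ℝ)+2)) (t₀ + 1/(2*(K:ℝ)+2)) :=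
        Icc_subset_Icc (by linarith) (by linarith)
      exact (hfd t (hsub ht)).mono hsub
    | succ n ih =>
      obtain ⟨f, hf0, hfd⟩ := ih
      set A : ℝ := t₀ - n*h with hA
      set B : ℝ := t₀ + n*h with hB
      have hAB : A ≤ B := by
        have : (0:ℝ) ≤ n*h := by positivity
        simp only [hA, hB]; linarith
      have hAA : A - h ≤ A := by linarith
      have hBB : B ≤ B + h := by linarith
      obtain ⟨g, hg0, hgd⟩ := ode_step v K hlip hnorm hcont B (f B)
      obtain ⟨e, he0, hed⟩ := ode_step v K hlip hnorm hcont A (f A)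
      set F : ℝ → E := fun t => if t < A then e t else if t ≤ B then f t else g t with hF
      have hEf : EqOn F f (Icc A B) := by
        intro t ht
        show (if t < A then e t else if t ≤ B then f t else g t) = f t
        rw [if_neg (not_lt.mpr ht.1), if_pos ht.2]
      have hEg : EqOn F g (Icc B (B+h)) := by
        intro t ht
        show (if t < A then e t else if t ≤ B then f t else g t) = g t
        rw [if_neg (not_lt.mpr (hAB.trans ht.1))]
        rcases eq_or_lt_of_le ht.1 with heq | hlt
        · rw [if_pos (le_of_eq heq.symm), ← heq]
          exact hg0.symm
        · rw [if_neg (not_le.mpr hlt)]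
      have hEe : EqOn F e (Icc (A-h) A) := by
        intro t ht
        show (if t < A then e t else if t ≤ B then f t else g t) = e t
        rcases lt_or_eq_of_le ht.2 with hlt | heq
        · rw [if_pos hlt]
        · rw [heq, if_neg (lt_irrefl A), if_pos hAB]
          exact he0.symm
      -- derivative of F within each subinterval
      have trivder : ∀ (a b t : ℝ) (d : E), t ∉ Icc a b → HasDerivWithinAt F d (Icc a b) t := by
        intro a b t d ht
        have : HasFDerivWithinAt F (ContinuousLinearMap.smulRight (1 : ℝ →L[ℝ] ℝ) d)
            (Icc a b) t :=
          HasFDerivWithinAt.of_notMem_closure (by rwa [isClosed_Icc.closure_eq])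
        simpa using this.hasDerivWithinAt
      have hder1 : ∀ t ∈ Icc (A-h) (B+h), HasDerivWithinAt F (v t (F t)) (Icc (A-h) A) t := by
        intro t _
        by_cases ht : t ∈ Icc (A-h) A
        · have hsub : Icc (A-h) A ⊆ Icc (A-h) (A+h) := Icc_subset_Icc le_rfl (by linarith)
          have := ((hed t (hsub ht)).mono hsub).congr hEe (hEe ht)
          rwa [← hEe ht] at this
        · exact trivder _ _ _ _ ht
      have hder2 : ∀ t ∈ Icc (A-h) (B+h), HasDerivWithinAt F (v t (F t)) (Icc A B) t := by
        intro t _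
        by_cases ht : t ∈ Icc A B
        · have := (hfd t ht).congr hEf (hEf ht)
          rwa [← hEf ht] at this
        · exact trivder _ _ _ _ ht
      have hder3 : ∀ t ∈ Icc (A-h) (B+h), HasDerivWithinAt F (v t (F t)) (Icc B (B+h)) t := by
        intro t _
        by_cases ht : t ∈ Icc B (B+h)
        · have hsub : Icc B (B+h) ⊆ Icc (B-h) (B+h) := Icc_subset_Icc (by linarith) le_rfl
          have := ((hgd t (hsub ht)).mono hsub).congr hEg (hEg ht)
          rwa [← hEg ht] at this
        · exact trivder _ _ _ _ ht
      have hint : t₀ - (n+1:ℕ)*h = A - h ∧ t₀ + (n+1:ℕ)*h = B + h := by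
        constructor <;> (push_cast; simp only [hA, hB]; ring)
      refine ⟨F, ?_, ?_⟩
      · rw [hEf ⟨by linarith, by linarith⟩, hf0]
      · intro t ht
        rw [hint.1, hint.2] at ht ⊢
        have := (hder1 t ht).union ((hder2 t ht).union (hder3 t ht))
        rwa [Icc_union_Icc_eq_Icc hAB hBB, Icc_union_Icc_eq_Icc hAA (le_trans hAB hBB)] at this
  choose f hf0 hfd using key
  -- uniqueness between levels
  have uniq : ∀ n m : ℕ, 1 ≤ n → n ≤ m →
      EqOn (f n) (f m) (Icc (t₀ - n*h) (t₀ + n*h)) := by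
    intro n m h1 hnm
    have hc : (n:ℝ)*h ≤ m*h := by
      have : (n:ℝ) ≤ m := by exact_mod_cast hnm
      nlinarith
    have hsub : Icc (t₀ - n*h) (t₀ + n*h) ⊆ Icc (t₀ - m*h) (t₀ + m*h) := by
      apply Icc_subset_Icc <;> linarith
    have hn1 : (1:ℝ) ≤ n := by exact_mod_cast h1
    have ht₀ : t₀ ∈ Ioo (t₀ - n*h) (t₀ + n*h) := by constructor <;> nlinarith
    apply ODE_solution_unique_of_mem_Icc (v := v) (s := fun _ => univ) (K := K)
      (fun t _ => (hlip t).lipschitzOnWith) ht₀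
    · exact fun t ht => (hfd n t ht).continuousWithinAt
    · intro t ht
      exact (hfd n t (Ioo_subset_Icc_self ht)).hasDerivAt (Icc_mem_nhds ht.1 ht.2)
    · exact fun t _ => trivial
    · exact fun t ht => ((hfd m t (hsub ht)).continuousWithinAt).mono (hsub)
    · intro t ht
      have htm : t ∈ Ioo (t₀ - m*h) (t₀ + m*h) := by
        obtain ⟨h1', h2'⟩ := ht
        constructor <;> linarith
      exact (hfd m t (Ioo_subset_Icc_self htm)).hasDerivAt (Icc_mem_nhds htm.1 htm.2)
    · exact fun t _ => trivial
    · rw [hf0, hf0]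
  set N : ℝ → ℕ := fun t => ⌈|t - t₀|/h⌉₊ + 1 with hN
  have hmem : ∀ t, t ∈ Ioo (t₀ - N t * h) (t₀ + N t * h) := by
    intro t
    have h1 : |t - t₀|/h ≤ ⌈|t - t₀|/h⌉₊ := Nat.le_ceil _
    have h2 : |t - t₀| ≤ ⌈|t - t₀|/h⌉₊ * h := by
      rw [← div_le_iff₀ hh]; exact h1
    have h3 : |t - t₀| < N t * h := by
      simp only [hN]; push_cast; nlinarith
    rw [abs_lt] at h3
    constructor <;> [linarith [h3.1]; linarith [h3.2]]
  have hagree : ∀ n : ℕ, 1 ≤ n → ∀ t ∈ Icc (t₀ - n*h) (t₀ + n*h), f (N t) t = f n t := by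
    intro n h1 t ht
    have hN1 : 1 ≤ N t := Nat.le_add_left _ _
    rw [uniq (N t) (max (N t) n) hN1 (le_max_left _ _) (Ioo_subset_Icc_self (hmem t)),
      uniq n (max (N t) n) h1 (le_max_right _ _) ht]
  refine ⟨fun t => f (N t) t, ?_, ?_⟩
  · have : t₀ ∈ Icc (t₀ - (1:ℕ)*h) (t₀ + (1:ℕ)*h) := by
      constructor <;> (push_cast; linarith)
    show f (N t₀) t₀ = x₀
    rw [hagree 1 le_rfl t₀ this, hf0]
  · intro t
    set n := N t with hn
    have htm := hmem t
    have hnhds : Icc (t₀ - n*h) (t₀ + n*h) ∈ nhds t := Icc_mem_nhds htm.1 htm.2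
    have hN1 : 1 ≤ n := Nat.le_add_left _ _
    have hev : (fun s => f (N s) s) =ᶠ[nhds t] f n :=
      Filter.eventuallyEq_of_mem hnhds (fun s hs => hagree n hN1 s hs)
    have hda : HasDerivAt (f n) (v t (f n t)) t :=
      (hfd n t (Ioo_subset_Icc_self htm)).hasDerivAt hnhds
    have := hda.congr_of_eventuallyEq hev
    rwa [← hagree n hN1 t (Ioo_subset_Icc_self htm)] at this

lemma ode_unique (v : ℝ → E → E) (K : ℝ≥0)
    (hlip : ∀ t, LipschitzWith K (v t))
    (f g : ℝ → E) (t₀ : ℝ)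
    (hf : ∀ t, HasDerivAt f (v t (f t)) t)
    (hg : ∀ t, HasDerivAt g (v t (g t)) t)
    (h0 : f t₀ = g t₀) : ∀ t, f t = g t := by
  intro t
  have ht : t ∈ Ioo (min t t₀ - 1) (max t t₀ + 1) := by
    constructor
    · have := min_le_left t t₀; linarith
    · have := le_max_left t t₀; linarith
  have ht₀ : t₀ ∈ Ioo (min t t₀ - 1) (max t t₀ + 1) := by
    constructor
    · have := min_le_right t t₀; linarith
    · have := le_max_right t t₀; linarith
  exact ODE_solution_unique_of_mem_Ioo (v := v) (s := fun _ => univ) (K := K)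
    (fun s _ => (hlip s).lipschitzOnWith) ht₀
    (fun s _ => ⟨hf s, trivial⟩) (fun s _ => ⟨hg s, trivial⟩) h0 ht


end ODEAux

open scoped NNReal


open Complex

/-- if `e^{ikx}p(x)` is a Bloch solution with `exp(2ikγ) ≠ 1`, then
there is a Bloch solution with quasimomentum `-k` for the same `λ`: quasimomenta
are symmetric with respect to the origin modulo `2π/γ`. -/
theorem quasimomenta_symmetric
    (γ : ℝ) (hγ : 0 < γ) (V : ℝ → ℂ)
    (hVcont : Continuous V) (hVper : ∀ x : ℝ, V (x + γ) = V x)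
    (lam : ℝ) (k : ℂ)
    (hk : Complex.exp (2 * Complex.I * k * (γ : ℂ)) ≠ 1)
    (p : ℝ → ℂ) (hp : ContDiff ℝ 2 p)
    (hpper : ∀ x : ℝ, p (x + γ) = p x) (hpne : ∃ x : ℝ, p x ≠ 0)
    (heq : ∀ x : ℝ,
      -(deriv (deriv (fun y : ℝ => Complex.exp (Complex.I * k * y) * p y)) x)
      + V x * (Complex.exp (Complex.I * k * x) * p x)
      = (lam : ℂ) * (Complex.exp (Complex.I * k * x) * p x)) :
    ∃ q : ℝ → ℂ, ContDiff ℝ 2 q ∧ (∀ x : ℝ, q (x + γ) = q x) ∧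
      (∃ x : ℝ, q x ≠ 0) ∧
      ∀ x : ℝ,
        -(deriv (deriv (fun y : ℝ => Complex.exp (Complex.I * (-k) * y) * q y)) x)
        + V x * (Complex.exp (Complex.I * (-k) * x) * q x)
        = (lam : ℂ) * (Complex.exp (Complex.I * (-k) * x) * q x) := by
  -- the Bloch solution ψ
  set ψ : ℝ → ℂ := fun y : ℝ => Complex.exp (Complex.I * k * y) * p y with hψdef
  have hexp2 : ∀ c : ℂ, ContDiff ℝ 2 (fun y : ℝ => Complex.exp (c * y)) := by
    intro c
    exact (Complex.contDiff_exp.of_le le_top).comp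
      (contDiff_const.mul (Complex.ofRealCLM.contDiff.of_le le_top))
  have hψc : ContDiff ℝ 2 ψ := ((hexp2 (Complex.I * k)).mul hp : _)
  have hψd : ∀ t, HasDerivAt ψ (deriv ψ t) t :=
    fun t => ((hψc.differentiable (by norm_num)) t).hasDerivAt
  have hψc' : ContDiff ℝ 1 (deriv ψ) := by
    have := (contDiff_succ_iff_deriv (n := 1)).mp (by exact_mod_cast hψc)
    exact this.2.2
  have hψ'' : ∀ x, deriv (deriv ψ) x = (V x - (lam:ℂ)) * ψ x := by
    intro x
    have h := heq x
    have hx : ψ x = Complex.exp (Complex.I * k * x) * p x := rfl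
    rw [hx]
    linear_combination -h
  have hψ'd : ∀ t, HasDerivAt (deriv ψ) ((V t - (lam:ℂ)) * ψ t) t := by
    intro t
    have := ((hψc'.differentiable one_ne_zero) t).hasDerivAt
    rwa [hψ'' t] at this
  -- the first-order system
  set v : ℝ → ℂ × ℂ → ℂ × ℂ := fun t x => (x.2, (V t - (lam:ℂ)) * x.1) with hvdef
  -- bound on the potential
  obtain ⟨M, hM⟩ : ∃ M : ℝ, ∀ t, ‖V t - (lam:ℂ)‖ ≤ M := by
    have hper : Function.Periodic (fun t => V t - (lam:ℂ)) γ := by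
      intro x; simp [hVper x]
    have hbd := hper.isBounded_of_continuous (ne_of_gt hγ) (hVcont.sub continuous_const)
    obtain ⟨C, hC⟩ := isBounded_iff_forall_norm_le.mp hbd
    exact ⟨C, fun t => hC _ (Set.mem_range_self t)⟩
  set Kr : ℝ := max M 1 with hKr
  have hKr1 : (1:ℝ) ≤ Kr := le_max_right _ _
  have hKr0 : (0:ℝ) ≤ Kr := by linarith
  have hMK : ∀ t, ‖V t - (lam:ℂ)‖ ≤ Kr := fun t => le_trans (hM t) (le_max_left _ _)
  set K : ℝ≥0 := Kr.toNNReal with hK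
  have hKc : (K:ℝ) = Kr := Real.coe_toNNReal _ hKr0
  have hnorm : ∀ (t : ℝ) (x : ℂ × ℂ), ‖v t x‖ ≤ (K:ℝ) * ‖x‖ := by
    intro t x
    rw [hKc]
    have h1 : ‖x.2‖ ≤ ‖x‖ := norm_snd_le x
    have h2 : ‖x.1‖ ≤ ‖x‖ := norm_fst_le x
    have hx0 : (0:ℝ) ≤ ‖x‖ := norm_nonneg _
    have : ‖v t x‖ = max ‖x.2‖ ‖(V t - (lam:ℂ)) * x.1‖ := rfl
    rw [this, max_le_iff]
    constructor
    · nlinarith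
    · rw [norm_mul]
      have := hMK t
      have h3 : (0:ℝ) ≤ ‖V t - (lam:ℂ)‖ := norm_nonneg _
      nlinarith
  have hlin : ∀ (t : ℝ) (x y : ℂ × ℂ), v t x - v t y = v t (x - y) := by
    intro t x y
    simp only [hvdef, Prod.mk_sub_mk, Prod.fst_sub, Prod.snd_sub, mul_sub]
  have hlip : ∀ t, LipschitzWith K (v t) := by
    intro t
    apply LipschitzWith.of_dist_le_mul
    intro x y
    rw [dist_eq_norm, dist_eq_norm, hlin t x y]
    exact hnorm t (x - y)
  have hcont : ∀ x : ℂ × ℂ, Continuous fun t => v t x := by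
    intro x
    exact continuous_const.prodMk ((hVcont.sub continuous_const).mul continuous_const)
  -- first components of solutions of the system solve the 2nd order ODE
  have hfst : ∀ (u : ℝ → ℂ × ℂ), (∀ t, HasDerivAt u (v t (u t)) t) →
      ∀ t, HasDerivAt (fun s => (u s).1) ((u t).2) t := by
    intro u hu t
    have := (ContinuousLinearMap.fst ℝ ℂ ℂ).hasFDerivAt.comp_hasDerivAt t (hu t)
    exact this
  have hsnd : ∀ (u : ℝ → ℂ × ℂ), (∀ t, HasDerivAt u (v t (u t)) t) →
      ∀ t, HasDerivAt (fun s => (u s).2) ((V t - (lam:ℂ)) * (u t).1) t := by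
    intro u hu t
    have := (ContinuousLinearMap.snd ℝ ℂ ℂ).hasFDerivAt.comp_hasDerivAt t (hu t)
    exact this
  -- ψ as a solution of the system
  set uψ : ℝ → ℂ × ℂ := fun t => (ψ t, deriv ψ t) with huψdef
  have hUψ : ∀ t, HasDerivAt uψ (v t (uψ t)) t := fun t => (hψd t).prodMk (hψ'd t)
  -- nondegeneracy of ψ at 0
  have hzero : ∀ t, HasDerivAt (fun _ : ℝ => (0 : ℂ × ℂ)) (v t ((fun _ : ℝ => (0:ℂ × ℂ)) t)) t := by
    intro t
    have : v t (0 : ℂ × ℂ) = 0 := by simp [hvdef]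
    rw [this]
    exact hasDerivAt_const t 0
  have hψ0ne : (ψ 0, deriv ψ 0) ≠ (0 : ℂ × ℂ) := by
    intro hcontra
    have huniq := ode_unique v K hlip uψ (fun _ => (0:ℂ × ℂ)) 0 hUψ hzero (by
      simp only [huψdef]
      exact hcontra)
    obtain ⟨x, hx⟩ := hpne
    have := huniq x
    have hx2 : (ψ x, deriv ψ x) = (0 : ℂ × ℂ) := this
    rw [Prod.mk_eq_zero] at hx2
    have hψx : ψ x = 0 := hx2.1
    have : Complex.exp (Complex.I * k * x) * p x = 0 := hψx
    rcases mul_eq_zero.mp this with h | h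
    · exact Complex.exp_ne_zero _ h
    · exact hx h
  -- initial data for the second solution
  obtain ⟨c, d, hW0⟩ : ∃ c d : ℂ, ψ 0 * d - deriv ψ 0 * c = 1 := by
    by_cases h0 : ψ 0 = 0
    · have h1 : deriv ψ 0 ≠ 0 := by
        intro h1
        exact hψ0ne (by rw [h0, h1]; rfl)
      exact ⟨-(deriv ψ 0)⁻¹, 0, by field_simp [h0]; ring⟩
    · exact ⟨0, (ψ 0)⁻¹, by field_simp; ring⟩
  obtain ⟨u, hu0, hud⟩ := ode_global v K hlip hnorm hcont 0 (c, d)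
  have hd1 := hfst u hud
  have hd2 := hsnd u hud
  -- the Wronskian is constant, equal to 1
  set Wr : ℝ → ℂ := fun t => ψ t * (u t).2 - deriv ψ t * (u t).1 with hWrdef
  have hWd : ∀ t, HasDerivAt Wr 0 t := by
    intro t
    have h1 := ((hψd t).mul (hd2 t)).sub ((hψ'd t).mul (hd1 t))
    exact h1.congr_deriv (by ring)
  have hWr1 : ∀ t, Wr t = 1 := by
    have hWc : ∀ t, Wr t = Wr 0 := by
      intro t
      exact is_const_of_deriv_eq_zero (fun s => (hWd s).differentiableAt)
        (fun s => (hWd s).deriv) t 0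
    intro t
    rw [hWc t]
    show ψ 0 * (u 0).2 - deriv ψ 0 * (u 0).1 = 1
    rw [hu0]
    exact hW0
  -- translated solution
  have hug : ∀ t, HasDerivAt (fun s => u (s + γ)) (v t (u (t + γ))) t := by
    intro t
    have h1 : HasDerivAt (fun s : ℝ => s + γ) 1 t := (hasDerivAt_id t).add_const γ
    have h2 := (hud (t + γ)).scomp t h1
    simp only [one_smul] at h2
    have h3 : v (t + γ) (u (t + γ)) = v t (u (t + γ)) := by
      simp only [hvdef, hVper t]
    rwa [h3] at h2
  -- linear combinations of solutions are solutions
  have hvlinear : ∀ (t : ℝ) (a b : ℂ) (x y : ℂ × ℂ),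
      a • v t x + b • v t y = v t (a • x + b • y) := by
    intro t a b x y
    simp only [hvdef, Prod.smul_mk, Prod.mk_add_mk, smul_eq_mul, Prod.smul_fst, Prod.smul_snd,
      Prod.fst_add, Prod.snd_add]
    rw [Prod.mk.injEq]
    constructor <;> ring
  set α : ℂ := (u γ).1 * d - (u γ).2 * c with hαdef
  set β : ℂ := ψ 0 * (u γ).2 - deriv ψ 0 * (u γ).1 with hβdef
  have hcomb : ∀ t, HasDerivAt (fun s => α • uψ s + β • u s)
      (v t (α • uψ t + β • u t)) t := by
    intro t
    have h1 := ((hUψ t).const_smul α).add ((hud t).const_smul β)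
    rwa [hvlinear t α β (uψ t) (u t)] at h1
  -- Floquet relation for u
  have hmono : ∀ t, u (t + γ) = α • uψ t + β • u t := by
    apply ode_unique v K hlip _ _ 0 hug hcomb
    show u (0 + γ) = α • uψ 0 + β • u 0
    rw [zero_add, hu0]
    have hψ00 : uψ 0 = (ψ 0, deriv ψ 0) := rfl
    rw [hψ00]
    rw [show (α • (ψ 0, deriv ψ 0) + β • ((c:ℂ), d) : ℂ × ℂ)
      = (α * ψ 0 + β * c, α * deriv ψ 0 + β * d) from rfl]
    rw [Prod.ext_iff]
    have hW0e : Complex.exp (Complex.I * k * (0:ℝ)) * p 0 * d - deriv ψ 0 * c = 1 := hW0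
    constructor
    · show (u γ).1 = α * ψ 0 + β * c
      rw [hαdef, hβdef]
      linear_combination (-(u γ).1) * hW0e
    · show (u γ).2 = α * deriv ψ 0 + β * d
      rw [hαdef, hβdef]
      linear_combination (-(u γ).2) * hW0e
  -- quasiperiodicity of ψ
  set Ek : ℂ := Complex.exp (Complex.I * k * γ) with hEkdef
  have hEkne : Ek ≠ 0 := Complex.exp_ne_zero _
  have hψq : ∀ x : ℝ, ψ (x + γ) = Ek * ψ x := by
    intro x
    show Complex.exp (Complex.I * k * ((x:ℝ)+γ:ℝ)) * p (x + γ) = Ek * (Complex.exp (Complex.I * k * x) * p x)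
    rw [hpper x, hEkdef, Complex.ofReal_add, mul_add, Complex.exp_add]
    ring
  have hψq' : ∀ x : ℝ, deriv ψ (x + γ) = Ek * deriv ψ x := by
    intro x
    have h1 : HasDerivAt (fun s : ℝ => ψ (s + γ)) (deriv ψ (x + γ)) x := by
      have := (hψd (x + γ)).scomp x ((hasDerivAt_id x).add_const γ)
      simpa [Function.comp_def] using this
    have h2 : HasDerivAt (fun s : ℝ => ψ (s + γ)) (Ek * deriv ψ x) x := by
      have h3 : (fun s : ℝ => ψ (s + γ)) = fun s : ℝ => Ek * ψ s := funext hψq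
      rw [h3]
      exact (hψd x).const_mul Ek
    exact h1.unique h2
  -- β = Ek⁻¹
  have hEkβ : Ek * β = 1 := by
    have e1 : ψ γ = Ek * ψ 0 := by have := hψq 0; rwa [zero_add] at this
    have e2 : deriv ψ γ = Ek * deriv ψ 0 := by have := hψq' 0; rwa [zero_add] at this
    have e3 : ψ γ * (u γ).2 - deriv ψ γ * (u γ).1 = 1 := hWr1 γ
    rw [hβdef]
    linear_combination e3 - (u γ).2 * e1 + (u γ).1 * e2
  have hden : β - Ek ≠ 0 := by
    intro hcontra
    have hβE : β = Ek := sub_eq_zero.mp hcontra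
    apply hk
    have h2 : Complex.exp (2 * Complex.I * k * (γ:ℂ)) = Ek * Ek := by
      rw [hEkdef, ← Complex.exp_add]
      ring_nf
    rw [h2, show Ek * Ek = Ek * β by rw [hβE]]
    exact hEkβ
  set c₀ : ℂ := α / (β - Ek) with hc₀def
  have hc₀ : α + c₀ * (Ek - β) = 0 := by
    rw [hc₀def]
    field_simp
    ring
  set φ : ℝ → ℂ := fun t => (u t).1 + c₀ * ψ t with hφdef
  -- quasiperiodicity of φ
  have hφq : ∀ t : ℝ, φ (t + γ) = β * φ t := by
    intro t
    show (u (t + γ)).1 + c₀ * ψ (t + γ) = β * ((u t).1 + c₀ * ψ t)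
    rw [hmono t, hψq t]
    have hfst1 : (α • uψ t + β • u t).1 = α * ψ t + β * (u t).1 := rfl
    rw [hfst1]
    linear_combination (ψ t) * hc₀
  -- derivatives of φ
  have hφd : ∀ t, HasDerivAt φ ((u t).2 + c₀ * deriv ψ t) t :=
    fun t => (hd1 t).add ((hψd t).const_mul c₀)
  have hdφ : deriv φ = fun t => (u t).2 + c₀ * deriv ψ t := funext fun t => (hφd t).deriv
  have hφd2 : ∀ t, HasDerivAt (deriv φ) ((V t - (lam:ℂ)) * φ t) t := by
    intro t
    rw [hdφ]
    have h1 := (hd2 t).add ((hψ'd t).const_mul c₀)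
    refine h1.congr_deriv ?_
    show _ = (V t - (lam:ℂ)) * ((u t).1 + c₀ * ψ t)
    ring
  have hφcont : Continuous φ := by
    have : Differentiable ℝ φ := fun t => (hφd t).differentiableAt
    exact this.continuous
  have hφc : ContDiff ℝ 2 φ := by
    have h2 : (2 : WithTop ℕ∞) = 1 + 1 := by norm_num
    rw [h2, contDiff_succ_iff_deriv]
    refine ⟨fun t => (hφd t).differentiableAt, by simp, ?_⟩
    rw [contDiff_one_iff_deriv]
    constructor
    · exact fun t => (hφd2 t).differentiableAt
    · have hderiv2 : deriv (deriv φ) = fun t => (V t - (lam:ℂ)) * φ t :=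
        funext fun t => (hφd2 t).deriv
      rw [hderiv2]
      exact (hVcont.sub continuous_const).mul hφcont
  -- the new Bloch function
  refine ⟨fun t : ℝ => Complex.exp (Complex.I * k * t) * φ t, ?_, ?_, ?_, ?_⟩
  · exact (hexp2 (Complex.I * k)).mul hφc
  · intro x
    show Complex.exp (Complex.I * k * ((x:ℝ)+γ:ℝ)) * φ (x + γ) = Complex.exp (Complex.I * k * x) * φ x
    rw [hφq x, Complex.ofReal_add, mul_add, Complex.exp_add]
    have : Complex.exp (Complex.I * k * (γ:ℂ)) = Ek := rfl
    rw [this]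
    have h1 : Ek * β = 1 := hEkβ
    calc Complex.exp (Complex.I * k * x) * Ek * (β * φ x)
        = (Ek * β) * (Complex.exp (Complex.I * k * x) * φ x) := by ring
      _ = Complex.exp (Complex.I * k * x) * φ x := by rw [h1]; ring
  · by_contra hcon
    push_neg at hcon
    have hφ0 : ∀ x : ℝ, φ x = 0 := by
      intro x
      have := hcon x
      rcases mul_eq_zero.mp this with h | h
      · exact absurd h (Complex.exp_ne_zero _)
      · exact h
    have hu1 : ∀ t : ℝ, (u t).1 = -c₀ * ψ t := by
      intro t
      have := hφ0 t
      show (u t).1 = -c₀ * ψ t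
      have h1 : (u t).1 + c₀ * ψ t = 0 := this
      linear_combination h1
    have hu2 : ∀ t : ℝ, (u t).2 = -c₀ * deriv ψ t := by
      intro t
      have h1 : deriv φ t = 0 := by
        have : φ = fun _ => (0:ℂ) := funext hφ0
        rw [this, deriv_const]
      have h1' : (u t).2 + c₀ * deriv ψ t = 0 := by
        rw [← (hφd t).deriv]
        exact h1
      linear_combination h1'
    have := hWr1 0
    rw [hWrdef] at this
    simp only at this
    rw [hu1 0, hu2 0] at this
    have hcontr : (0:ℂ) = 1 := by linear_combination this
    exact zero_ne_one hcontr
  · intro x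
    have hfun : (fun y : ℝ => Complex.exp (Complex.I * (-k) * y) *
        (Complex.exp (Complex.I * k * y) * φ y)) = φ := by
      funext y
      rw [← mul_assoc, ← Complex.exp_add,
        show Complex.I * (-k) * (y:ℂ) + Complex.I * k * (y:ℂ) = 0 by ring,
        Complex.exp_zero, one_mul]
    rw [hfun]
    have hptw : Complex.exp (Complex.I * (-k) * x) * (Complex.exp (Complex.I * k * x) * φ x)
        = φ x := congrFun hfun x
    rw [hptw]
    rw [show deriv (deriv φ) x = (V x - (lam:ℂ)) * φ x from (hφd2 x).deriv]
    ring
end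

section
/- Let γ > 0, let V : ℝ → ℂ be continuous and γ-periodic, and let λ ∈ ℝ. Suppose k₀ ∈ ℂ and p₂ : ℝ → ℂ is twice continuously differentiable, γ-periodic, and not identically zero, such that ψ(x) := e^{i k₀ x}·x·p₂(x) satisfies −ψ''(x) + V(x)ψ(x) = λψ(x) for all x ∈ ℝ (i.e., ψ is a solution of the second form with vanishing first periodic part p₁ ≡ 0). Then V is constant, with V(x) = λ for all x ∈ ℝ, and k₀·γ/(2π) ∈ ℤ. -/
open Complex

/-- if `ψ(x) = e^{ik₀x}·x·p₂(x)` (second form with vanishing first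
periodic part) solves the 1-D periodic Schrödinger equation, then the potential is
constant equal to `λ` and `k₀γ/(2π) ∈ ℤ`. -/
theorem growth_form_with_zero_p1_implies_constant_potential
    (γ : ℝ) (hγ : 0 < γ) (V : ℝ → ℂ)
    (hVcont : Continuous V) (hVper : ∀ x : ℝ, V (x + γ) = V x)
    (lam : ℝ) (k₀ : ℂ) (p₂ : ℝ → ℂ) (hp₂ : ContDiff ℝ 2 p₂)
    (hp₂per : ∀ x : ℝ, p₂ (x + γ) = p₂ x) (hp₂ne : ∃ x : ℝ, p₂ x ≠ 0)
    (heq : ∀ x : ℝ,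
      -(deriv (deriv (fun y : ℝ =>
          Complex.exp (Complex.I * k₀ * y) * (y * p₂ y))) x)
      + V x * (Complex.exp (Complex.I * k₀ * x) * (x * p₂ x))
      = (lam : ℂ) * (Complex.exp (Complex.I * k₀ * x) * (x * p₂ x))) :
    (∀ x : ℝ, V x = (lam : ℂ)) ∧
    (∃ m : ℤ, k₀ * (γ : ℂ) / (2 * (Real.pi : ℂ)) = (m : ℂ)) := by
  -- basic differentiability
  have hp₂d : Differentiable ℝ p₂ := hp₂.differentiable (by norm_num)
  set q : ℝ → ℂ := deriv p₂ with hqdef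
  have hq : ∀ x, HasDerivAt p₂ (q x) x := fun x => (hp₂d x).hasDerivAt
  have hqC : ContDiff ℝ 1 q := by
    have h2 := hp₂
    rw [show (2 : WithTop ℕ∞) = 1 + 1 from rfl] at h2
    exact (contDiff_succ_iff_deriv.mp h2).2.2
  have hqd : Differentiable ℝ q := hqC.differentiable (by norm_num)
  set r : ℝ → ℂ := deriv q with hrdef
  have hr : ∀ x, HasDerivAt q (r x) x := fun x => (hqd x).hasDerivAt
  -- periodicity of derivatives
  have hqper : ∀ x, q (x + γ) = q x := by
    intro x
    rw [hqdef, ← deriv_comp_add_const, funext hp₂per]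
  have hrper : ∀ x, r (x + γ) = r x := by
    intro x
    rw [hrdef, ← deriv_comp_add_const, funext hqper]
  -- derivative of the exponential
  have he : ∀ x : ℝ, HasDerivAt (fun y : ℝ => Complex.exp (I * k₀ * y))
      (I * k₀ * Complex.exp (I * k₀ * x)) x := by
    intro x
    have h1 : HasDerivAt (fun z : ℂ => Complex.exp (I * k₀ * z))
        (I * k₀ * Complex.exp (I * k₀ * x)) (x : ℂ) := by
      simpa [mul_comm] using ((hasDerivAt_id (x : ℂ)).const_mul (I * k₀)).cexp
    exact h1.comp_ofReal
  have hid : ∀ x : ℝ, HasDerivAt (fun y : ℝ => (y : ℂ)) 1 x :=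
    fun x => (hasDerivAt_id (x : ℂ)).comp_ofReal
  -- first derivative of ψ
  have hψ1 : ∀ x : ℝ, HasDerivAt (fun y : ℝ => Complex.exp (I * k₀ * y) * (y * p₂ y))
      (I * k₀ * Complex.exp (I * k₀ * x) * ((x : ℂ) * p₂ x)
        + Complex.exp (I * k₀ * x) * (1 * p₂ x + (x : ℂ) * q x)) x := by
    intro x
    exact (he x).mul ((hid x).mul (hq x))
  have hd1 : deriv (fun y : ℝ => Complex.exp (I * k₀ * y) * (y * p₂ y))
      = fun x : ℝ => I * k₀ * Complex.exp (I * k₀ * x) * ((x : ℂ) * p₂ x)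
        + Complex.exp (I * k₀ * x) * (1 * p₂ x + (x : ℂ) * q x) :=
    funext fun x => (hψ1 x).deriv
  -- second derivative of ψ
  have hψ2 : ∀ x : ℝ,
      deriv (deriv (fun y : ℝ => Complex.exp (I * k₀ * y) * (y * p₂ y))) x
      = I * k₀ * (I * k₀ * Complex.exp (I * k₀ * x)) * ((x : ℂ) * p₂ x)
        + I * k₀ * Complex.exp (I * k₀ * x) * (1 * p₂ x + (x : ℂ) * q x)
        + (I * k₀ * Complex.exp (I * k₀ * x) * (1 * p₂ x + (x : ℂ) * q x)
          + Complex.exp (I * k₀ * x) * ((1 * q x + (x : ℂ) * r x) + q x)) := by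
    intro x
    rw [hd1]
    have t1 : HasDerivAt (fun y : ℝ => I * k₀ * Complex.exp (I * k₀ * y) * ((y : ℂ) * p₂ y))
        (I * k₀ * (I * k₀ * Complex.exp (I * k₀ * x)) * ((x : ℂ) * p₂ x)
          + I * k₀ * Complex.exp (I * k₀ * x) * (1 * p₂ x + (x : ℂ) * q x)) x :=
      (((he x).const_mul (I * k₀))).mul ((hid x).mul (hq x))
    have t2 : HasDerivAt (fun y : ℝ => Complex.exp (I * k₀ * y) * (1 * p₂ y + (y : ℂ) * q y))
        (I * k₀ * Complex.exp (I * k₀ * x) * (1 * p₂ x + (x : ℂ) * q x)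
          + Complex.exp (I * k₀ * x) * ((1 * q x + (x : ℂ) * r x) + q x)) x := by
      have inner : HasDerivAt (fun y : ℝ => 1 * p₂ y + (y : ℂ) * q y)
          ((1 * q x + (x : ℂ) * r x) + q x) x := by
        have := ((hq x).const_mul (1 : ℂ)).add ((hid x).mul (hr x))
        convert this using 1
        · rfl
        · rfl
        ring
      exact (he x).mul inner
    exact (t1.add t2).deriv
  -- the key pointwise identity: x*G x + H x = 0
  set G : ℝ → ℂ := fun x => -((I * k₀) ^ 2 * p₂ x + 2 * I * k₀ * q x + r x)
      + (V x - lam) * p₂ x with hGdef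
  set H : ℝ → ℂ := fun x => -(2 * I * k₀ * p₂ x + 2 * q x) with hHdef
  have hmain : ∀ x : ℝ, (x : ℂ) * G x + H x = 0 := by
    intro x
    have h1 := heq x
    rw [hψ2 x] at h1
    have h0 : Complex.exp (I * k₀ * x) * ((x : ℂ) * G x + H x) = 0 := by
      simp only [hGdef, hHdef]
      linear_combination h1
    exact (mul_eq_zero.mp h0).resolve_left (Complex.exp_ne_zero _)
  have hγC : (γ : ℂ) ≠ 0 := Complex.ofReal_ne_zero.mpr hγ.ne'
  have hG : ∀ x : ℝ, G x = 0 := by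
    intro x
    have h1 := hmain x
    have h2 := hmain (x + γ)
    have hGp : G (x + γ) = G x := by
      simp only [hGdef]
      rw [hVper, hp₂per, hqper, hrper]
    have hHp : H (x + γ) = H x := by
      simp only [hHdef]
      rw [hp₂per, hqper]
    rw [hGp, hHp] at h2
    push_cast at h2
    have h3 : (γ : ℂ) * G x = 0 := by linear_combination h2 - h1
    exact (mul_eq_zero.mp h3).resolve_left hγC
  have hH : ∀ x : ℝ, H x = 0 := by
    intro x
    have h1 := hmain x
    rw [hG x] at h1
    simpa using h1
  have hqeq : ∀ x : ℝ, q x = -(I * k₀) * p₂ x := by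
    intro x
    have h1 := hH x
    simp only [hHdef] at h1
    linear_combination -h1 / 2
  -- p₂ x = p₂ 0 * exp(-ik₀x)
  have hconst : ∀ x : ℝ, Complex.exp (I * k₀ * x) * p₂ x = p₂ 0 := by
    have hderiv : ∀ x : ℝ, HasDerivAt (fun y : ℝ => Complex.exp (I * k₀ * y) * p₂ y) 0 x := by
      intro x
      have h1 := (he x).mul (hq x)
      rw [hqeq x] at h1
      convert h1 using 1
      · rfl
      · rfl
      ring
    have hcst := is_const_of_deriv_eq_zero (fun x => (hderiv x).differentiableAt)
      (fun x => (hderiv x).deriv)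
    intro x
    simpa using hcst x 0
  have hp0 : p₂ 0 ≠ 0 := by
    intro h0
    obtain ⟨x, hx⟩ := hp₂ne
    apply hx
    have h1 := hconst x
    rw [h0] at h1
    exact (mul_eq_zero.mp h1).resolve_left (Complex.exp_ne_zero _)
  have hpne : ∀ x : ℝ, p₂ x ≠ 0 := by
    intro x h
    apply hp0
    rw [← hconst x, h, mul_zero]
  -- r in terms of p₂
  have hr2 : ∀ x : ℝ, r x = -(I * k₀) * (-(I * k₀) * p₂ x) := by
    intro x
    have h1 : HasDerivAt q (-(I * k₀) * (-(I * k₀) * p₂ x)) x := by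
      have h0 := (hq x).const_mul (-(I * k₀))
      rw [hqeq x] at h0
      rw [funext hqeq]
      exact h0
    exact (hr x).unique h1
  constructor
  · intro x
    have h1 := hG x
    simp only [hGdef] at h1
    rw [hqeq x, hr2 x] at h1
    have h3 : (V x - lam) * p₂ x = 0 := by linear_combination h1
    have h4 := (mul_eq_zero.mp h3).resolve_right (hpne x)
    exact sub_eq_zero.mp h4
  · have hpγ : p₂ γ = p₂ 0 := by simpa using hp₂per 0
    have h1 := hconst γ
    rw [hpγ] at h1
    have heγ : Complex.exp (I * k₀ * γ) = 1 :=
      mul_right_cancel₀ hp0 (by rw [one_mul]; exact h1)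
    obtain ⟨n, hn⟩ := Complex.exp_eq_one_iff.mp heγ
    refine ⟨n, ?_⟩
    have h2 : (I : ℂ) * (k₀ * γ) = I * ((n : ℂ) * (2 * Real.pi)) := by linear_combination hn
    have h3 := mul_left_cancel₀ Complex.I_ne_zero h2
    have hπ : ((Real.pi : ℝ) : ℂ) ≠ 0 := Complex.ofReal_ne_zero.mpr Real.pi_ne_zero
    field_simp
    linear_combination h3
end

section
/- Let γ > 0, let V : ℝ → ℝ be continuous and γ-periodic, and let λ ∈ ℝ. Suppose k ∈ ℂ and p : ℝ → ℂ is twice continuously differentiable, γ-periodic, and not identically zero, such that ψ(x) := e^{ikx}p(x) satisfies −ψ''(x) + V(x)ψ(x) = λψ(x) for all x ∈ ℝ, ψ is bounded on ℝ, and ψ(x₀) = 0 for some x₀ ∈ ℝ. Then exp(2ikγ) = 1 (so k is real and kγ ∈ πℤ), and there exist a constant c ∈ ℂ and a twice continuously differentiable real-valued function f : ℝ → ℝ such that ψ(x) = c·f(x) for all x ∈ ℝ and either f(x + γ) = f(x) for all x ∈ ℝ or f(x + γ) = −f(x) for all x ∈ ℝ. -/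
open Complex Set


lemma ode_zero_s12 (W : ℝ → ℝ) (C : ℝ) (hWb : ∀ x, |W x| ≤ C)
    (g : ℝ → ℂ) (hg : ContDiff ℝ 2 g)
    (hode : ∀ x, deriv (deriv g) x = (W x : ℂ) * g x)
    (x₀ : ℝ) (h0 : g x₀ = 0) (h1 : deriv g x₀ = 0) : ∀ x, g x = 0 := by
  have hgd : Differentiable ℝ g := hg.differentiable (by norm_num)
  have hg' : ContDiff ℝ 1 (deriv g) := (contDiff_succ_iff_deriv.mp (show ContDiff ℝ ((1:ℕ)+1) g by exact_mod_cast hg)).2.2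
  have hgd' : Differentiable ℝ (deriv g) := hg'.differentiable (by norm_num)
  set K : NNReal := (max 1 C).toNNReal with hK
  set v : ℝ → ℂ × ℂ → ℂ × ℂ := fun t y => (y.2, (W t : ℂ) * y.1) with hv
  have hlip : ∀ t, LipschitzWith K (v t) := by
    intro t
    apply LipschitzWith.of_dist_le_mul
    intro y z
    rw [Prod.dist_eq, Prod.dist_eq]
    have hC0 : 0 ≤ C := le_trans (abs_nonneg _) (hWb t)
    have hKv : (K : ℝ) = max 1 C := Real.coe_toNNReal _ (le_trans zero_le_one (le_max_left _ _))
    rw [hKv]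
    simp only [hv]
    have e1 : dist ((W t : ℂ) * y.1) ((W t : ℂ) * z.1) = |W t| * dist y.1 z.1 := by
      rw [dist_eq_norm, dist_eq_norm, ← mul_sub, norm_mul, Complex.norm_real, Real.norm_eq_abs]
    rw [e1]
    have d1 : (0:ℝ) ≤ dist y.1 z.1 := dist_nonneg
    have d2 : (0:ℝ) ≤ dist y.2 z.2 := dist_nonneg
    have := hWb t
    apply max_le
    · calc dist y.2 z.2 ≤ max (dist y.1 z.1) (dist y.2 z.2) := le_max_right _ _
        _ ≤ max 1 C * max (dist y.1 z.1) (dist y.2 z.2) := by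
            nlinarith [le_max_left (dist y.1 z.1) (dist y.2 z.2), le_max_left (1:ℝ) C,
              le_max_right (dist y.1 z.1) (dist y.2 z.2)]
    · calc |W t| * dist y.1 z.1 ≤ C * dist y.1 z.1 := by nlinarith
        _ ≤ max 1 C * max (dist y.1 z.1) (dist y.2 z.2) := by
            nlinarith [le_max_right (1:ℝ) C, le_max_left (dist y.1 z.1) (dist y.2 z.2), d2]
  set F : ℝ → ℂ × ℂ := fun t => (g t, deriv g t) with hF
  have hF' : ∀ t, HasDerivAt F (v t (F t)) t := by
    intro t
    exact ((hgd t).hasDerivAt.prodMk (hgd' t).hasDerivAt).congr_deriv (by simp [hv, hF, hode t])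
  intro x
  have hmem : x₀ ∈ Ioo (min x x₀ - 1) (max x x₀ + 1) := by
    constructor
    · have := min_le_right x x₀; linarith
    · have := le_max_right x x₀; linarith
  have key : EqOn F (fun _ => (0 : ℂ × ℂ)) (Icc (min x x₀ - 1) (max x x₀ + 1)) := by
    apply ODE_solution_unique_of_mem_Icc (s := fun _ => univ) (fun t _ => (hlip t).lipschitzOnWith)
      hmem
      (Continuous.continuousOn (hgd.continuous.prodMk hgd'.continuous)) (fun t _ => hF' t) (fun _ _ => trivial)
      continuousOn_const (fun t _ => (hasDerivAt_const t (0 : ℂ × ℂ)).congr_deriv (by simp [hv, Prod.ext_iff]))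
      (fun _ _ => trivial)
      (by simp [hF, h0, h1, Prod.ext_iff])
  have hx : x ∈ Icc (min x x₀ - 1) (max x x₀ + 1) := by
    constructor
    · have := min_le_left x x₀; linarith
    · have := le_max_left x x₀; linarith
  have hkx : F x = 0 := key hx
  have : (g x, deriv g x) = ((0:ℂ), (0:ℂ)) := hkx
  exact (Prod.ext_iff.mp this).1

/-- a bounded Bloch solution of the 1-D Schrödinger equation with
real periodic potential that has a zero satisfies `exp(2ikγ) = 1` and equals a
complex constant times a real-valued `γ`-periodic or `γ`-anti-periodic function. -/
theorem bounded_bloch_solution_with_zero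
    (γ : ℝ) (hγ : 0 < γ) (V : ℝ → ℝ)
    (hVcont : Continuous V) (hVper : ∀ x : ℝ, V (x + γ) = V x)
    (lam : ℝ) (k : ℂ) (p : ℝ → ℂ) (hp : ContDiff ℝ 2 p)
    (hpper : ∀ x : ℝ, p (x + γ) = p x) (hpne : ∃ x : ℝ, p x ≠ 0)
    (heq : ∀ x : ℝ,
      -(deriv (deriv (fun y : ℝ => Complex.exp (Complex.I * k * y) * p y)) x)
      + (V x : ℂ) * (Complex.exp (Complex.I * k * x) * p x)
      = (lam : ℂ) * (Complex.exp (Complex.I * k * x) * p x))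
    (hbdd : ∃ M : ℝ, ∀ x : ℝ, ‖Complex.exp (Complex.I * k * x) * p x‖ ≤ M)
    (hzero : ∃ x₀ : ℝ, Complex.exp (Complex.I * k * x₀) * p x₀ = 0) :
    Complex.exp (2 * Complex.I * k * (γ : ℂ)) = 1 ∧
    ∃ (c : ℂ) (f : ℝ → ℝ), ContDiff ℝ 2 f ∧
      (∀ x : ℝ, Complex.exp (Complex.I * k * x) * p x = c * (f x : ℂ)) ∧
      ((∀ x : ℝ, f (x + γ) = f x) ∨ (∀ x : ℝ, f (x + γ) = -f x)) := by
  obtain ⟨x₀, hzero⟩ := hzero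
  obtain ⟨x₁, hx₁⟩ := hpne
  obtain ⟨M, hM⟩ := hbdd
  set ψ : ℝ → ℂ := fun y : ℝ => Complex.exp (Complex.I * k * y) * p y with hψdef
  have hψ : ContDiff ℝ 2 ψ := by
    apply ContDiff.mul _ hp
    have h1 : ContDiff ℝ 2 (fun x : ℝ => Complex.I * k * (x:ℂ)) :=
      contDiff_const.mul (Complex.ofRealCLM.contDiff.of_le le_top)
    exact ((Complex.contDiff_exp (𝕜 := ℂ)).restrict_scalars ℝ |>.of_le le_top).comp h1
  have hψd : Differentiable ℝ ψ := hψ.differentiable (by norm_num)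
  have hψd' : Differentiable ℝ (deriv ψ) :=
    ((contDiff_succ_iff_deriv.mp (show ContDiff ℝ ((1:ℕ)+1) ψ by exact_mod_cast hψ)).2.2).differentiable (by norm_num)
  set W : ℝ → ℝ := fun x => V x - lam with hWdef
  have hψ'' : ∀ x, deriv (deriv ψ) x = (W x : ℂ) * ψ x := by
    intro x
    have h := heq x
    simp only [hψdef, hWdef]
    push_cast
    linear_combination -h
  -- bound on W
  have hWper : Function.Periodic W γ := fun x => by simp [hWdef, hVper x]
  have hWb : ∃ C, ∀ x, |W x| ≤ C := by
    have hb := hWper.isBounded_of_continuous (ne_of_gt hγ) (by fun_prop)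
    rw [isBounded_iff_forall_norm_le] at hb
    obtain ⟨C, hC⟩ := hb
    exact ⟨C, fun x => by simpa [Real.norm_eq_abs] using hC _ ⟨x, rfl⟩⟩
  obtain ⟨C, hC⟩ := hWb
  have hψx₁ : ψ x₁ ≠ 0 := mul_ne_zero (Complex.exp_ne_zero _) hx₁
  -- derivative at x₀ nonzero
  have hd0 : deriv ψ x₀ ≠ 0 := by
    intro h
    exact hψx₁ (ode_zero_s12 W C hC ψ hψ hψ'' x₀ hzero h x₁)
  -- conjugate solution
  set φ : ℝ → ℂ := fun x => (starRingEnd ℂ) (ψ x) with hφdef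
  have hφ : ContDiff ℝ 2 φ := Complex.conjCLE.contDiff.comp hψ
  have hφd : ∀ x, deriv φ x = (starRingEnd ℂ) (deriv ψ x) := fun x =>
    ((hψd x).hasDerivAt.star).deriv
  have hφd2 : ∀ x, deriv (deriv φ) x = (starRingEnd ℂ) (deriv (deriv ψ) x) := by
    intro x
    have : deriv φ = fun x => (starRingEnd ℂ) (deriv ψ x) := funext hφd
    rw [this]
    exact ((hψd' x).hasDerivAt.star).deriv
  set c : ℂ := (starRingEnd ℂ) (deriv ψ x₀) / deriv ψ x₀ with hcdef
  have hcψ' : c * deriv ψ x₀ = (starRingEnd ℂ) (deriv ψ x₀) := div_mul_cancel₀ _ hd0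
  set g : ℝ → ℂ := fun x => φ x - c * ψ x with hgdef
  have hg : ContDiff ℝ 2 g := hφ.sub (contDiff_const.mul hψ)
  have hgd1 : ∀ x, deriv g x = deriv φ x - c * deriv ψ x := by
    intro x
    simp only [hgdef]
    rw [deriv_fun_sub ((hφ.differentiable (by norm_num)) x) ((hψd x).const_mul c),
      deriv_const_mul _ (hψd x)]
  have hφd' : Differentiable ℝ (deriv φ) := by
    have : deriv φ = fun x => (starRingEnd ℂ) (deriv ψ x) := funext hφd
    rw [this]
    exact fun x => ((hψd' x).hasDerivAt.star).differentiableAt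
  have hg'' : ∀ x, deriv (deriv g) x = (W x : ℂ) * g x := by
    intro x
    have h1 : deriv g = fun x => deriv φ x - c * deriv ψ x := funext hgd1
    rw [h1, deriv_fun_sub (hφd' x) ((hψd' x).const_mul c),
      deriv_const_mul _ (hψd' x), hφd2 x, hψ'' x]
    simp only [hgdef, hφdef, map_mul, Complex.conj_ofReal]
    ring
  have hz0 : ψ x₀ = 0 := hzero
  have hgx₀ : g x₀ = 0 := by simp [hgdef, hφdef, hz0]
  have hgdx₀ : deriv g x₀ = 0 := by rw [hgd1 x₀, hφd x₀, hcψ', sub_self]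
  have hconj : ∀ x, (starRingEnd ℂ) (ψ x) = c * ψ x := by
    intro x
    have := ode_zero_s12 W C hC g hg hg'' x₀ hgx₀ hgdx₀ x
    simpa [hgdef, hφdef, sub_eq_zero] using this
  -- |c| = 1
  have hc1 : (starRingEnd ℂ) c * c = 1 := by
    have h1 : ψ x₁ = (starRingEnd ℂ) c * c * ψ x₁ := by
      conv_lhs => rw [← Complex.conj_conj (ψ x₁), hconj x₁, map_mul, hconj x₁]
      ring
    exact mul_right_cancel₀ hψx₁ (by linear_combination -h1)
  have hc0 : c ≠ 0 := by
    intro h; rw [h] at hc1; simp at hc1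
  have habs : ‖c‖ = 1 := by
    have h2 : (Complex.normSq c : ℂ) = 1 := by rw [← Complex.mul_conj]; linear_combination hc1
    have h3 : Complex.normSq c = 1 := by exact_mod_cast h2
    have := Complex.sq_norm c
    nlinarith [norm_nonneg c]
  -- square root of c
  set α : ℂ := Complex.exp (Complex.log c / 2) with hαdef
  have hα0 : α ≠ 0 := Complex.exp_ne_zero _
  have hα2 : α * α = c := by
    rw [hαdef, ← Complex.exp_add]
    have : Complex.log c / 2 + Complex.log c / 2 = Complex.log c := by ring
    rw [this, Complex.exp_log hc0]
  have hαabs : ‖α‖ = 1 := by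
    rw [hαdef, Complex.norm_exp]
    have : (Complex.log c / 2).re = (Complex.log c).re / 2 := by simp [Complex.div_re]
    rw [this, Complex.log_re, habs, Real.log_one]
    norm_num
  have hαconj : (starRingEnd ℂ) α * α = 1 := by
    have := Complex.mul_conj α
    have h2 : Complex.normSq α = 1 := by
      have := Complex.sq_norm α
      nlinarith [norm_nonneg α]
    rw [mul_comm] at this
    rw [this, h2, Complex.ofReal_one]
  -- α ψ is real-valued
  have hreal : ∀ x, (starRingEnd ℂ) (α * ψ x) = α * ψ x := by
    intro x
    rw [map_mul, hconj x, ← hα2]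
    linear_combination (ψ x) * α * hαconj
  have hrealre : ∀ x, (((α * ψ x).re : ℝ) : ℂ) = α * ψ x := fun x =>
    Complex.conj_eq_iff_re.mp (hreal x)
  -- the real function
  set f : ℝ → ℝ := fun x => (α * ψ x).re with hfdef
  have hf : ContDiff ℝ 2 f := Complex.reCLM.contDiff.comp (contDiff_const.mul hψ)
  have hfψ : ∀ x, ψ x = (starRingEnd ℂ) α * (f x : ℂ) := by
    intro x
    rw [hfdef]
    simp only
    rw [hrealre x]
    linear_combination (-(ψ x)) * hαconj
  -- Floquet multiplier
  set μ : ℂ := Complex.exp (Complex.I * k * γ) with hμdef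
  have hψper : ∀ x : ℝ, ψ (x + γ) = μ * ψ x := by
    intro x
    show Complex.exp (Complex.I * k * ((x + γ : ℝ) : ℂ)) * p (x + γ) = _
    rw [hpper x]
    rw [Complex.ofReal_add, mul_add, Complex.exp_add]
    show _ = Complex.exp (Complex.I * k * γ) * (Complex.exp (Complex.I * k * x) * p x)
    ring
  -- μ is real
  have hμ0 : μ ≠ 0 := Complex.exp_ne_zero _
  have hb1 : α * ψ x₁ ≠ 0 := mul_ne_zero hα0 hψx₁
  obtain ⟨r, hr⟩ : ∃ r : ℝ, μ = (r : ℂ) := by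
    refine ⟨(α * ψ (x₁ + γ)).re / (α * ψ x₁).re, ?_⟩
    have hb2 : (((α * ψ x₁).re : ℝ) : ℂ) ≠ 0 := by rw [hrealre]; exact hb1
    rw [Complex.ofReal_div, hrealre, hrealre]
    rw [hψper x₁]
    field_simp
  -- |μ| = 1 from boundedness
  have hMx : ∀ x, ‖ψ x‖ ≤ M := hM
  have hψ1pos : 0 < ‖ψ x₁‖ := norm_pos_iff.mpr hψx₁
  have hMpos : 0 < M := lt_of_lt_of_le hψ1pos (hMx x₁)
  have hiter : ∀ (n : ℕ) (x : ℝ), ψ (x + n * γ) = μ ^ n * ψ x := by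
    intro n
    induction n with
    | zero => intro x; simp
    | succ n ih =>
      intro x
      have : x + ((n : ℝ) + 1) * γ = (x + n * γ) + γ := by ring
      push_cast
      rw [this, hψper (x + n * γ), ih x]
      ring
  have hnorm1 : ‖μ‖ = 1 := by
    rcases lt_trichotomy ‖μ‖ 1 with h | h | h
    · exfalso
      have hμpos : 0 < ‖μ‖ := norm_pos_iff.mpr hμ0
      obtain ⟨n, hn⟩ := exists_pow_lt_of_lt_one (div_pos hψ1pos hMpos) h
      have h1 : ψ x₁ = μ ^ n * ψ (x₁ - n * γ) := by
        have := hiter n (x₁ - n * γ)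
        rw [sub_add_cancel] at this
        exact this
      have h2 : ‖ψ x₁‖ ≤ ‖μ‖ ^ n * M := by
        rw [h1, norm_mul, norm_pow]
        exact mul_le_mul_of_nonneg_left (hMx _) (by positivity)
      have h3 : ‖μ‖ ^ n * M < (‖ψ x₁‖ / M) * M := by
        exact mul_lt_mul_of_pos_right hn hMpos
      rw [div_mul_cancel₀ _ (ne_of_gt hMpos)] at h3
      linarith
    · exact h
    · exfalso
      obtain ⟨n, hn⟩ := pow_unbounded_of_one_lt (M / ‖ψ x₁‖) h
      have h1 : ‖μ‖ ^ n * ‖ψ x₁‖ ≤ M := by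
        have := hMx (x₁ + n * γ)
        rw [hiter n x₁, norm_mul, norm_pow] at this
        exact this
      have h2 : (M / ‖ψ x₁‖) * ‖ψ x₁‖ < ‖μ‖ ^ n * ‖ψ x₁‖ :=
        mul_lt_mul_of_pos_right hn hψ1pos
      rw [div_mul_cancel₀ _ (ne_of_gt hψ1pos)] at h2
      linarith
  have hr1 : r = 1 ∨ r = -1 := by
    have : |r| = 1 := by
      have := hnorm1
      rw [hr, Complex.norm_real, Real.norm_eq_abs] at this
      exact this
    rcases abs_eq (by norm_num : (0:ℝ) ≤ 1) |>.mp this with h | h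
    · exact Or.inl h
    · exact Or.inr h
  have hμsq : μ * μ = 1 := by
    rw [hr, ← Complex.ofReal_mul]
    rcases hr1 with h | h <;> rw [h] <;> norm_num
  constructor
  · have : 2 * Complex.I * k * (γ : ℂ) = Complex.I * k * γ + Complex.I * k * γ := by ring
    rw [this, Complex.exp_add, ← hμdef, hμsq]
  · refine ⟨(starRingEnd ℂ) α, f, hf, fun x => hfψ x, ?_⟩
    have hfper : ∀ x, f (x + γ) = r * f x := by
      intro x
      rw [hfdef]
      simp only
      rw [hψper x, ← mul_assoc, mul_comm α μ, mul_assoc, hr, Complex.re_ofReal_mul]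
    rcases hr1 with h | h
    · left; intro x; rw [hfper x, h, one_mul]
    · right; intro x; rw [hfper x, h]; ring
end
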